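/- arXiv:2503.12696 — 14 statements merged into one kernel-verified Lean document; each statement's English description precedes it below -/
import Mathlib

section
/- Let (c_j)_{j≥2} be any sequence of real constants. For k ≥ 1 define ψ_k : ℝ → ℝ by ψ_k(x) = x^{2k−1}/(2k−1)! + Σ_{i=0}^{k−2} c_{k−i} x^{2i}/(2i)!. Set θ_0 = 1 and θ_k = Wr(ψ_1, …, ψ_k) for k ≥ 1. Then for every k ≥ 1 and every x ∈ ℝ: θ_{k+1}′(x) θ_{k−1}(x) − θ_{k+1}(x) θ_{k−1}′(x) = θ_k(x)². -/
set_option linter.unreachableTactic false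
set_option linter.unusedTactic false
set_option linter.unnecessarySeqFocus false

/-- The Wronskian of `n` functions of one real variable: the determinant of the
`n×n` matrix whose `(i,j)` entry is the `(i-1)`-st derivative of `f_j`. -/
noncomputable def wronskianN (n : ℕ) (f : Fin n → ℝ → ℝ) (x : ℝ) : ℝ :=
  (Matrix.of fun i j : Fin n => iteratedDeriv (i : ℕ) (f j) x).det

/-- The Adler–Moser generalized eigenfunctions
`ψ_k(x) = x^{2k-1}/(2k-1)! + ∑_{i=0}^{k-2} c_{k-i} x^{2i}/(2i)!`. -/
noncomputable def psiAM (c : ℕ → ℝ) (k : ℕ) (x : ℝ) : ℝ :=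
  x ^ (2 * k - 1) / Nat.factorial (2 * k - 1) +
    ∑ i ∈ Finset.range (k - 1), c (k - i) * x ^ (2 * i) / Nat.factorial (2 * i)

/-- `θ_k = Wr(ψ_1, …, ψ_k)` (with `θ_0 = 1`, the empty Wronskian). -/
noncomputable def thetaAM (c : ℕ → ℝ) (k : ℕ) (x : ℝ) : ℝ :=
  wronskianN k (fun j => psiAM c ((j : ℕ) + 1)) x



lemma psiAM_one (c : ℕ → ℝ) : psiAM c 1 = fun x => x := by
  funext x; simp [psiAM]

lemma contDiff_psiAM (c : ℕ → ℝ) (k : ℕ) : ContDiff ℝ (⊤ : ℕ∞) (psiAM c k) := by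
  unfold psiAM
  apply ContDiff.add
  · exact (contDiff_id.pow _).div_const _
  · apply ContDiff.sum
    intro i _
    exact ((contDiff_const.mul (contDiff_id.pow _)).div_const _)

lemma hasDerivAt_mono (n : ℕ) (x : ℝ) :
    HasDerivAt (fun x : ℝ => x ^ (n+1) / (Nat.factorial (n+1) : ℝ))
      (x ^ n / (Nat.factorial n : ℝ)) x := by
  have h := (hasDerivAt_pow (n+1) x).div_const (Nat.factorial (n+1) : ℝ)
  refine h.congr_deriv ?_
  rw [Nat.factorial_succ]
  have h1 : (Nat.factorial n : ℝ) ≠ 0 := Nat.cast_ne_zero.mpr (Nat.factorial_ne_zero n)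
  push_cast
  field_simp



lemma psi_deriv_deriv (c : ℕ → ℝ) (k : ℕ) (hk : 1 ≤ k) :
    deriv (deriv (psiAM c (k+1))) = psiAM c k := by
  obtain ⟨m, rfl⟩ : ∃ m, k = m + 1 := ⟨k-1, by omega⟩
  have hre : psiAM c (m+2) = fun x => x^(2*m+2+1)/(Nat.factorial (2*m+2+1)) +
      ((∑ i ∈ Finset.range m, c (m+1-i) * (x^(2*i+1+1)/(Nat.factorial (2*i+1+1)))) + c (m+2)) := by
    funext x
    have h1 : 2 * (m+2) - 1 = 2*m+2+1 := by omega
    have h2 : m + 2 - 1 = m + 1 := by omega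
    rw [psiAM, h1, h2, Finset.sum_range_succ']
    congr 1
    congr 1
    · apply Finset.sum_congr rfl
      intro i _
      have h3 : m + 2 - (i+1) = m+1-i := by omega
      have h4 : 2 * (i+1) = 2*i+1+1 := by omega
      rw [h3, h4, mul_div_assoc]
    · simp
  set g1 : ℝ → ℝ := fun x => x^(2*m+1+1)/(Nat.factorial (2*m+1+1)) +
      ∑ i ∈ Finset.range m, c (m+1-i) * (x^(2*i+0+1)/(Nat.factorial (2*i+0+1))) with hg1
  have h1 : ∀ x, HasDerivAt (psiAM c (m+2)) (g1 x) x := by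
    intro x
    rw [hre]
    have hh : 2*m+2+1 = (2*m+1+1)+1 := by omega
    rw [hh]
    refine HasDerivAt.add (hasDerivAt_mono _ x) ?_
    have hs : HasDerivAt (fun x : ℝ => ∑ i ∈ Finset.range m,
        c (m+1-i) * (x^(2*i+1+1)/(Nat.factorial (2*i+1+1))))
        (∑ i ∈ Finset.range m, c (m+1-i) * (x^(2*i+0+1)/(Nat.factorial (2*i+0+1)))) x := by
      apply HasDerivAt.fun_sum
      intro i _
      have h5 : 2*i+1+1 = (2*i+0+1)+1 := by omega
      rw [h5]
      exact (hasDerivAt_mono _ x).const_mul _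
    simpa using hs.add_const (c (m+2))
  have h2 : ∀ x, HasDerivAt g1 (psiAM c (m+1) x) x := by
    intro x
    have hre2 : psiAM c (m+1) x = x^(2*m+1)/(Nat.factorial (2*m+1)) +
        ∑ i ∈ Finset.range m, c (m+1-i) * (x^(2*i)/(Nat.factorial (2*i))) := by
      have h1' : 2 * (m+1) - 1 = 2*m+1 := by omega
      have h2' : m + 1 - 1 = m := by omega
      rw [psiAM, h1', h2']
      congr 1
      apply Finset.sum_congr rfl
      intro i _
      rw [mul_div_assoc]
    rw [hre2, hg1]
    have hh : 2*m+1+1 = (2*m+1)+1 := by omega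
    rw [hh]
    refine HasDerivAt.add (hasDerivAt_mono _ x) ?_
    apply HasDerivAt.fun_sum
    intro i _
    have h5 : 2*i+0+1 = (2*i)+1 := by omega
    rw [h5]
    exact (hasDerivAt_mono _ x).const_mul _
  have hd1 : deriv (psiAM c (m+2)) = g1 := funext fun x => (h1 x).deriv
  rw [hd1]
  exact funext fun x => (h2 x).deriv



lemma tent_shift (c : ℕ → ℝ) (j i : ℕ) (hj : 1 ≤ j) (x : ℝ) :
    iteratedDeriv (i+2) (psiAM c (j+1)) x = iteratedDeriv i (psiAM c j) x := by
  have h : i + 2 = (i+1)+1 := rfl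
  rw [h, iteratedDeriv_succ', iteratedDeriv_succ', psi_deriv_deriv c j hj]

lemma iteratedDeriv_zero_fun (i : ℕ) : iteratedDeriv i (fun _ : ℝ => (0:ℝ)) = fun _ => 0 := by
  induction i with
  | zero => rw [iteratedDeriv_zero]
  | succ n ih => rw [iteratedDeriv_succ, ih]; exact deriv_const' 0

lemma tent_one (c : ℕ → ℝ) (i : ℕ) (x : ℝ) :
    iteratedDeriv i (psiAM c 1) x =
      x * (if i = 0 then 1 else 0) + (if i = 1 then 1 else 0) := by
  rw [psiAM_one]
  match i with
  | 0 => simp [iteratedDeriv_zero]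
  | 1 => simp [iteratedDeriv_one]
  | (n+2) =>
    have h : n + 2 = (n+1)+1 := rfl
    rw [h, iteratedDeriv_succ', iteratedDeriv_succ', deriv_id'', deriv_const',
      iteratedDeriv_zero_fun]
    simp


open Finset in
lemma hasDerivAt_det (n : ℕ) (A : ℝ → Matrix (Fin n) (Fin n) ℝ) (A' : Matrix (Fin n) (Fin n) ℝ)
    (x : ℝ) (h : ∀ i j, HasDerivAt (fun y => A y i j) (A' i j) x) :
    HasDerivAt (fun y => (A y).det)
      (∑ i₀ : Fin n, ((A x).updateCol i₀ (fun r => A' r i₀)).det) x := by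
  have H : HasDerivAt (fun y => (A y).det)
      (∑ σ : Equiv.Perm (Fin n), ((Equiv.Perm.sign σ : ℤ) : ℝ) *
        ∑ i₀ : Fin n, (∏ j ∈ Finset.univ.erase i₀, A x (σ j) j) * A' (σ i₀) i₀) x := by
    simp_rw [Matrix.det_apply']
    apply HasDerivAt.fun_sum
    intro σ _
    have hp := HasDerivAt.fun_finset_prod (u := Finset.univ)
      (f := fun i (y : ℝ) => A y (σ i) i) (f' := fun i => A' (σ i) i) (x := x)
      (fun i _ => h (σ i) i)
    have hp' : HasDerivAt (fun y => ∏ i, A y (σ i) i)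
        (∑ i₀ : Fin n, (∏ j ∈ Finset.univ.erase i₀, A x (σ j) j) * A' (σ i₀) i₀) x := by
      simpa [smul_eq_mul] using hp
    exact hp'.const_mul _
  convert H using 1
  simp_rw [Finset.mul_sum]
  rw [Finset.sum_comm]
  apply Finset.sum_congr rfl
  intro i₀ _
  rw [Matrix.det_apply']
  apply Finset.sum_congr rfl
  intro σ _
  have hprod : (∏ i, ((A x).updateCol i₀ fun r => A' r i₀) (σ i) i)
      = A' (σ i₀) i₀ * ∏ j ∈ Finset.univ.erase i₀, A x (σ j) j := by
    rw [← Finset.mul_prod_erase Finset.univ _ (Finset.mem_univ i₀)]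
    congr 1
    · simp [Matrix.updateCol_apply]
    · apply Finset.prod_congr rfl
      intro j hj
      simp [Matrix.updateCol_apply, (Finset.mem_erase.mp hj).1]
  rw [hprod]
  ring







lemma theta_transpose (c : ℕ → ℝ) (n : ℕ) (x : ℝ) :
    thetaAM c n x =
      (Matrix.of fun j i : Fin n => iteratedDeriv (i : ℕ) (psiAM c ((j:ℕ)+1)) x).det := by
  rw [thetaAM, wronskianN, ← Matrix.det_transpose]
  rfl

lemma deriv_thetaAM (c : ℕ → ℝ) (n : ℕ) (x : ℝ) :
    deriv (thetaAM c (n+1)) x =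
      (Matrix.of fun j i : Fin (n+1) =>
        iteratedDeriv (if (i:ℕ) = n then n+1 else (i:ℕ)) (psiAM c ((j:ℕ)+1)) x).det := by
  have hder : ∀ (j i : Fin (n+1)), HasDerivAt
      (fun y => (Matrix.of fun j i : Fin (n+1) =>
        iteratedDeriv (i : ℕ) (psiAM c ((j:ℕ)+1)) y) j i)
      ((Matrix.of fun j i : Fin (n+1) =>
        iteratedDeriv ((i : ℕ)+1) (psiAM c ((j:ℕ)+1)) x) j i) x := by
    intro j i
    have hd : Differentiable ℝ (iteratedDeriv (i : ℕ) (psiAM c ((j:ℕ)+1))) :=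
      (contDiff_psiAM c ((j:ℕ)+1)).differentiable_iteratedDeriv _ (by exact_mod_cast ENat.natCast_lt_top _)
    have := (hd x).hasDerivAt
    rw [← iteratedDeriv_succ] at this
    exact this
  have H := hasDerivAt_det (n+1) _ _ x hder
  have Hd := H.deriv
  have hfun : thetaAM c (n+1) = fun y =>
      (Matrix.of fun j i : Fin (n+1) => iteratedDeriv (i : ℕ) (psiAM c ((j:ℕ)+1)) y).det := by
    funext y; exact theta_transpose c (n+1) y
  rw [hfun, Hd]
  rw [Finset.sum_eq_single (Fin.last n)]
  · congr 1
    ext r i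
    by_cases hi : i = Fin.last n
    · subst hi
      simp [Matrix.updateCol_apply, Fin.val_last]
    · have : (i:ℕ) ≠ n := fun h => hi (Fin.ext h)
      simp [Matrix.updateCol_apply, hi, this]
  · intro i₀ _ hne
    have hlt : (i₀:ℕ) < n := by
      rcases lt_or_eq_of_le (Nat.lt_succ_iff.mp i₀.isLt) with h | h
      · exact h
      · exact absurd (Fin.ext h) hne
    apply Matrix.det_zero_of_column_eq (i := i₀) (j := ⟨(i₀:ℕ)+1, by omega⟩)
    · intro h; rw [Fin.ext_iff] at h; simp at h
    · intro r
      simp [Matrix.updateCol_apply, Fin.ext_iff, Nat.succ_ne_self]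
  · simp


lemma succAbove_coe {m : ℕ} (p : Fin (m+1)) (i : Fin m) :
    ((p.succAbove i : Fin (m+1)) : ℕ) = if (i:ℕ) < (p:ℕ) then (i:ℕ) else (i:ℕ)+1 := by
  rw [Fin.succAbove]
  split_ifs with h1 h2 h3 <;>
    simp_all [Fin.lt_def, Fin.coe_castSucc, Fin.val_succ]

lemma det_strip (m q p : ℕ) (hq : q ≤ m) (hp : p ≤ m) (F : ℕ → ℕ → ℝ)
    (hF : ∀ j, j ≤ m → F q j = if j = p then 1 else 0) :
    (Matrix.of fun r l : Fin (m+1) => F r l).det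
      = (-1)^(q+p) * (Matrix.of fun r l : Fin m =>
          F (if (r:ℕ) < q then (r:ℕ) else (r:ℕ)+1)
            (if (l:ℕ) < p then (l:ℕ) else (l:ℕ)+1)).det := by
  rw [Matrix.det_succ_row _ ⟨q, Nat.lt_succ_of_le hq⟩]
  rw [Finset.sum_eq_single (⟨p, Nat.lt_succ_of_le hp⟩ : Fin (m+1))]
  · show (-1:ℝ)^((q:ℕ)+(p:ℕ)) * F q p * _ = _
    rw [hF p (by omega)]
    simp only [if_pos rfl, mul_one]
    have hmat : ((Matrix.of fun r l : Fin (m+1) => F r l).submatrix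
        (⟨q, Nat.lt_succ_of_le hq⟩ : Fin (m+1)).succAbove
        (⟨p, Nat.lt_succ_of_le hp⟩ : Fin (m+1)).succAbove)
        = (Matrix.of fun r l : Fin m =>
          F (if (r:ℕ) < q then (r:ℕ) else (r:ℕ)+1)
            (if (l:ℕ) < p then (l:ℕ) else (l:ℕ)+1)) := by
      ext r l
      simp only [Matrix.submatrix_apply, Matrix.of_apply, succAbove_coe]
    rw [hmat]
    norm_num
  · intro j _ hne
    have : (j : ℕ) ≠ p := by
      intro h; apply hne; exact Fin.ext h
    show (-1:ℝ)^((q:ℕ)+(j:ℕ)) * F q j * _ = 0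
    rw [hF (j:ℕ) (by omega), if_neg this]
    ring
  · simp

open Matrix in
lemma cramer_dep (n : ℕ) (b : Fin (n+1) → Fin n → ℝ) (i : Fin n) :
    ∑ j : Fin (n+1), (-1:ℝ)^(j:ℕ) *
      (Matrix.of fun r l : Fin n => b (j.succAbove r) l).det * b j i = 0 := by
  set C : Matrix (Fin (n+1)) (Fin (n+1)) ℝ :=
    Matrix.of fun s j => Fin.cases (b j i) (fun s' => b j s') s with hC
  have h0 : C.det = 0 := by
    apply Matrix.det_zero_of_row_eq (i := (0 : Fin (n+1))) (j := i.succ)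
    · exact (Fin.succ_ne_zero i).symm
    · funext j
      simp [hC]
  rw [Matrix.det_succ_row_zero] at h0
  rw [← h0]
  apply Finset.sum_congr rfl
  intro j _
  have hsub : C.submatrix Fin.succ j.succAbove
      = (Matrix.of fun r l : Fin n => b (j.succAbove r) l).transpose := by
    ext r l
    simp [hC, Matrix.transpose_apply]
  rw [hsub, Matrix.det_transpose]
  have hC0 : C 0 j = b j i := by simp [hC]
  rw [hC0]
  ring

lemma sum_mul_det_updateRow (n m : ℕ) (M : Matrix (Fin n) (Fin n) ℝ) (r : Fin n)
    (v : Fin m → Fin n → ℝ) (a : Fin m → ℝ)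
    (h : ∀ i : Fin n, ∑ j, a j * v j i = 0) :
    ∑ j, a j * (M.updateRow r (v j)).det = 0 := by
  let φ : (Fin n → ℝ) →ₗ[ℝ] ℝ :=
    { toFun := fun w => (M.updateRow r w).det
      map_add' := fun u w => Matrix.det_updateRow_add M r u w
      map_smul' := fun s u => by simp [Matrix.det_updateRow_smul M r s u] }
  have h1 : ∑ j, a j * (M.updateRow r (v j)).det = φ (∑ j, a j • v j) := by
    rw [map_sum]
    apply Finset.sum_congr rfl
    intro j _
    rw [_root_.map_smul]
    simp [φ, smul_eq_mul]
  rw [h1]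
  have h2 : (∑ j, a j • v j) = 0 := by
    funext i
    have := h i
    simpa [Finset.sum_apply] using this
  rw [h2, map_zero]

noncomputable def Tam (c : ℕ → ℝ) (x : ℝ) (j i : ℕ) : ℝ := iteratedDeriv i (psiAM c j) x

noncomputable def Bam (c : ℕ → ℝ) (x : ℝ) (k : ℕ) (j i : ℕ) : ℝ :=
  if j ≤ k then Tam c x (j+1) i
  else if j = k+1 then (if i = k then 1 else 0)
  else (if i = k+1 then 1 else 0)

noncomputable def Gam (c : ℕ → ℝ) (x : ℝ) (k : ℕ) (r l : ℕ) : ℝ :=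
  if r+2 ≤ k then Tam c x (r+2) l
  else if r = k-1 then (if l = 0 then 1 else 0)
  else if r = k then (if l = 1 then 1 else 0)
  else 0


lemma neg_one_pow_double (a : ℕ) : (-1:ℝ)^(a+a) = 1 :=
  Even.neg_one_pow ⟨a, rfl⟩

lemma evalDk1 (c : ℕ → ℝ) (x : ℝ) (k : ℕ) :
    (Matrix.of fun r l : Fin (k+2) =>
      Bam c x k (if (r:ℕ) < k+1 then (r:ℕ) else (r:ℕ)+1) (l:ℕ)).det
      = thetaAM c (k+1) x := by
  refine Eq.trans (det_strip (k+1) (k+1) (k+1) le_rfl le_rfl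
    (fun r l => Bam c x k (if r < k+1 then r else r+1) l) ?_) ?_
  · intro j hj
    rw [if_neg (by omega : ¬ k+1 < k+1)]
    simp only [Bam]
    rw [if_neg (by omega : ¬ k+1+1 ≤ k), if_neg (by omega : ¬ k+1+1 = k+1)]
  have hsgn : (-1:ℝ)^(k+1+(k+1)) = 1 := neg_one_pow_double (k+1)
  rw [hsgn, one_mul, theta_transpose]
  congr 1
  ext r l
  simp only [Matrix.of_apply]
  have hr := r.is_lt
  have hl := l.is_lt
  rw [if_pos (by omega : (r:ℕ) < k+1), if_pos (by omega : (r:ℕ) < k+1),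
    if_pos (by omega : (l:ℕ) < k+1)]
  simp only [Bam, Tam]
  rw [if_pos (by omega : (r:ℕ) ≤ k)]

lemma evalDk2 (c : ℕ → ℝ) (x : ℝ) (k : ℕ) :
    (Matrix.of fun r l : Fin (k+2) =>
      Bam c x k (if (r:ℕ) < k+2 then (r:ℕ) else (r:ℕ)+1) (l:ℕ)).det
      = -(deriv (thetaAM c (k+1)) x) := by
  refine Eq.trans (det_strip (k+1) (k+1) k le_rfl (by omega)
    (fun r l => Bam c x k (if r < k+2 then r else r+1) l) ?_) ?_
  · intro j hj
    rw [if_pos (by omega : k+1 < k+2)]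
    simp only [Bam]
    rw [if_neg (by omega : ¬ k+1 ≤ k)]
    simp
  have hsgn : (-1:ℝ)^(k+1+k) = -1 := by
    have : k+1+k = 2*k+1 := by omega
    rw [this, pow_succ]
    have h2 : (-1:ℝ)^(2*k) = 1 := Even.neg_one_pow ⟨k, by omega⟩
    rw [h2]; ring
  rw [hsgn, deriv_thetaAM, neg_one_mul, neg_inj]
  congr 1
  ext r l
  simp only [Matrix.of_apply]
  have hr := r.is_lt
  have hl := l.is_lt
  rw [if_pos (by omega : (r:ℕ) < k+1), if_pos (by omega : (r:ℕ) < k+2)]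
  simp only [Bam, Tam]
  rw [if_pos (by omega : (r:ℕ) ≤ k)]
  congr 1
  split_ifs <;> omega

lemma evalDk (c : ℕ → ℝ) (x : ℝ) (k : ℕ) :
    (Matrix.of fun r l : Fin (k+2) =>
      Bam c x k (if (r:ℕ) < k then (r:ℕ) else (r:ℕ)+1) (l:ℕ)).det
      = thetaAM c k x := by
  have step1 : (Matrix.of fun r l : Fin (k+2) =>
      Bam c x k (if (r:ℕ) < k then (r:ℕ) else (r:ℕ)+1) (l:ℕ)).det
      = (Matrix.of fun r l : Fin (k+1) =>
          Bam c x k (if (r:ℕ) < k then (r:ℕ) else (r:ℕ)+1) (l:ℕ)).det := by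
    refine Eq.trans (det_strip (k+1) (k+1) (k+1) le_rfl le_rfl
      (fun r l => Bam c x k (if r < k then r else r+1) l) ?_) ?_
    · intro j hj
      rw [if_neg (by omega : ¬ k+1 < k)]
      simp only [Bam]
      rw [if_neg (by omega : ¬ k+1+1 ≤ k), if_neg (by omega : ¬ k+1+1 = k+1)]
    rw [neg_one_pow_double (k+1), one_mul]
    congr 1
    ext r l
    simp only [Matrix.of_apply]
    have hr := r.is_lt
    have hl := l.is_lt
    rw [if_pos (by omega : (r:ℕ) < k+1), if_pos (by omega : (l:ℕ) < k+1)]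
  rw [step1]
  refine Eq.trans (det_strip k k k le_rfl le_rfl
    (fun r l => Bam c x k (if r < k then r else r+1) l) ?_) ?_
  · intro j hj
    rw [if_neg (by omega : ¬ k < k)]
    simp only [Bam]
    rw [if_neg (by omega : ¬ k+1 ≤ k)]
    simp
  rw [neg_one_pow_double k, one_mul, theta_transpose]
  congr 1
  ext r l
  simp only [Matrix.of_apply]
  have hr := r.is_lt
  have hl := l.is_lt
  rw [if_pos (by omega : (r:ℕ) < k), if_pos (by omega : (r:ℕ) < k),
    if_pos (by omega : (l:ℕ) < k)]
  simp only [Bam, Tam]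
  rw [if_pos (by omega : (r:ℕ) ≤ k)]


-- L(e_{k+1}) = θ_{k-1},  k = m+1
lemma evalLk2 (c : ℕ → ℝ) (x : ℝ) (m : ℕ) :
    (Matrix.of fun r l : Fin (m+3) =>
      if (r:ℕ) = m+2 then Bam c x (m+1) (m+3) (l:ℕ) else Gam c x (m+1) (r:ℕ) (l:ℕ)).det
      = thetaAM c m x := by
  have step1 : (Matrix.of fun r l : Fin (m+3) =>
      if (r:ℕ) = m+2 then Bam c x (m+1) (m+3) (l:ℕ) else Gam c x (m+1) (r:ℕ) (l:ℕ)).det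
      = (Matrix.of fun r l : Fin (m+2) => Gam c x (m+1) (r:ℕ) (l:ℕ)).det := by
    refine Eq.trans (det_strip (m+2) (m+2) (m+2) le_rfl le_rfl
      (fun r l => if r = m+2 then Bam c x (m+1) (m+3) l else Gam c x (m+1) r l) ?_) ?_
    · intro j hj
      simp only [Bam]
      split_ifs <;> first | rfl | (exfalso; omega) | (exfalso; assumption)
    rw [neg_one_pow_double (m+2), one_mul]
    congr 1
    ext r l
    have hr := r.is_lt
    have hl := l.is_lt
    simp only [Matrix.of_apply]
    split_ifs <;> first | rfl | (exfalso; omega) | (exfalso; assumption)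
  rw [step1]
  have step2 : (Matrix.of fun r l : Fin (m+2) => Gam c x (m+1) (r:ℕ) (l:ℕ)).det
      = (-1:ℝ)^(m+1+1) * (Matrix.of fun r l : Fin (m+1) =>
          Gam c x (m+1) (r:ℕ) (if (l:ℕ) < 1 then (l:ℕ) else (l:ℕ)+1)).det := by
    refine Eq.trans (det_strip (m+1) (m+1) 1 le_rfl (by omega)
      (fun r l => Gam c x (m+1) r l) ?_) ?_
    · intro j hj
      simp only [Gam]
      split_ifs <;> first | rfl | (exfalso; omega) | (exfalso; assumption)
    congr 2
    ext r l
    have hr := r.is_lt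
    have hl := l.is_lt
    simp only [Matrix.of_apply]
    split_ifs <;> first | rfl | (exfalso; omega) | (exfalso; assumption)
  rw [step2]
  have step3 : (Matrix.of fun r l : Fin (m+1) =>
        Gam c x (m+1) (r:ℕ) (if (l:ℕ) < 1 then (l:ℕ) else (l:ℕ)+1)).det
      = (-1:ℝ)^(m+0) * thetaAM c m x := by
    refine Eq.trans (det_strip m m 0 le_rfl (by omega)
      (fun r l => Gam c x (m+1) r (if l < 1 then l else l+1)) ?_) ?_
    · intro j hj
      simp only [Gam]
      split_ifs <;> first | rfl | (exfalso; omega) | (exfalso; assumption)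
    congr 1
    rw [theta_transpose]
    congr 1
    ext r l
    have hr := r.is_lt
    have hl := l.is_lt
    simp only [Matrix.of_apply, Gam, Tam]
    split_ifs <;> first | (exfalso; omega) | skip
    have hs := tent_shift c ((r:ℕ)+1) (l:ℕ) (by omega) x
    convert hs using 2 <;> omega
  rw [step3, ← mul_assoc, ← pow_add]
  have : (-1:ℝ)^(m+1+1+(m+0)) = 1 := by
    have h2 : m+1+1+(m+0) = (m+1)+(m+1) := by omega
    rw [h2]; exact neg_one_pow_double (m+1)
  rw [this, one_mul]

set_option maxHeartbeats 1600000 in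

-- L(e_k) = -θ_{k-1}' for k = m+2
lemma evalLk1 (c : ℕ → ℝ) (x : ℝ) (m : ℕ) :
    (Matrix.of fun r l : Fin (m+4) =>
      if (r:ℕ) = m+3 then Bam c x (m+2) (m+3) (l:ℕ) else Gam c x (m+2) (r:ℕ) (l:ℕ)).det
      = -(deriv (thetaAM c (m+1)) x) := by
  have step1 : (Matrix.of fun r l : Fin (m+4) =>
      if (r:ℕ) = m+3 then Bam c x (m+2) (m+3) (l:ℕ) else Gam c x (m+2) (r:ℕ) (l:ℕ)).det
      = (-1:ℝ)^(m+3+(m+2)) * (Matrix.of fun r l : Fin (m+3) =>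
          Gam c x (m+2) (r:ℕ) (if (l:ℕ) < m+2 then (l:ℕ) else (l:ℕ)+1)).det := by
    refine Eq.trans (det_strip (m+3) (m+3) (m+2) le_rfl (by omega)
      (fun r l => if r = m+3 then Bam c x (m+2) (m+3) l else Gam c x (m+2) r l) ?_) ?_
    · intro j hj
      simp only [Bam]
      split_ifs <;> first | rfl | (exfalso; omega) | (exfalso; assumption)
    congr 2
    ext r l
    have hr := r.is_lt
    have hl := l.is_lt
    simp only [Matrix.of_apply]
    split_ifs <;> first | rfl | (exfalso; omega) | (exfalso; assumption)
  rw [step1]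
  have step2 : (Matrix.of fun r l : Fin (m+3) =>
        Gam c x (m+2) (r:ℕ) (if (l:ℕ) < m+2 then (l:ℕ) else (l:ℕ)+1)).det
      = (-1:ℝ)^(m+2+1) * (Matrix.of fun r l : Fin (m+2) =>
          Gam c x (m+2) (r:ℕ)
            (if (if (l:ℕ) < 1 then (l:ℕ) else (l:ℕ)+1) < m+2
              then (if (l:ℕ) < 1 then (l:ℕ) else (l:ℕ)+1)
              else (if (l:ℕ) < 1 then (l:ℕ) else (l:ℕ)+1)+1)).det := by
    refine Eq.trans (det_strip (m+2) (m+2) 1 le_rfl (by omega)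
      (fun r l => Gam c x (m+2) r (if l < m+2 then l else l+1)) ?_) ?_
    · intro j hj
      simp only [Gam]
      split_ifs <;> first | rfl | (exfalso; omega) | (exfalso; assumption)
    congr 2
    ext r l
    have hr := r.is_lt
    have hl := l.is_lt
    simp only [Matrix.of_apply]
    split_ifs <;> first | rfl | (exfalso; omega) | (exfalso; assumption)
  rw [step2]
  have step3 : (Matrix.of fun r l : Fin (m+2) =>
        Gam c x (m+2) (r:ℕ)
          (if (if (l:ℕ) < 1 then (l:ℕ) else (l:ℕ)+1) < m+2
            then (if (l:ℕ) < 1 then (l:ℕ) else (l:ℕ)+1)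
            else (if (l:ℕ) < 1 then (l:ℕ) else (l:ℕ)+1)+1)).det
      = (-1:ℝ)^(m+1+0) * (deriv (thetaAM c (m+1)) x) := by
    refine Eq.trans (det_strip (m+1) (m+1) 0 le_rfl (by omega)
      (fun r l => Gam c x (m+2) r
        (if (if l < 1 then l else l+1) < m+2
          then (if l < 1 then l else l+1)
          else (if l < 1 then l else l+1)+1)) ?_) ?_
    · intro j hj
      simp only [Gam]
      split_ifs <;> first | rfl | (exfalso; omega) | (exfalso; assumption)
    congr 1
    rw [deriv_thetaAM]
    congr 1
    ext r l
    have hr := r.is_lt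
    have hl := l.is_lt
    simp only [Matrix.of_apply, Gam, Tam]
    split_ifs
    all_goals first
      | (exfalso; omega)
      | (exfalso; assumption)
      | (have hs := tent_shift c ((r:ℕ)+1) ((l:ℕ)) (by omega) x
         convert hs using 2 <;> omega)
      | (have hs := tent_shift c ((r:ℕ)+1) ((l:ℕ)+1) (by omega) x
         convert hs using 2 <;> omega)
  rw [step3, ← mul_assoc, ← pow_add, ← mul_assoc, ← pow_add]
  have hsgn : (-1:ℝ)^(m+3+(m+2)+(m+2+1)+(m+1+0)) = -1 := by
    have h2 : m+3+(m+2)+(m+2+1)+(m+1+0) = 2*(2*m+4)+1 := by omega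
    rw [h2, pow_succ, pow_mul]
    norm_num
  rw [hsgn]; ring


-- L(t_{k+1}) = θ_k for k = m+1
set_option maxHeartbeats 1600000 in
lemma evalLk (c : ℕ → ℝ) (x : ℝ) (m : ℕ) :
    (Matrix.of fun r l : Fin (m+3) =>
      if (r:ℕ) = m+2 then Bam c x (m+1) (m+1) (l:ℕ) else Gam c x (m+1) (r:ℕ) (l:ℕ)).det
      = thetaAM c (m+1) x := by
  have step1 : (Matrix.of fun r l : Fin (m+3) =>
      if (r:ℕ) = m+2 then Bam c x (m+1) (m+1) (l:ℕ) else Gam c x (m+1) (r:ℕ) (l:ℕ)).det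
      = (-1:ℝ)^(m+1+1) * (Matrix.of fun r l : Fin (m+2) =>
          if (r:ℕ) = m+1 then Bam c x (m+1) (m+1) (if (l:ℕ) < 1 then (l:ℕ) else (l:ℕ)+1)
          else Gam c x (m+1) (r:ℕ) (if (l:ℕ) < 1 then (l:ℕ) else (l:ℕ)+1)).det := by
    refine Eq.trans (det_strip (m+2) (m+1) 1 (by omega) (by omega)
      (fun r l => if r = m+2 then Bam c x (m+1) (m+1) l else Gam c x (m+1) r l) ?_) ?_
    · intro j hj
      simp only [Gam]
      split_ifs <;> first | rfl | (exfalso; omega) | (exfalso; assumption)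
    congr 2
    ext r l
    have hr := r.is_lt
    have hl := l.is_lt
    simp only [Matrix.of_apply]
    split_ifs <;> first | rfl | (exfalso; omega) | (exfalso; assumption)
  rw [step1]
  have step2 : (Matrix.of fun r l : Fin (m+2) =>
      if (r:ℕ) = m+1 then Bam c x (m+1) (m+1) (if (l:ℕ) < 1 then (l:ℕ) else (l:ℕ)+1)
      else Gam c x (m+1) (r:ℕ) (if (l:ℕ) < 1 then (l:ℕ) else (l:ℕ)+1)).det
      = (-1:ℝ)^(m+0) * thetaAM c (m+1) x := by
    refine Eq.trans (det_strip (m+1) m 0 (by omega) (by omega)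
      (fun r l => if r = m+1 then Bam c x (m+1) (m+1) (if l < 1 then l else l+1)
        else Gam c x (m+1) r (if l < 1 then l else l+1)) ?_) ?_
    · intro j hj
      simp only [Gam]
      split_ifs <;> first | rfl | (exfalso; omega) | (exfalso; assumption)
    congr 1
    rw [theta_transpose]
    congr 1
    ext r l
    have hr := r.is_lt
    have hl := l.is_lt
    simp only [Matrix.of_apply, Gam, Bam, Tam]
    split_ifs
    all_goals first
      | (exfalso; omega)
      | (exfalso; assumption)
      | (have hs := tent_shift c ((r:ℕ)+1) ((l:ℕ)) (by omega) x
         convert hs using 2 <;> omega)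
      | (have hrm : (r:ℕ) = m := by omega
         rw [hrm]
         have hs := tent_shift c (m+1) ((l:ℕ)) (by omega) x
         convert hs using 2 <;> omega)
  rw [step2, ← mul_assoc, ← pow_add]
  have hsgn : (-1:ℝ)^(m+1+1+(m+0)) = 1 := by
    have h2 : m+1+1+(m+0) = (m+1)+(m+1) := by omega
    rw [h2]; exact neg_one_pow_double (m+1)
  rw [hsgn, one_mul]


lemma thetaAM_zero (c : ℕ → ℝ) : thetaAM c 0 = fun _ => (1:ℝ) := by
  funext y
  rw [thetaAM, wronskianN]
  exact Matrix.det_fin_zero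

set_option maxHeartbeats 1600000 in
/-- The Burchnall–Chaundy relation
`θ_{k+1}' θ_{k-1} - θ_{k+1} θ_{k-1}' = θ_k²` for the Adler–Moser Wronskians. -/
theorem burchnall_chaundy_adler_moser (c : ℕ → ℝ) (k : ℕ) (hk : 1 ≤ k) (x : ℝ) :
    deriv (thetaAM c (k + 1)) x * thetaAM c (k - 1) x
      - thetaAM c (k + 1) x * deriv (thetaAM c (k - 1)) x
      = (thetaAM c k x) ^ 2 := by
  obtain ⟨m, rfl⟩ : ∃ m, k = m + 1 := ⟨k-1, by omega⟩
  have hmm : m + 1 - 1 = m := by omega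
  rw [hmm]
  set bv : Fin (m+4) → Fin (m+3) → ℝ :=
    fun j i => Bam c x (m+1) (j:ℕ) (i:ℕ) with hbv
  set Mb : Matrix (Fin (m+3)) (Fin (m+3)) ℝ :=
    Matrix.of fun r l => Gam c x (m+1) (r:ℕ) (l:ℕ) with hMb
  set L : Fin (m+4) → ℝ :=
    fun j => (Mb.updateRow (Fin.last (m+2)) (bv j)).det with hL
  set a : Fin (m+4) → ℝ :=
    fun j => (-1:ℝ)^(j:ℕ) * (Matrix.of fun r l : Fin (m+3) => bv (j.succAbove r) l).det with ha
  have key : ∑ j : Fin (m+4), a j * L j = 0 := by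
    apply sum_mul_det_updateRow (m+3) (m+4) Mb (Fin.last (m+2)) bv a
    intro i
    exact cramer_dep (m+3) bv i
  have updEq : ∀ j : Fin (m+4), Mb.updateRow (Fin.last (m+2)) (bv j)
      = Matrix.of (fun r l : Fin (m+3) =>
          if (r:ℕ) = m+2 then Bam c x (m+1) (j:ℕ) (l:ℕ) else Gam c x (m+1) (r:ℕ) (l:ℕ)) := by
    intro j
    ext r l
    rw [Matrix.updateRow_apply]
    by_cases h : r = Fin.last (m+2)
    · subst h
      simp [hbv, Fin.val_last]
    · have h2 : (r:ℕ) ≠ m+2 := by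
        intro hc
        exact h (Fin.ext (by simpa [Fin.val_last] using hc))
      simp [h, h2, hMb]
  have hvanish : ∀ j : Fin (m+4), (j:ℕ) ≤ m → L j = 0 := by
    intro j hj
    rcases Nat.eq_zero_or_pos (j:ℕ) with hj0 | hjpos
    · -- j = 0 : last row is x·(row e₀) + (row e₁)
      rw [hL]
      show (Mb.updateRow (Fin.last (m+2)) (bv j)).det = 0
      have hrow : bv j = x • (fun l => Mb (⟨m, by omega⟩ : Fin (m+3)) l)
          + (fun l => Mb (⟨m+1, by omega⟩ : Fin (m+3)) l) := by
        funext l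
        have hl := l.is_lt
        simp only [hbv, hMb, hj0, Pi.add_apply, Pi.smul_apply, Matrix.of_apply,
          smul_eq_mul, Bam, Gam, Tam, Nat.zero_add]
        rw [tent_one c (l:ℕ) x]
        split_ifs <;> first | (exfalso; omega) | (exfalso; assumption) | ring
      rw [hrow, Matrix.det_updateRow_add, Matrix.det_updateRow_smul]
      have hz1 : (Mb.updateRow (Fin.last (m+2)) (Mb (⟨m, by omega⟩ : Fin (m+3)))).det = 0 :=
        Matrix.det_updateRow_eq_zero (by
          intro hc
          rw [Fin.ext_iff] at hc
          simp only [Fin.val_last] at hc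
          omega)
      have hz2 : (Mb.updateRow (Fin.last (m+2)) (Mb (⟨m+1, by omega⟩ : Fin (m+3)))).det = 0 :=
        Matrix.det_updateRow_eq_zero (by
          intro hc
          rw [Fin.ext_iff] at hc
          simp only [Fin.val_last] at hc
          omega)
      have e1 : (fun l => Mb (⟨m, by omega⟩ : Fin (m+3)) l) = Mb (⟨m, by omega⟩ : Fin (m+3)) := rfl
      have e2 : (fun l => Mb (⟨m+1, by omega⟩ : Fin (m+3)) l)
          = Mb (⟨m+1, by omega⟩ : Fin (m+3)) := rfl
      rw [e1, e2, hz1, hz2]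
      ring
    · -- 1 ≤ j ≤ m : duplicate with row j-1
      rw [hL]
      apply Matrix.det_zero_of_row_eq (i := (⟨(j:ℕ)-1, by omega⟩ : Fin (m+3)))
        (j := Fin.last (m+2))
      · intro hc
        rw [Fin.ext_iff] at hc
        simp only [Fin.val_last] at hc
        omega
      · rw [Matrix.updateRow_ne (by
          intro hc
          rw [Fin.ext_iff] at hc
          simp only [Fin.val_last] at hc
          omega), Matrix.updateRow_self]
        funext l
        show Gam c x (m+1) ((j:ℕ)-1) (l:ℕ) = Bam c x (m+1) (j:ℕ) (l:ℕ)
        simp only [Gam, Bam]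
        rw [if_pos (by omega : (j:ℕ)-1+2 ≤ m+1), if_pos (by omega : (j:ℕ) ≤ m+1)]
        have he : (j:ℕ)-1+2 = (j:ℕ)+1 := by omega
        rw [he]
  -- evaluations of the three surviving terms
  have hA1 : a (⟨m+1, by omega⟩ : Fin (m+4)) = (-1:ℝ)^(m+1) * thetaAM c (m+1) x := by
    rw [ha]
    simp only
    congr 1
    rw [← evalDk c x (m+1)]
    congr 1
    ext r l
    simp only [hbv, Matrix.of_apply]
    rw [succAbove_coe]
  have hA2 : a (⟨m+2, by omega⟩ : Fin (m+4)) = (-1:ℝ)^(m+2) * thetaAM c (m+1+1) x := by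
    rw [ha]
    simp only
    congr 1
    rw [← evalDk1 c x (m+1)]
    congr 1
    ext r l
    simp only [hbv, Matrix.of_apply]
    rw [succAbove_coe]
  have hA3 : a (⟨m+3, by omega⟩ : Fin (m+4))
      = (-1:ℝ)^(m+3) * (-(deriv (thetaAM c (m+1+1)) x)) := by
    rw [ha]
    simp only
    congr 1
    rw [← evalDk2 c x (m+1)]
    congr 1
    ext r l
    simp only [hbv, Matrix.of_apply]
    rw [succAbove_coe]
  have hL1 : L (⟨m+1, by omega⟩ : Fin (m+4)) = thetaAM c (m+1) x := by
    rw [hL]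
    simp only
    rw [updEq]
    exact evalLk c x m
  have hL3 : L (⟨m+3, by omega⟩ : Fin (m+4)) = thetaAM c m x := by
    rw [hL]
    simp only
    rw [updEq]
    exact evalLk2 c x m
  have hL2 : L (⟨m+2, by omega⟩ : Fin (m+4)) = -(deriv (thetaAM c m) x) := by
    rw [hL]
    simp only
    rw [updEq]
    cases m with
    | zero =>
      have h0 : deriv (thetaAM c 0) x = 0 := by
        rw [thetaAM_zero]
        exact deriv_const x 1
      rw [h0, neg_zero]
      apply Matrix.det_zero_of_row_eq (i := (⟨1, by omega⟩ : Fin 3)) (j := (⟨2, by omega⟩ : Fin 3))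
      · decide
      · funext l
        simp only [Matrix.of_apply, Bam, Gam]
        split_ifs <;> first | rfl | (exfalso; omega) | (exfalso; assumption)
    | succ n => exact evalLk1 c x n
  -- split the sum
  have hsplit : ∑ j : Fin (m+4), a j * L j
      = a ⟨m+1, by omega⟩ * L ⟨m+1, by omega⟩
        + (a ⟨m+2, by omega⟩ * L ⟨m+2, by omega⟩
          + a ⟨m+3, by omega⟩ * L ⟨m+3, by omega⟩) := by
    rw [← Finset.sum_subset
      (Finset.subset_univ ({⟨m+1, by omega⟩, ⟨m+2, by omega⟩, ⟨m+3, by omega⟩}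
        : Finset (Fin (m+4))))
      (by
        intro j _ hj
        simp only [Finset.mem_insert, Finset.mem_singleton, Fin.ext_iff] at hj
        push_neg at hj
        have hjm : (j:ℕ) ≤ m := by
          have := j.is_lt
          omega
        rw [hvanish j hjm, mul_zero])]
    rw [Finset.sum_insert (by
        simp only [Finset.mem_insert, Finset.mem_singleton, Fin.ext_iff]
        push_neg
        omega),
      Finset.sum_insert (by
        simp only [Finset.mem_singleton, Fin.ext_iff]
        omega),
      Finset.sum_singleton]
  rw [hsplit, hA1, hA2, hA3, hL1, hL2, hL3] at key
  have hP1 : (-1:ℝ)^(m+2) = -((-1:ℝ)^(m+1)) := by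
    have : m+2 = (m+1)+1 := rfl
    rw [this, pow_succ]; ring
  have hP2 : (-1:ℝ)^(m+3) = (-1:ℝ)^(m+1) := by
    have : m+3 = (m+1)+1+1 := rfl
    rw [this, pow_succ, pow_succ]; ring
  rw [hP1, hP2] at key
  have h9 : (-1:ℝ)^(m+1) * ((thetaAM c (m+1) x)^2
      + thetaAM c (m+1+1) x * deriv (thetaAM c m) x
      - deriv (thetaAM c (m+1+1)) x * thetaAM c m x) = 0 := by
    linear_combination key
  have hne : (-1:ℝ)^(m+1) ≠ 0 := pow_ne_zero _ (by norm_num)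
  rcases mul_eq_zero.mp h9 with h | h
  · exact absurd h hne
  · linarith
end

section
/- For a real parameter c, define ψ_1(x;c) = x and, for j ≥ 2, ψ_j(x;c) = x^{2j−1}/(2j−1)! + c·x^{2j−4}/(2j−4)! (this is the specialization c_2 = c, c_i = 0 for i > 2). Let Θ_k(x;c) be the Wronskian in x of ψ_1(·;c), …, ψ_k(·;c). Then for every k ≥ 0, every t < 0 and every x ∈ ℝ: Θ_k(x; 4t) = (−3t)^{k(k+1)/6} · Θ_k(x(−3t)^{−1/3}; −4/3). -/
/-- `ψ_1(x;c) = x` and `ψ_j(x;c) = x^{2j-1}/(2j-1)! + c·x^{2j-4}/(2j-4)!` for `j ≥ 2`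
(the specialization `c_2 = c`, `c_i = 0` for `i > 2`). -/
noncomputable def psiScal (c : ℝ) (j : ℕ) (x : ℝ) : ℝ :=
  if j ≤ 1 then x
  else x ^ (2 * j - 1) / Nat.factorial (2 * j - 1)
    + c * x ^ (2 * j - 4) / Nat.factorial (2 * j - 4)

/-- `Θ_k(x;c) = Wr(ψ_1(·;c), …, ψ_k(·;c))`, with `Θ_0 = 1`. -/
noncomputable def ThetaScal (k : ℕ) (x c : ℝ) : ℝ :=
  wronskianN k (fun j => psiScal c ((j : ℕ) + 1)) x

lemma contDiff_psiScal (c : ℝ) (j : ℕ) : ContDiff ℝ (⊤ : ℕ∞) (psiScal c j) := by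
  unfold psiScal
  by_cases h : j ≤ 1
  · simp only [if_pos h]; fun_prop
  · simp only [if_neg h]
    exact ((ContDiff.pow contDiff_id _).div_const _).add ((contDiff_const.mul (ContDiff.pow contDiff_id _)).div_const _)

lemma iteratedDeriv_cmul (n : ℕ) (c : ℝ) {f : ℝ → ℝ} (hf : ContDiff ℝ (n : ℕ∞) f) (x : ℝ) :
    iteratedDeriv n (fun z => c * f z) x = c * iteratedDeriv n f x := by
  simp only [← iteratedDerivWithin_univ]
  exact iteratedDerivWithin_const_mul (Set.mem_univ x) uniqueDiffOn_univ c hf.contDiffWithinAt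

lemma sum_odd_eq_sq (n : ℕ) : ∑ i ∈ Finset.range n, (2 * (i + 1) - 1) = n * n := by
  induction n with
  | zero => simp
  | succ m ih => rw [Finset.sum_range_succ, ih]; ring_nf; omega

lemma psi_scale {t l : ℝ} (hl3 : l ^ (3 : ℕ) = -3 * t) (j : ℕ) (hj : 1 ≤ j) (y : ℝ) :
    psiScal (4 * t) j (l * y) = l ^ (2 * j - 1) * psiScal (-4 / 3) j y := by
  have ht : t = -(l ^ (3 : ℕ)) / 3 := by linarith
  by_cases h : j ≤ 1
  · have : j = 1 := le_antisymm h hj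
    subst this
    simp [psiScal]
  · obtain ⟨m, rfl⟩ : ∃ m, j = m + 2 := ⟨j - 2, by omega⟩
    have e1 : 2 * (m + 2) - 1 = 2 * m + 3 := by omega
    have e2 : 2 * (m + 2) - 4 = 2 * m := by omega
    simp only [psiScal, h, if_false, e1, e2, ht]
    have hA : (Nat.factorial (2 * m + 3) : ℝ) ≠ 0 := Nat.cast_ne_zero.mpr (Nat.factorial_ne_zero _)
    have hB : (Nat.factorial (2 * m) : ℝ) ≠ 0 := Nat.cast_ne_zero.mpr (Nat.factorial_ne_zero _)
    field_simp
    ring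

/-- Scaling property of the Burchnall–Chaundy polynomials:
`Θ_k(x; 4t) = (-3t)^{k(k+1)/6} Θ_k(x(-3t)^{-1/3}; -4/3)` for `t < 0`. -/
theorem burchnall_chaundy_scaling (k : ℕ) (t : ℝ) (ht : t < 0) (x : ℝ) :
    ThetaScal k x (4 * t)
      = (-3 * t) ^ (((k : ℝ) * ((k : ℝ) + 1)) / 6)
          * ThetaScal k (x * (-3 * t) ^ (-(1 : ℝ) / 3)) (-4 / 3) := by
  set p : ℝ := -3 * t with hp_def
  have hp : 0 < p := by simp only [hp_def]; linarith
  set l : ℝ := p ^ ((1 : ℝ) / 3) with hl_def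
  have hl : 0 < l := Real.rpow_pos_of_pos hp _
  have hl3 : l ^ (3 : ℕ) = p := by
    rw [hl_def, ← Real.rpow_natCast (p ^ ((1:ℝ)/3)) 3, ← Real.rpow_mul hp.le]
    norm_num
  have hinv : p ^ (-(1 : ℝ) / 3) = l⁻¹ := by
    rw [hl_def, ← Real.rpow_neg_one (p ^ ((1:ℝ)/3)), ← Real.rpow_mul hp.le]
    norm_num
  -- rewrite the matrix entries
  have key : ∀ (i j : Fin k),
      iteratedDeriv (i : ℕ) (psiScal (4 * t) ((j : ℕ) + 1)) x
        = l ^ (2 * ((j : ℕ) + 1) - 1) * ((l⁻¹) ^ (i : ℕ) *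
            iteratedDeriv (i : ℕ) (psiScal (-4 / 3) ((j : ℕ) + 1)) (x * l⁻¹)) := by
    intro i j
    have hfun : psiScal (4 * t) ((j : ℕ) + 1)
        = fun z => l ^ (2 * ((j : ℕ) + 1) - 1) * psiScal (-4 / 3) ((j : ℕ) + 1) (l⁻¹ * z) := by
      funext z
      have := psi_scale (t := t) (l := l) (by rw [hl3, hp_def]) ((j : ℕ) + 1)
        (Nat.le_add_left 1 _) (l⁻¹ * z)
      rwa [mul_inv_cancel_left₀ hl.ne' z] at this
    rw [hfun]
    have hcd : ContDiff ℝ ((i : ℕ) : ℕ∞)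
        (fun z => psiScal (-4 / 3) ((j : ℕ) + 1) (l⁻¹ * z)) := by
      exact ((contDiff_psiScal _ _).of_le (by exact_mod_cast le_top)).comp
        (contDiff_const.mul contDiff_id)
    rw [iteratedDeriv_cmul _ _ hcd]
    congr 1
    have := iteratedDeriv_comp_const_mul (n := (i : ℕ))
      ((contDiff_psiScal (-4/3) ((j : ℕ) + 1)).of_le (by exact_mod_cast le_top)) l⁻¹
    simp only [this]
    rw [mul_comm l⁻¹ x]
  unfold ThetaScal wronskianN
  have hmat : (Matrix.of fun i j : Fin k =>
      iteratedDeriv (i : ℕ) (psiScal (4 * t) ((j : ℕ) + 1)) x)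
      = Matrix.of fun i j : Fin k => l ^ (2 * ((j : ℕ) + 1) - 1) *
          ((l⁻¹) ^ (i : ℕ) *
            iteratedDeriv (i : ℕ) (psiScal (-4 / 3) ((j : ℕ) + 1)) (x * l⁻¹)) := by
    ext i j
    exact key i j
  rw [hmat]
  rw [show (Matrix.of fun i j : Fin k => l ^ (2 * ((j : ℕ) + 1) - 1) *
          ((l⁻¹) ^ (i : ℕ) *
            iteratedDeriv (i : ℕ) (psiScal (-4 / 3) ((j : ℕ) + 1)) (x * l⁻¹)))
      = Matrix.of fun i j : Fin k => l ^ (2 * ((j : ℕ) + 1) - 1) *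
          (Matrix.of fun i j : Fin k => (l⁻¹) ^ (i : ℕ) *
            iteratedDeriv (i : ℕ) (psiScal (-4 / 3) ((j : ℕ) + 1)) (x * l⁻¹)) i j from rfl]
  rw [Matrix.det_mul_row]
  rw [show (Matrix.of fun i j : Fin k => (l⁻¹) ^ (i : ℕ) *
            iteratedDeriv (i : ℕ) (psiScal (-4 / 3) ((j : ℕ) + 1)) (x * l⁻¹))
      = Matrix.of fun i j : Fin k => (l⁻¹) ^ (i : ℕ) *
          (Matrix.of fun i j : Fin k =>
            iteratedDeriv (i : ℕ) (psiScal (-4 / 3) ((j : ℕ) + 1)) (x * l⁻¹)) i j from rfl]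
  rw [Matrix.det_mul_column]
  rw [hinv]
  rw [← mul_assoc]
  congr 1
  -- product computation
  have hprod1 : (∏ j : Fin k, l ^ (2 * ((j : ℕ) + 1) - 1)) = l ^ (k * k) := by
    rw [Finset.prod_pow_eq_pow_sum]
    · congr 1
      rw [Fin.sum_univ_eq_sum_range (fun j => 2 * (j + 1) - 1)]
      exact sum_odd_eq_sq k
  have hprod2 : (∏ i : Fin k, (l⁻¹) ^ (i : ℕ)) = (l⁻¹) ^ (k * (k - 1) / 2) := by
    rw [Finset.prod_pow_eq_pow_sum]
    congr 1
    rw [Fin.sum_univ_eq_sum_range (fun i => i), Finset.sum_range_id]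
  rw [hprod1, hprod2, inv_pow, ← Real.rpow_natCast l (k * k),
    ← Real.rpow_natCast l (k * (k - 1) / 2), ← Real.rpow_neg hl.le,
    ← Real.rpow_add hl, hl_def, ← Real.rpow_mul hp.le]
  congr 1
  have h2 : ((k * (k - 1) / 2 : ℕ) : ℝ) = (k : ℝ) * ((k : ℝ) - 1) / 2 := by
    rcases Nat.eq_zero_or_pos k with h | h
    · subst h; simp
    · have hdvd : k * (k - 1) / 2 * 2 = k * (k - 1) := by
        apply Nat.div_mul_cancel
        rcases Nat.even_or_odd k with he | ho
        · exact (he.mul_right _).two_dvd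
        · exact ((Nat.Odd.sub_odd ho odd_one).mul_left _).two_dvd
      have h' : ((k * (k - 1) / 2 : ℕ) : ℝ) * 2 = (k : ℝ) * ((k : ℝ) - 1) := by
        have hc := congrArg (Nat.cast : ℕ → ℝ) hdvd
        push_cast [Nat.cast_sub h] at hc
        convert hc using 2
      linarith
  push_cast
  rw [h2]
  ring
end

section
/- Let α ∈ ℝ, let I ⊆ ℝ be open, and let q : I → ℝ be smooth with q″(z) = 2 q(z)³ + z q(z) + α for all z ∈ I. Define p(z) = −q′(z) − q(z)² − z/2 and ℓ = α + 1/2. Then at every z ∈ I with p(z) ≠ 0, p satisfies the Painlevé XXXIV equation with parameter ℓ: p″(z) = p′(z)²/(2p(z)) − 2 p(z)² − z p(z) − ℓ²/(2 p(z)). -/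
/-- From Painlevé II to Painlevé XXXIV via the Miura-type map:
if `q'' = 2q³ + zq + α` on an open set `I`, then `p = -q' - q² - z/2`
satisfies `p'' = (p')²/(2p) - 2p² - zp - ℓ²/(2p)` with `ℓ = α + 1/2`,
at every point of `I` where `p ≠ 0`. -/
theorem painleveII_to_painleveXXXIV (α : ℝ) (I : Set ℝ) (hI : IsOpen I)
    (q : ℝ → ℝ) (hsm : ContDiffOn ℝ (⊤ : ℕ∞) q I)
    (hPII : ∀ z ∈ I, deriv (deriv q) z = 2 * q z ^ 3 + z * q z + α)
    (p : ℝ → ℝ) (hp : ∀ z : ℝ, p z = -deriv q z - q z ^ 2 - z / 2) :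
    ∀ z ∈ I, p z ≠ 0 →
      deriv (deriv p) z
        = (deriv p z) ^ 2 / (2 * p z) - 2 * p z ^ 2 - z * p z
          - (α + 1 / 2) ^ 2 / (2 * p z) := by
  have hsm' : ContDiffOn ℝ (⊤ : ℕ∞) (deriv q) I := hsm.deriv_of_isOpen hI (by simp)
  have hdq : ∀ w ∈ I, HasDerivAt q (deriv q w) w := fun w hw =>
    ((hsm.differentiableOn (by simp) w hw).differentiableAt (hI.mem_nhds hw)).hasDerivAt
  have hdq' : ∀ w ∈ I, HasDerivAt (deriv q) (deriv (deriv q) w) w := fun w hw =>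
    ((hsm'.differentiableOn (by simp) w hw).differentiableAt (hI.mem_nhds hw)).hasDerivAt
  -- first derivative of p on I
  have hp1 : ∀ w ∈ I, HasDerivAt p
      (-deriv (deriv q) w - 2 * q w * deriv q w - 1 / 2) w := by
    intro w hw
    have h : HasDerivAt (fun x => -deriv q x - q x ^ 2 - x / 2)
        (-deriv (deriv q) w - 2 * q w * deriv q w - 1 / 2) w := by
      have : HasDerivAt (fun x => -deriv q x - q x ^ 2 - x / 2) _ w := (((hdq' w hw).neg.sub ((hdq w hw).pow 2)).sub
        ((hasDerivAt_id w).div_const 2))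
      convert this using 1
      ring
    exact h.congr_of_eventuallyEq (Filter.Eventually.of_forall fun x => hp x)
  have hderivp : ∀ w ∈ I, deriv p w =
      -(2 * q w ^ 3 + w * q w + α) - 2 * q w * deriv q w - 1 / 2 := by
    intro w hw
    rw [(hp1 w hw).deriv, hPII w hw]
  intro z hz hpz
  -- second derivative
  have heq : deriv p =ᶠ[nhds z]
      (fun w => -(2 * q w ^ 3 + w * q w + α) - 2 * q w * deriv q w - 1 / 2) := by
    filter_upwards [hI.mem_nhds hz] with w hw using hderivp w hw
  have hg : HasDerivAt (fun w => -(2 * q w ^ 3 + w * q w + α) - 2 * q w * deriv q w - 1 / 2)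
      (-(2 * (3 * q z ^ 2 * deriv q z) + (q z + z * deriv q z))
        - (2 * deriv q z * deriv q z + 2 * q z * deriv (deriv q) z)) z := by
    have h1 : HasDerivAt (fun w => 2 * q w ^ 3 + w * q w + α)
        (2 * (3 * q z ^ 2 * deriv q z) + (q z + z * deriv q z)) z := by
      have : HasDerivAt (fun w => 2 * q w ^ 3 + w * q w + α) _ z := ((((hdq z hz).pow 3).const_mul 2).add
        ((hasDerivAt_id z).mul (hdq z hz))).add_const α
      convert this using 1
      simp only [id_eq]
      ring
    have h2 : HasDerivAt (fun w => 2 * q w * deriv q w)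
        (2 * deriv q z * deriv q z + 2 * q z * deriv (deriv q) z) z := by
      exact (((hdq z hz).const_mul 2).mul (hdq' z hz))
    exact (h1.neg.sub h2).sub_const (1 / 2 : ℝ)
  have h2p : deriv (deriv p) z =
      -(2 * (3 * q z ^ 2 * deriv q z) + (q z + z * deriv q z))
        - (2 * deriv q z * deriv q z + 2 * q z * deriv (deriv q) z) := by
    rw [Filter.EventuallyEq.deriv_eq heq]
    exact hg.deriv
  rw [h2p, hPII z hz, hderivp z hz, hp z]
  have hpz' : -deriv q z - q z ^ 2 - z / 2 ≠ 0 := by rw [hp z] at hpz; exact hpz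
  -- final algebra
  set Q := q z with hQ
  set Q1 := deriv q z with hQ1
  set P := -Q1 - Q ^ 2 - z / 2 with hP
  have h2 : 2 * P ≠ 0 := mul_ne_zero two_ne_zero hpz'
  set L : ℝ := α + 1 / 2 with hL
  set X : ℝ := -(2 * Q ^ 3 + z * Q + α) - 2 * Q * Q1 - 1 / 2 with hX
  have e2 : (X ^ 2 - L ^ 2) / (2 * P) = 2 * Q * (Q * P - L) := by
    rw [show X ^ 2 - L ^ 2 = (2 * Q * (Q * P - L)) * (2 * P) from by
      rw [hX, hP, hL]; ring, mul_div_cancel_right₀ _ h2]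
  have e1 : X ^ 2 / (2 * P) - 2 * P ^ 2 - z * P - L ^ 2 / (2 * P)
      = (X ^ 2 - L ^ 2) / (2 * P) - 2 * P ^ 2 - z * P := by ring
  rw [e1, e2, hP, hL]
  ring
end

section
/- Let ℓ ∈ ℝ, let I ⊆ ℝ be open, and let p : I → ℝ be smooth and nowhere vanishing with p″(z) = p′(z)²/(2p(z)) − 2 p(z)² − z p(z) − ℓ²/(2p(z)) for all z ∈ I. Then q(z) = (p′(z) + ℓ)/(2 p(z)) satisfies the Painlevé II equation with parameter α = ℓ − 1/2: q″(z) = 2 q(z)³ + z q(z) + (ℓ − 1/2) for all z ∈ I. -/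
/-- From Painlevé XXXIV to Painlevé II: if `p` is smooth, nowhere vanishing on an
open set `I`, and satisfies `p'' = (p')²/(2p) - 2p² - zp - ℓ²/(2p)` on `I`, then
`q = (p' + ℓ)/(2p)` satisfies `q'' = 2q³ + zq + (ℓ - 1/2)` on `I`. -/
theorem painleveXXXIV_to_painleveII (ℓ : ℝ) (I : Set ℝ) (hI : IsOpen I)
    (p : ℝ → ℝ) (hsm : ContDiffOn ℝ (⊤ : ℕ∞) p I) (hne : ∀ z ∈ I, p z ≠ 0)
    (hP34 : ∀ z ∈ I, deriv (deriv p) z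
      = (deriv p z) ^ 2 / (2 * p z) - 2 * p z ^ 2 - z * p z - ℓ ^ 2 / (2 * p z))
    (q : ℝ → ℝ) (hq : ∀ z : ℝ, q z = (deriv p z + ℓ) / (2 * p z)) :
    ∀ z ∈ I, deriv (deriv q) z = 2 * q z ^ 3 + z * q z + (ℓ - 1 / 2) := by
  have hp1 : ∀ z ∈ I, HasDerivAt p (deriv p z) z := fun z hz =>
    ((hsm.contDiffAt (hI.mem_nhds hz)).differentiableAt (by simp)).hasDerivAt
  have hdpC : ContDiffOn ℝ (⊤ : ℕ∞) (deriv p) I := hsm.deriv_of_isOpen hI (by simp)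
  have hp2 : ∀ z ∈ I, HasDerivAt (deriv p) (deriv (deriv p) z) z := fun z hz =>
    ((hdpC.contDiffAt (hI.mem_nhds hz)).differentiableAt (by simp)).hasDerivAt
  have hq' : ∀ z ∈ I, HasDerivAt q (-(q z)^2 - p z - z/2) z := by
    intro z hz
    have hqe : q = fun w => (deriv p w + ℓ) / (2 * p w) := funext hq
    rw [hqe]
    have h2p : (2 * p z) ≠ 0 := by
      have := hne z hz; positivity
    have h := ((hp2 z hz).add_const ℓ).div ((hp1 z hz).const_mul 2) h2p
    replace h : HasDerivAt (fun w => (deriv p w + ℓ) / (2 * p w)) _ z := h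
    convert h using 1
    simp only [hP34 z hz]
    have := hne z hz
    field_simp
    ring
  intro z hz
  have hpz := hne z hz
  have hd : HasDerivAt (fun w => -(q w)^2 - p w - w/2)
      (-(2 * q z * (-(q z)^2 - p z - z/2)) - deriv p z - 1/2) z := by
    have h1 : HasDerivAt (fun w => -(q w)^2) (-(2 * q z * (-(q z)^2 - p z - z/2))) z := by
      have := ((hq' z hz).pow 2).neg
      replace this : HasDerivAt (fun w => -(q w)^2) _ z := this
      convert this using 1
      ring
    have h2 : HasDerivAt (fun w : ℝ => w/2) (1/2) z := by
      simpa using (hasDerivAt_id z).div_const 2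
    exact (h1.sub (hp1 z hz)).sub h2
  have heq : deriv q =ᶠ[nhds z] fun w => -(q w)^2 - p w - w/2 :=
    Filter.eventuallyEq_of_mem (hI.mem_nhds hz) (fun w hw => (hq' w hw).deriv)
  have hfin : HasDerivAt (deriv q)
      (-(2 * q z * (-(q z)^2 - p z - z/2)) - deriv p z - 1/2) z :=
    hd.congr_of_eventuallyEq heq
  rw [hfin.deriv]
  have hdp : deriv p z = 2 * p z * q z - ℓ := by
    rw [hq z]; field_simp; ring
  rw [hdp]; ring
end

section
/- Let ℓ ∈ ℝ and let p : ℝ → ℝ be smooth and nowhere vanishing with p″(z) = p′(z)²/(2p(z)) − 2 p(z)² − z p(z) − ℓ²/(2p(z)) for all z ∈ ℝ. For x ∈ ℝ and t < 0, define V(x,t) = (−3t)^{−2/3} ( p(z) + z/2 ) with z = x(−3t)^{−1/3}. Then V satisfies the KdV equation ∂_t V = ∂_x³ V + 6 V ∂_x V at every (x,t) with t < 0. -/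
/-- Partial derivative with respect to the first variable. -/
noncomputable def Dx (f : ℝ → ℝ → ℝ) (x t : ℝ) : ℝ := deriv (fun x' => f x' t) x

/-- Partial derivative with respect to the second variable. -/
noncomputable def Dt (f : ℝ → ℝ → ℝ) (x t : ℝ) : ℝ := deriv (fun t' => f x t') t

/-- Scaling similarity solutions of KdV from Painlevé XXXIV: if `p` is a smooth,
nowhere vanishing solution of `p'' = (p')²/(2p) - 2p² - zp - ℓ²/(2p)` on `ℝ`, then
`V(x,t) = (-3t)^{-2/3}(p(z) + z/2)` with `z = x(-3t)^{-1/3}` satisfies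
`V_t = V_{xxx} + 6VV_x` for all `t < 0`. -/
theorem painleveXXXIV_similarity_kdv (ℓ : ℝ) (p : ℝ → ℝ)
    (hsm : ContDiff ℝ (⊤ : ℕ∞) p) (hne : ∀ z : ℝ, p z ≠ 0)
    (hP34 : ∀ z : ℝ, deriv (deriv p) z
      = (deriv p z) ^ 2 / (2 * p z) - 2 * p z ^ 2 - z * p z - ℓ ^ 2 / (2 * p z))
    (V : ℝ → ℝ → ℝ)
    (hV : ∀ x t : ℝ, V x t = (-3 * t) ^ (-(2 : ℝ) / 3)
      * (p (x * (-3 * t) ^ (-(1 : ℝ) / 3)) + x * (-3 * t) ^ (-(1 : ℝ) / 3) / 2)) :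
    ∀ x t : ℝ, t < 0 →
      Dt V x t = Dx (Dx (Dx V)) x t + 6 * V x t * Dx V x t := by
  intro x t ht
  have hspos : (0:ℝ) < -3 * t := by linarith
  have hsm' : ContDiff ℝ ((⊤ : ℕ∞) : WithTop ℕ∞) p := hsm.of_le (by simp)
  have hd0 : Differentiable ℝ p := hsm'.differentiable (by simp)
  have hsm1 : ContDiff ℝ ((⊤ : ℕ∞) : WithTop ℕ∞) (deriv p) := (contDiff_infty_iff_deriv.mp hsm').2
  have hd1 : Differentiable ℝ (deriv p) := hsm1.differentiable (by simp)
  have hp : ∀ y, HasDerivAt p (deriv p y) y := fun y => (hd0 y).hasDerivAt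
  have hq : ∀ y, HasDerivAt (deriv p) (deriv (deriv p) y) y := fun y => (hd1 y).hasDerivAt
  -- the third derivative of p
  have h3 : ∀ y : ℝ, HasDerivAt (deriv (deriv p))
      (-(6 * p y * deriv p y) - 2 * y * deriv p y - p y) y := by
    intro y
    have hFun : deriv (deriv p) = fun w => (deriv p w) ^ 2 / (2 * p w) - 2 * p w ^ 2
        - w * p w - ℓ ^ 2 / (2 * p w) := funext hP34
    have hne2 : (2:ℝ) * p y ≠ 0 := mul_ne_zero two_ne_zero (hne y)
    have t1 : HasDerivAt (fun w => (deriv p w) ^ 2)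
        ((2:ℕ) * deriv p y ^ (2-1) * deriv (deriv p) y) y := (hq y).pow 2
    have t2 : HasDerivAt (fun w => 2 * p w) (2 * deriv p y) y := (hp y).const_mul 2
    have t3 : HasDerivAt (fun w => 2 * p w ^ 2) (2 * ((2:ℕ) * p y ^ (2-1) * deriv p y)) y :=
      ((hp y).pow 2).const_mul 2
    have t4 : HasDerivAt (fun w : ℝ => w * p w) (1 * p y + y * deriv p y) y :=
      (hasDerivAt_id y).mul (hp y)
    have t5 : HasDerivAt (fun w => ℓ ^ 2 / (2 * p w))
        ((0 * (2 * p y) - ℓ ^ 2 * (2 * deriv p y)) / (2 * p y) ^ 2) y :=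
      (hasDerivAt_const y (ℓ ^ 2)).div t2 hne2
    have hD := (((t1.div t2 hne2).sub t3).sub t4).sub t5
    rw [hFun]
    refine hD.congr_deriv ?_
    rw [hP34 y]
    field_simp [hne y]
    ring
  set A := (-3 * t) ^ (-(1:ℝ)/3) with hA
  set C := (-3 * t) ^ (-(2:ℝ)/3) with hC
  have hpow : ∀ (n : ℕ) (r : ℝ), (-(1:ℝ)/3) * (n:ℝ) = r → (-3*t) ^ r = A ^ n := by
    intro n r hr
    rw [hA, ← Real.rpow_natCast ((-3*t) ^ (-(1:ℝ)/3)) n, ← Real.rpow_mul hspos.le, hr]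
  -- x-derivatives
  have hVx : (fun x' => V x' t) = fun x' => C * (p (x' * A) + x' * A / 2) := by
    funext x'; rw [hV x' t]
  have hDx1 : ∀ x' : ℝ, HasDerivAt (fun x'' => V x'' t)
      (C * A * (deriv p (x' * A) + 1 / 2)) x' := by
    intro x'
    rw [hVx]
    have hlin : HasDerivAt (fun w : ℝ => w * A) A x' := hasDerivAt_mul_const A
    have hcomp : HasDerivAt (fun w => p (w * A)) (deriv p (x' * A) * A) x' :=
      (hp (x' * A)).comp x' hlin
    have h := (hcomp.add (hlin.div_const 2)).const_mul C
    refine h.congr_deriv ?_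
    ring
  have hDxV : ∀ x' : ℝ, Dx V x' t = C * A * (deriv p (x' * A) + 1 / 2) :=
    fun x' => (hDx1 x').deriv
  have hDx2 : ∀ x' : ℝ, HasDerivAt (fun x'' => Dx V x'' t)
      (C * A ^ 2 * deriv (deriv p) (x' * A)) x' := by
    intro x'
    have hfun : (fun x'' => Dx V x'' t) = fun x'' => C * A * (deriv p (x'' * A) + 1 / 2) :=
      funext fun x'' => hDxV x''
    rw [hfun]
    have hlin : HasDerivAt (fun w : ℝ => w * A) A x' := hasDerivAt_mul_const A
    have hcomp : HasDerivAt (fun w => deriv p (w * A)) (deriv (deriv p) (x' * A) * A) x' :=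
      ((hq (x' * A)).comp x' hlin :)
    have h := (hcomp.add_const (1/2)).const_mul (C * A)
    refine h.congr_deriv ?_
    ring
  have hDx2V : ∀ x' : ℝ, Dx (Dx V) x' t = C * A ^ 2 * deriv (deriv p) (x' * A) :=
    fun x' => (hDx2 x').deriv
  have hDx3 : HasDerivAt (fun x'' => Dx (Dx V) x'' t)
      (C * A ^ 3 * (-(6 * p (x * A) * deriv p (x * A))
        - 2 * (x * A) * deriv p (x * A) - p (x * A))) x := by
    have hfun : (fun x'' => Dx (Dx V) x'' t)
        = fun x'' => C * A ^ 2 * deriv (deriv p) (x'' * A) := funext fun x'' => hDx2V x''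
    rw [hfun]
    have hlin : HasDerivAt (fun w : ℝ => w * A) A x := hasDerivAt_mul_const A
    have hcomp : HasDerivAt (fun w => deriv (deriv p) (w * A))
        ((-(6 * p (x * A) * deriv p (x * A))
          - 2 * (x * A) * deriv p (x * A) - p (x * A)) * A) x :=
      ((h3 (x * A)).comp x hlin :)
    have h := hcomp.const_mul (C * A ^ 2)
    refine h.congr_deriv ?_
    ring
  have hDx3V : Dx (Dx (Dx V)) x t = C * A ^ 3 * (-(6 * p (x * A) * deriv p (x * A))
      - 2 * (x * A) * deriv p (x * A) - p (x * A)) := hDx3.deriv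
  -- t-derivative
  have hVt : (fun t' => V x t') = fun t' => (-3 * t') ^ (-(2:ℝ)/3)
      * (p (x * (-3 * t') ^ (-(1:ℝ)/3)) + x * (-3 * t') ^ (-(1:ℝ)/3) / 2) :=
    funext fun t' => hV x t'
  have hin : HasDerivAt (fun t' : ℝ => -3 * t') (-3) t := by
    simpa using (hasDerivAt_id t).const_mul (-3)
  have hf : HasDerivAt (fun t' : ℝ => (-3 * t') ^ (-(2:ℝ)/3))
      (-(2:ℝ)/3 * (-3 * t) ^ (-(2:ℝ)/3 - 1) * (-3)) t :=
    (Real.hasDerivAt_rpow_const (Or.inl hspos.ne')).comp t hin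
  have hg : HasDerivAt (fun t' : ℝ => (-3 * t') ^ (-(1:ℝ)/3))
      (-(1:ℝ)/3 * (-3 * t) ^ (-(1:ℝ)/3 - 1) * (-3)) t :=
    (Real.hasDerivAt_rpow_const (Or.inl hspos.ne')).comp t hin
  have hzz : HasDerivAt (fun t' : ℝ => x * (-3 * t') ^ (-(1:ℝ)/3))
      (x * (-(1:ℝ)/3 * (-3 * t) ^ (-(1:ℝ)/3 - 1) * (-3))) t := hg.const_mul x
  have hpz : HasDerivAt (fun t' : ℝ => p (x * (-3 * t') ^ (-(1:ℝ)/3)))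
      (deriv p (x * A) * (x * (-(1:ℝ)/3 * (-3 * t) ^ (-(1:ℝ)/3 - 1) * (-3)))) t :=
    (hp (x * A)).comp t hzz
  have hDt : HasDerivAt (fun t' => V x t')
      (-(2:ℝ)/3 * (-3 * t) ^ (-(2:ℝ)/3 - 1) * (-3) * (p (x * A) + x * A / 2)
        + C * (deriv p (x * A) * (x * (-(1:ℝ)/3 * (-3 * t) ^ (-(1:ℝ)/3 - 1) * (-3)))
          + x * (-(1:ℝ)/3 * (-3 * t) ^ (-(1:ℝ)/3 - 1) * (-3)) / 2)) t := by
    rw [hVt]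
    exact hf.mul (hpz.add (hzz.div_const 2))
  have hDtV : Dt V x t = -(2:ℝ)/3 * (-3 * t) ^ (-(2:ℝ)/3 - 1) * (-3) * (p (x * A) + x * A / 2)
        + C * (deriv p (x * A) * (x * (-(1:ℝ)/3 * (-3 * t) ^ (-(1:ℝ)/3 - 1) * (-3)))
          + x * (-(1:ℝ)/3 * (-3 * t) ^ (-(1:ℝ)/3 - 1) * (-3)) / 2) := hDt.deriv
  -- finish
  have h2 : (-3*t) ^ (-(2:ℝ)/3) = A ^ 2 := hpow 2 _ (by norm_num)
  have h4 : (-3*t) ^ (-(1:ℝ)/3 - 1) = A ^ 4 := hpow 4 _ (by norm_num)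
  have h5 : (-3*t) ^ (-(2:ℝ)/3 - 1) = A ^ 5 := hpow 5 _ (by norm_num)
  rw [hDtV, hDx3V, hDxV x, hV x t, ← hA, ← hC, h4, h5, hC, h2]
  ring
end

section
/- Let I ⊆ ℝ be open, μ ∈ ℝ, V_0 : I → ℝ smooth, n ≥ 1, and let ψ_1, …, ψ_{n+1} : I → ℝ be smooth functions forming a Jordan chain: ψ_i″ + (V_0 + μ)ψ_i = ψ_{i−1} for 1 ≤ i ≤ n+1, with the convention ψ_0 = 0. Set θ_0 = 1 and θ_k = Wr(ψ_1, …, ψ_k) for 1 ≤ k ≤ n+1. Then: (i) for all z ∈ I, θ_{n+1}′(z) θ_{n−1}(z) − θ_{n+1}(z) θ_{n−1}′(z) = θ_n(z)²; (ii) at every z ∈ I with θ_n(z) ≠ 0, the function φ_n = θ_{n+1}/θ_n satisfies φ_n″ + (V_n + μ) φ_n = 0, where V_n = V_0 + 2(θ_n″ θ_n − (θ_n′)²)/θ_n²; (iii) at every z ∈ I where θ_{n−1}(z) ≠ 0 and θ_n(z) ≠ 0, the function (φ_{n−1})^{−1} = θ_{n−1}/θ_n also satisfies ((φ_{n−1})^{−1})″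 + (V_n + μ)(φ_{n−1})^{−1} = 0, and the Wronskian identity (φ_{n−1})^{−1} · φ_n′ − ((φ_{n−1})^{−1})′ · φ_n = 1 holds there. -/
open scoped ContDiff
open Filter

namespace CDW

/-- Wronskian of ψ 1, ..., ψ k. -/
noncomputable def Wr (k : ℕ) (ψ : ℕ → ℝ → ℝ) : ℝ → ℝ :=
  fun z => (Matrix.of fun i j : Fin k => iteratedDeriv (i : ℕ) (ψ ((j : ℕ) + 1)) z).det

lemma wr_eq (k : ℕ) (ψ : ℕ → ℝ → ℝ) (z : ℝ) :
    wronskianN k (fun j : Fin k => ψ ((j : ℕ) + 1)) z = Wr k ψ z := rfl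

variable {I : Set ℝ} {f g : ℝ → ℝ}

lemma sm_deriv (hI : IsOpen I) (hf : ContDiffOn ℝ ∞ f I) : ContDiffOn ℝ ∞ (deriv f) I :=
  hf.deriv_of_isOpen hI (by norm_num)

lemma sm_iter (hI : IsOpen I) (hf : ContDiffOn ℝ ∞ f I) (m : ℕ) :
    ContDiffOn ℝ ∞ (iteratedDeriv m f) I := by
  induction m generalizing f with
  | zero => simpa [iteratedDeriv_zero] using hf
  | succ m ih => rw [iteratedDeriv_succ']; exact ih (sm_deriv hI hf)

lemma da (hI : IsOpen I) (hf : ContDiffOn ℝ ∞ f I) {z : ℝ} (hz : z ∈ I) :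
    DifferentiableAt ℝ f z :=
  (hf.contDiffAt (hI.mem_nhds hz)).differentiableAt (by norm_num)

lemma da_deriv (hI : IsOpen I) (hf : ContDiffOn ℝ ∞ f I) {z : ℝ} (hz : z ∈ I) :
    DifferentiableAt ℝ (deriv f) z := da hI (sm_deriv hI hf) hz

lemma da_dd (hI : IsOpen I) (hf : ContDiffOn ℝ ∞ f I) {z : ℝ} (hz : z ∈ I) :
    DifferentiableAt ℝ (deriv (deriv f)) z := da hI (sm_deriv hI (sm_deriv hI hf)) hz

lemma iD_zero (m : ℕ) : iteratedDeriv m (fun _ : ℝ => (0:ℝ)) = fun _ => 0 := by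
  induction m with
  | zero => simp [iteratedDeriv_zero]
  | succ m ih => rw [iteratedDeriv_succ']; simp only [deriv_const']; exact ih

lemma iD_const (m : ℕ) (c : ℝ) : iteratedDeriv m (fun _ : ℝ => c) = fun _ => if m = 0 then c else 0 := by
  cases m with
  | zero => simp [iteratedDeriv_zero]
  | succ m => rw [iteratedDeriv_succ']; simp only [deriv_const']; rw [iD_zero]; simp

/-- eventual equality from equality on an open set -/
lemma evEq (hI : IsOpen I) {z : ℝ} (hz : z ∈ I) (h : ∀ w ∈ I, f w = g w) : f =ᶠ[nhds z] g :=
  Filter.eventuallyEq_of_mem (hI.mem_nhds hz) h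

/-- Leibniz rule for iterated derivatives, locally on an open set. -/
lemma leibniz (hI : IsOpen I) (hf : ContDiffOn ℝ ∞ f I) (hg : ContDiffOn ℝ ∞ g I) (n : ℕ) :
    ∀ z ∈ I, iteratedDeriv n (fun w => f w * g w) z
      = ∑ p ∈ Finset.HasAntidiagonal.antidiagonal n,
          (n.choose p.1 : ℝ) * iteratedDeriv p.1 f z * iteratedDeriv p.2 g z := by
  induction n with
  | zero =>
      intro z hz
      simp [iteratedDeriv_zero]
  | succ n ih =>
      intro z hz
      rw [iteratedDeriv_succ]
      have hcong : deriv (iteratedDeriv n fun w => f w * g w) z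
          = deriv (fun w => ∑ p ∈ Finset.HasAntidiagonal.antidiagonal n,
              (n.choose p.1 : ℝ) * iteratedDeriv p.1 f w * iteratedDeriv p.2 g w) z :=
        Filter.EventuallyEq.deriv_eq (evEq hI hz ih)
      rw [hcong]
      have hder : ∀ p ∈ Finset.HasAntidiagonal.antidiagonal n, HasDerivAt
          (fun w => (n.choose p.1 : ℝ) * iteratedDeriv p.1 f w * iteratedDeriv p.2 g w)
          ((n.choose p.1 : ℝ) * (iteratedDeriv (p.1+1) f z * iteratedDeriv p.2 g z
            + iteratedDeriv p.1 f z * iteratedDeriv (p.2+1) g z)) z := by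
        intro p _
        have h1 : HasDerivAt (iteratedDeriv p.1 f) (iteratedDeriv (p.1+1) f z) z := by
          rw [iteratedDeriv_succ]
          exact (da hI (sm_iter hI hf p.1) hz).hasDerivAt
        have h2 : HasDerivAt (iteratedDeriv p.2 g) (iteratedDeriv (p.2+1) g z) z := by
          rw [iteratedDeriv_succ]
          exact (da hI (sm_iter hI hg p.2) hz).hasDerivAt
        have := ((h1.mul h2).const_mul ((n.choose p.1 : ℝ)))
        exact this.congr_of_eventuallyEq (Filter.Eventually.of_forall fun w => by
          simp only [Pi.mul_apply]; ring)
      have hsum : HasDerivAt (fun w => ∑ p ∈ Finset.HasAntidiagonal.antidiagonal n,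
            (n.choose p.1 : ℝ) * iteratedDeriv p.1 f w * iteratedDeriv p.2 g w)
          (∑ p ∈ Finset.HasAntidiagonal.antidiagonal n, (n.choose p.1 : ℝ) * (iteratedDeriv (p.1+1) f z * iteratedDeriv p.2 g z
            + iteratedDeriv p.1 f z * iteratedDeriv (p.2+1) g z)) z :=
        HasDerivAt.fun_sum hder
      rw [hsum.deriv]
      -- now the combinatorial identity
      have key : ∀ (a b : ℕ → ℝ),
          ∑ p ∈ Finset.HasAntidiagonal.antidiagonal (n+1), ((n+1).choose p.1 : ℝ) * a p.1 * b p.2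
          = ∑ p ∈ Finset.HasAntidiagonal.antidiagonal n, (n.choose p.1 : ℝ) * (a (p.1+1) * b p.2 + a p.1 * b (p.2+1)) := by
        intro a b
        have pascal : ∀ p ∈ Finset.HasAntidiagonal.antidiagonal n,
            (((n+1).choose (p.1+1) : ℕ) : ℝ) * a (p.1+1) * b p.2
            = (n.choose p.1 : ℝ) * a (p.1+1) * b p.2 + (n.choose (p.1+1) : ℝ) * a (p.1+1) * b p.2 := by
          intro p _
          rw [Nat.choose_succ_succ]
          push_cast
          ring
        have e1 := Finset.Nat.sum_antidiagonal_succ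
          (n := n) (f := fun p => ((n+1).choose p.1 : ℝ) * a p.1 * b p.2)
        rw [Finset.sum_congr rfl pascal, Finset.sum_add_distrib] at e1
        have e2 := Finset.Nat.sum_antidiagonal_succ
          (n := n) (f := fun p => ((n).choose p.1 : ℝ) * a p.1 * b p.2)
        have e3 := Finset.Nat.sum_antidiagonal_succ'
          (n := n) (f := fun p => ((n).choose p.1 : ℝ) * a p.1 * b p.2)
        simp only [Nat.choose_zero_right, Nat.cast_one, one_mul, Nat.choose_succ_self,
          Nat.cast_zero, zero_mul, zero_add] at e1 e2 e3
        have target : ∑ p ∈ Finset.HasAntidiagonal.antidiagonal n,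
            (n.choose p.1 : ℝ) * (a (p.1+1) * b p.2 + a p.1 * b (p.2+1))
            = (∑ p ∈ Finset.HasAntidiagonal.antidiagonal n, (n.choose p.1 : ℝ) * a (p.1+1) * b p.2)
              + ∑ p ∈ Finset.HasAntidiagonal.antidiagonal n, (n.choose p.1 : ℝ) * a p.1 * b (p.2+1) := by
          rw [← Finset.sum_add_distrib]
          exact Finset.sum_congr rfl fun p _ => by ring
        rw [target]
        linarith [e1, e2, e3]
      exact (key (fun m => iteratedDeriv m f z) (fun m => iteratedDeriv m g z)).symm

lemma sm_prod {ι : Type*} (s : Finset ι) (g : ι → ℝ → ℝ)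
    (hg : ∀ i ∈ s, ContDiffOn ℝ ∞ (g i) I) :
    ContDiffOn ℝ ∞ (fun z => ∏ i ∈ s, g i z) I := by
  classical
  induction s using Finset.induction_on with
  | empty => simpa using contDiffOn_const
  | insert _ _ hnotmem ih =>
      simp only [Finset.prod_insert hnotmem]
      exact (hg _ (Finset.mem_insert_self _ _)).mul
        (ih fun i hi => hg i (Finset.mem_insert_of_mem hi))

lemma sm_sum {ι : Type*} (s : Finset ι) (g : ι → ℝ → ℝ)
    (hg : ∀ i ∈ s, ContDiffOn ℝ ∞ (g i) I) :
    ContDiffOn ℝ ∞ (fun z => ∑ i ∈ s, g i z) I := by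
  classical
  induction s using Finset.induction_on with
  | empty => simpa using contDiffOn_const
  | insert _ _ hnotmem ih =>
      simp only [Finset.sum_insert hnotmem]
      exact (hg _ (Finset.mem_insert_self _ _)).add
        (ih fun i hi => hg i (Finset.mem_insert_of_mem hi))

lemma sm_Wr (hI : IsOpen I) (m : ℕ) (ψ : ℕ → ℝ → ℝ)
    (hψ : ∀ j, 1 ≤ j → j ≤ m → ContDiffOn ℝ ∞ (ψ j) I) :
    ContDiffOn ℝ ∞ (Wr m ψ) I := by
  have : Wr m ψ = fun z => ∑ σ : Equiv.Perm (Fin m),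
      (Equiv.Perm.sign σ : ℤ) • ∏ i : Fin m, iteratedDeriv ((σ i : Fin m) : ℕ) (ψ ((i : ℕ) + 1)) z := by
    funext z
    rw [Wr, Matrix.det_apply]
    rfl
  rw [this]
  apply sm_sum
  intro σ _
  have : (fun z => (Equiv.Perm.sign σ : ℤ) • ∏ i : Fin m, iteratedDeriv ((σ i : Fin m) : ℕ) (ψ ((i : ℕ) + 1)) z)
      = fun z => ((Equiv.Perm.sign σ : ℤ) : ℝ) * ∏ i : Fin m, iteratedDeriv ((σ i : Fin m) : ℕ) (ψ ((i : ℕ) + 1)) z := by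
    funext z; rw [zsmul_eq_mul]
  rw [this]
  apply ContDiffOn.mul contDiffOn_const
  apply sm_prod
  intro i _
  exact sm_iter hI (hψ ((i : ℕ) + 1) (by omega) (by omega)) _

lemma Wr_zero (ψ : ℕ → ℝ → ℝ) : Wr 0 ψ = fun _ => 1 := by
  funext z; exact Matrix.det_isEmpty

lemma Wr_one (ψ : ℕ → ℝ → ℝ) : Wr 1 ψ = ψ 1 := by
  funext z
  rw [Wr, Matrix.det_fin_one]
  simp [iteratedDeriv_zero]

lemma Wr_two (ψ : ℕ → ℝ → ℝ) :
    Wr 2 ψ = fun z => ψ 1 z * deriv (ψ 2) z - deriv (ψ 1) z * ψ 2 z := by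
  funext z
  rw [Wr, Matrix.det_fin_two]
  simp only [Matrix.of_apply, iteratedDeriv_zero, iteratedDeriv_one]
  norm_num
  ring

/-- L1: pulling a common factor out of a Wronskian-type determinant. -/
lemma det_mul_col (hI : IsOpen I) {z : ℝ} (hz : z ∈ I) (hf : ContDiffOn ℝ ∞ f I)
    (m : ℕ) (h : Fin m → ℝ → ℝ) (hh : ∀ j, ContDiffOn ℝ ∞ (h j) I) :
    (Matrix.of fun i j : Fin m => iteratedDeriv (i : ℕ) (fun w => f w * h j w) z).det
      = f z ^ m * (Matrix.of fun i j : Fin m => iteratedDeriv (i : ℕ) (h j) z).det := by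
  classical
  set L : Matrix (Fin m) (Fin m) ℝ := Matrix.of fun i l : Fin m =>
    if (l : ℕ) ≤ (i : ℕ) then ((i : ℕ).choose ((i : ℕ) - (l : ℕ)) : ℝ)
      * iteratedDeriv ((i : ℕ) - (l : ℕ)) f z else 0 with hL
  set N : Matrix (Fin m) (Fin m) ℝ := Matrix.of fun l j : Fin m =>
    iteratedDeriv (l : ℕ) (h j) z with hN
  have hM : (Matrix.of fun i j : Fin m => iteratedDeriv (i : ℕ) (fun w => f w * h j w) z)
      = L * N := by
    ext i j
    rw [Matrix.mul_apply, Matrix.of_apply]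
    have lhs_eq : iteratedDeriv (i : ℕ) (fun w => f w * h j w) z
        = ∑ l ∈ Finset.range ((i : ℕ) + 1),
            (((i : ℕ).choose ((i : ℕ) - l) : ℕ) : ℝ) * iteratedDeriv ((i : ℕ) - l) f z
              * iteratedDeriv l (h j) z := by
      rw [leibniz hI hf (hh j) (i : ℕ) z hz,
        Finset.Nat.sum_antidiagonal_eq_sum_range_succ_mk, ← Finset.sum_range_reflect]
      apply Finset.sum_congr rfl
      intro l hl
      simp only [Finset.mem_range] at hl
      simp only [Nat.succ_sub_one]
      have h2 : (i : ℕ) - ((i : ℕ) - l) = l := by omega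
      rw [h2]
    rw [lhs_eq]
    have hsub : ∀ l : Fin m, L i l * N l j
        = if (l : ℕ) ≤ (i : ℕ) then
            (((i : ℕ).choose ((i : ℕ) - (l : ℕ)) : ℕ) : ℝ) * iteratedDeriv ((i : ℕ) - (l : ℕ)) f z
              * iteratedDeriv (l : ℕ) (h j) z
          else 0 := by
      intro l
      rw [hL, hN]
      simp only [Matrix.of_apply]
      by_cases hc : (l : ℕ) ≤ (i : ℕ) <;> simp [hc, mul_assoc]
    rw [Finset.sum_congr rfl fun l _ => hsub l]
    rw [Fin.sum_univ_eq_sum_range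
      (fun l => if l ≤ (i : ℕ) then
        (((i : ℕ).choose ((i : ℕ) - l) : ℕ) : ℝ) * iteratedDeriv ((i : ℕ) - l) f z
          * iteratedDeriv l (h j) z else 0) m]
    rw [← Finset.sum_subset (Finset.range_subset_range.2 (by omega : (i : ℕ) + 1 ≤ m))
      (fun l _ hl => if_neg (by simp only [Finset.mem_range, not_lt] at hl; omega))]
    apply Finset.sum_congr rfl
    intro l hl
    simp only [Finset.mem_range] at hl
    rw [if_pos (by omega : l ≤ (i : ℕ))]
  rw [hM, Matrix.det_mul]
  have goalrw : ∀ a b c : ℝ, a = c → a * b = c * b := fun a b c hac => by rw [hac]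
  have hLdet : L.det = f z ^ m := by
    have htri : L.BlockTriangular OrderDual.toDual := by
      intro i l hlt
      have h2 : i < l := hlt
      have h3 : (i : ℕ) < (l : ℕ) := h2
      simp only [hL, Matrix.of_apply]
      rw [if_neg (by omega)]
    rw [Matrix.det_of_lowerTriangular L htri]
    have hdiag : ∀ i : Fin m, L i i = f z := by
      intro i
      simp only [hL, Matrix.of_apply, if_pos (le_refl (i : ℕ)), Nat.sub_self,
        Nat.choose_zero_right, Nat.cast_one, one_mul]
      rw [iteratedDeriv_zero]
    rw [Finset.prod_congr rfl fun i _ => hdiag i]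
    simp

  exact goalrw _ _ _ hLdet

/-- L2: first column is the constant 1. -/
lemma det_one_col (m : ℕ) (g : Fin (m + 1) → ℝ → ℝ) (hg0 : g 0 = fun _ => (1 : ℝ)) (z : ℝ) :
    (Matrix.of fun i j : Fin (m + 1) => iteratedDeriv (i : ℕ) (g j) z).det
      = (Matrix.of fun i j : Fin m => iteratedDeriv (i : ℕ) (deriv (g j.succ)) z).det := by
  rw [Matrix.det_succ_column_zero]
  rw [Finset.sum_eq_single (0 : Fin (m + 1))]
  · simp only [Matrix.of_apply, Fin.val_zero, pow_zero, one_mul, hg0, iteratedDeriv_zero]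
    rw [Fin.succAbove_zero]
    congr 1
    ext i j
    simp only [Matrix.submatrix_apply, Matrix.of_apply, Fin.val_succ]
    exact congrFun (iteratedDeriv_succ' (n := (i : ℕ)) (f := g j.succ)) z
  · intro i _ hne
    have : (Matrix.of fun i j : Fin (m + 1) => iteratedDeriv (i : ℕ) (g j) z) i 0 = 0 := by
      simp only [Matrix.of_apply, hg0]
      rw [iD_const]
      have hv : (i : ℕ) ≠ 0 := by
        intro hc
        exact hne (Fin.ext (by simp [hc]))
      simp [hv]
    rw [this]
    ring
  · intro hmem; exact absurd (Finset.mem_univ _) hmem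

/-- derivative of a quotient, given agreement on an open set -/
lemma quot_deriv {U : Set ℝ} (hU : IsOpen U) {P A F : ℝ → ℝ} (hA : ContDiffOn ℝ ∞ A U)
    (hF : ContDiffOn ℝ ∞ F U) (hFne : ∀ w ∈ U, F w ≠ 0)
    (hP : ∀ w ∈ U, P w = A w / F w) :
    ∀ z ∈ U, deriv P z = (deriv A z * F z - A z * deriv F z) / F z ^ 2 := by
  intro z hz
  have h1 : deriv P z = deriv (fun w => A w / F w) z := (evEq hU hz hP).deriv_eq
  have h2 := ((da hU hA hz).hasDerivAt.div (da hU hF hz).hasDerivAt (hFne z hz)).deriv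
  rw [h1]; exact h2

lemma quot_dd {U : Set ℝ} (hU : IsOpen U) {P A F : ℝ → ℝ} (hA : ContDiffOn ℝ ∞ A U)
    (hF : ContDiffOn ℝ ∞ F U) (hFne : ∀ w ∈ U, F w ≠ 0)
    (hP : ∀ w ∈ U, P w = A w / F w) :
    ∀ z ∈ U, deriv (deriv P) z =
      ((deriv (deriv A) z * F z - A z * deriv (deriv F) z) * F z
        - (deriv A z * F z - A z * deriv F z) * (2 * deriv F z)) / F z ^ 3 := by
  intro z hz
  have h1 : deriv (deriv P) z
      = deriv (fun w => (deriv A w * F w - A w * deriv F w) / F w ^ 2) z :=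
    (evEq hU hz (quot_deriv hU hA hF hFne hP)).deriv_eq
  rw [h1]
  have hFz := hFne z hz
  have hnum : HasDerivAt (fun w => deriv A w * F w - A w * deriv F w)
      ((deriv (deriv A) z * F z + deriv A z * deriv F z)
        - (deriv A z * deriv F z + A z * deriv (deriv F) z)) z :=
    (((da_deriv hU hA hz).hasDerivAt.mul (da hU hF hz).hasDerivAt).sub
      ((da hU hA hz).hasDerivAt.mul (da_deriv hU hF hz).hasDerivAt))
  have hden : HasDerivAt (fun w => F w ^ 2) (2 * F z ^ 1 * deriv F z) z := by
    exact (by simpa using (da hU hF hz).hasDerivAt.pow 2 : HasDerivAt (F ^ 2) (2 * F z ^ 1 * deriv F z) z)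
  have h3 : deriv (fun w => (deriv A w * F w - A w * deriv F w) / F w ^ 2) z = _ :=
    (hnum.div hden (pow_ne_zero 2 hFz)).deriv
  rw [h3]
  field_simp
  ring

/-- If an identity holds where F ≠ 0 and near points where F vanishes identically,
then it holds everywhere (continuity + automatic density). -/
lemma ext_zero (hI : IsOpen I) {P F : ℝ → ℝ} (hP : ContinuousOn P I)
    (h1 : ∀ z ∈ I, F z ≠ 0 → P z = 0)
    (h0 : ∀ z ∈ I, (∀ᶠ w in nhds z, F w = 0) → P z = 0) :
    ∀ z ∈ I, P z = 0 := by
  intro z hz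
  by_cases hc : ∀ᶠ w in nhds z, F w = 0
  · exact h0 z hz hc
  · have hfreq : ∃ᶠ w in nhds z, ¬ F w = 0 := Filter.not_eventually.mp hc
    have hIev : ∀ᶠ w in nhds z, w ∈ I := hI.mem_nhds hz
    have hT : ∃ᶠ w in nhds z, w ∈ {w | w ∈ I ∧ F w ≠ 0} :=
      (hfreq.and_eventually hIev).mono fun w hw => ⟨hw.2, hw.1⟩
    have hzT : z ∈ closure {w | w ∈ I ∧ F w ≠ 0} := mem_closure_iff_frequently.mpr hT
    haveI : (nhdsWithin z {w | w ∈ I ∧ F w ≠ 0}).NeBot :=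
      mem_closure_iff_nhdsWithin_neBot.mp hzT
    have t1 : Filter.Tendsto P (nhdsWithin z {w | w ∈ I ∧ F w ≠ 0}) (nhds (P z)) :=
      ((hP z hz).mono fun w hw => hw.1)
    have t2 : Filter.Tendsto P (nhdsWithin z {w | w ∈ I ∧ F w ≠ 0}) (nhds 0) := by
      apply Filter.Tendsto.congr' _ tendsto_const_nhds
      filter_upwards [self_mem_nhdsWithin] with w hw
      exact (h1 w hw.1 hw.2).symm
    exact tendsto_nhds_unique t1 t2

lemma wr_vanish {O : Set ℝ} (hO : IsOpen O) (ψ : ℕ → ℝ → ℝ)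
    (hF0 : ∀ w ∈ O, ψ 1 w = 0) (m : ℕ) (hm : 1 ≤ m) :
    ∀ w ∈ O, Wr m ψ w = 0 := by
  intro w hw
  apply Matrix.det_eq_zero_of_column_eq_zero (⟨0, by omega⟩ : Fin m)
  intro i
  have h1 : ψ (((⟨0, by omega⟩ : Fin m) : ℕ) + 1) =ᶠ[nhds w] fun _ => (0:ℝ) :=
    evEq hO hw (by simpa using hF0)
  show iteratedDeriv (i : ℕ) (ψ (((⟨0, by omega⟩ : Fin m) : ℕ) + 1)) w = 0
  rw [h1.iteratedDeriv_eq, iD_zero]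

lemma wr_vanish_d {O : Set ℝ} (hO : IsOpen O) (ψ : ℕ → ℝ → ℝ)
    (hF0 : ∀ w ∈ O, ψ 1 w = 0) (m : ℕ) (hm : 1 ≤ m) :
    ∀ w ∈ O, deriv (Wr m ψ) w = 0 := by
  intro w hw
  have h1 : Wr m ψ =ᶠ[nhds w] fun _ => (0:ℝ) := evEq hO hw (wr_vanish hO ψ hF0 m hm)
  rw [h1.deriv_eq]
  simp

lemma wr_vanish_dd {O : Set ℝ} (hO : IsOpen O) (ψ : ℕ → ℝ → ℝ)
    (hF0 : ∀ w ∈ O, ψ 1 w = 0) (m : ℕ) (hm : 1 ≤ m) :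
    ∀ w ∈ O, deriv (deriv (Wr m ψ)) w = 0 := by
  intro w hw
  have h1 : deriv (Wr m ψ) =ᶠ[nhds w] fun _ => (0:ℝ) := evEq hO hw (wr_vanish_d hO ψ hF0 m hm)
  rw [h1.deriv_eq]
  simp

/-- Crum reduction: Wr of Darboux-transformed functions. -/
lemma reduction (hI : IsOpen I) (ψ : ℕ → ℝ → ℝ) (m : ℕ)
    (hsm : ∀ j, 1 ≤ j → j ≤ m + 1 → ContDiffOn ℝ ∞ (ψ j) I)
    (hne : ∀ w ∈ I, ψ 1 w ≠ 0) :
    ∀ z ∈ I,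
      Wr m (fun j w => (ψ 1 w * deriv (ψ (j + 1)) w - deriv (ψ 1) w * ψ (j + 1) w) / ψ 1 w) z
        * ψ 1 z = Wr (m + 1) ψ z := by
  intro z hz
  have hFsm : ContDiffOn ℝ ∞ (ψ 1) I := hsm 1 le_rfl (by omega)
  set u : ℕ → ℝ → ℝ := fun j w => ψ j w / ψ 1 w with hu
  have husm : ∀ j, 1 ≤ j → j ≤ m + 1 → ContDiffOn ℝ ∞ (u j) I :=
    fun j h1 h2 => (hsm j h1 h2).div hFsm hne
  -- step A : entries of Wr m φ agree with F * (u)' entries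
  have hstepA : ∀ j : ℕ, 2 ≤ j → j ≤ m + 1 → ∀ w ∈ I,
      (ψ 1 w * deriv (ψ j) w - deriv (ψ 1) w * ψ j w) / ψ 1 w
        = ψ 1 w * deriv (u j) w := by
    intro j h2 hjm w hw
    have hder : deriv (u j) w = (deriv (ψ j) w * ψ 1 w - ψ j w * deriv (ψ 1) w) / ψ 1 w ^ 2 :=
      ((da hI (hsm j (by omega) hjm) hw).hasDerivAt.div
        (da hI hFsm hw).hasDerivAt (hne w hw)).deriv
    have h0 := hne w hw
    rw [hder]
    field_simp
  set g : Fin (m + 1) → ℝ → ℝ :=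
    fun j => Fin.cases (fun _ => (1 : ℝ)) (fun j' => u ((j' : ℕ) + 2)) j with hg
  have hgsm : ∀ j : Fin (m + 1), ContDiffOn ℝ ∞ (g j) I := by
    intro j
    induction j using Fin.cases with
    | zero => exact contDiffOn_const
    | succ j' => exact husm ((j' : ℕ) + 2) (by omega) (by omega)
  -- chain of determinant identities
  have e1 : Wr m (fun j w => (ψ 1 w * deriv (ψ (j + 1)) w - deriv (ψ 1) w * ψ (j + 1) w) / ψ 1 w) z
      = (Matrix.of fun i j : Fin m =>
          iteratedDeriv (i : ℕ) (fun w => ψ 1 w * deriv (u ((j : ℕ) + 2)) w) z).det := by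
    unfold Wr
    congr 1
    ext i j
    simp only [Matrix.of_apply]
    exact (evEq hI hz (fun w hw => hstepA ((j : ℕ) + 2) (by omega) (by omega) w hw)).iteratedDeriv_eq _
  have e2 : (Matrix.of fun i j : Fin m =>
        iteratedDeriv (i : ℕ) (fun w => ψ 1 w * deriv (u ((j : ℕ) + 2)) w) z).det
      = ψ 1 z ^ m * (Matrix.of fun i j : Fin m =>
          iteratedDeriv (i : ℕ) (deriv (u ((j : ℕ) + 2))) z).det :=
    det_mul_col hI hz hFsm m _ (fun j => sm_deriv hI (husm ((j : ℕ) + 2) (by omega) (by omega)))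
  have e3 : (Matrix.of fun i j : Fin (m + 1) => iteratedDeriv (i : ℕ) (g j) z).det
      = (Matrix.of fun i j : Fin m =>
          iteratedDeriv (i : ℕ) (deriv (u ((j : ℕ) + 2))) z).det := by
    rw [det_one_col m g rfl z]
    congr 1
  have e4 : (Matrix.of fun i j : Fin (m + 1) =>
        iteratedDeriv (i : ℕ) (fun w => ψ 1 w * g j w) z).det
      = ψ 1 z ^ (m + 1) * (Matrix.of fun i j : Fin (m + 1) =>
          iteratedDeriv (i : ℕ) (g j) z).det :=
    det_mul_col hI hz hFsm (m + 1) g hgsm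
  have e5 : (Matrix.of fun i j : Fin (m + 1) =>
        iteratedDeriv (i : ℕ) (fun w => ψ 1 w * g j w) z).det = Wr (m + 1) ψ z := by
    unfold Wr
    congr 1
    ext i j
    simp only [Matrix.of_apply]
    refine (evEq hI hz ?_).iteratedDeriv_eq _
    intro w hw
    induction j using Fin.cases with
    | zero => simp [hg]
    | succ j' =>
        have h0 := hne w hw
        have hval : ((j'.succ : ℕ) + 1) = (j' : ℕ) + 2 := by simp [Fin.val_succ]
        show ψ 1 w * u ((j' : ℕ) + 2) w = ψ ((j'.succ : ℕ) + 1) w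
        rw [hval]
        show ψ 1 w * (ψ ((j' : ℕ) + 2) w / ψ 1 w) = ψ ((j' : ℕ) + 2) w
        field_simp
  rw [e1, e2, ← e3, ← e5, e4]
  ring


/-- The main bilinear identities, by induction on the chain length. -/
lemma main (k : ℕ) : ∀ (I : Set ℝ), IsOpen I → ∀ (μ : ℝ) (V0 : ℝ → ℝ) (ψ : ℕ → ℝ → ℝ),
    ContDiffOn ℝ ∞ V0 I → ψ 0 = (fun _ => 0) →
    (∀ i, 1 ≤ i → i ≤ k + 1 → ContDiffOn ℝ ∞ (ψ i) I) →
    (∀ i, 1 ≤ i → i ≤ k + 1 → ∀ z ∈ I,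
      deriv (deriv (ψ i)) z + (V0 z + μ) * ψ i z = ψ (i - 1) z) →
    ∀ z ∈ I,
      (deriv (deriv (Wr (k + 1) ψ)) z * Wr k ψ z + Wr (k + 1) ψ z * deriv (deriv (Wr k ψ)) z
        - 2 * deriv (Wr (k + 1) ψ) z * deriv (Wr k ψ) z
        + (V0 z + μ) * Wr (k + 1) ψ z * Wr k ψ z = 0)
      ∧ (∀ m, k = m + 1 →
          deriv (Wr (k + 1) ψ) z * Wr m ψ z - Wr (k + 1) ψ z * deriv (Wr m ψ) z
            = Wr (m + 1) ψ z ^ 2) := by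
  induction k with
  | zero =>
      intro I hI μ V0 ψ hV0 hψ0 hψsm hchain z hz
      constructor
      · rw [Wr_one, Wr_zero]
        simp only [deriv_const']
        have h3 := hchain 1 le_rfl le_rfl z hz
        rw [hψ0] at h3
        simp only [] at h3
        simp
        linarith [h3]
      · intro m hm; omega
  | succ k IH =>
      intro I hI μ V0 ψ hV0 hψ0 hψsm hchain z hz
      -- notation
      set U : Set ℝ := I ∩ {w | ψ 1 w ≠ 0} with hUdef
      have hFsm : ContDiffOn ℝ ∞ (ψ 1) I := hψsm 1 le_rfl (by omega)
      have hU : IsOpen U := by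
        have hUeq : U = I ∩ (ψ 1) ⁻¹' ({0}ᶜ) := by
          rw [hUdef]
          ext w
          simp [Set.mem_setOf_eq]
        rw [hUeq]
        exact hFsm.continuousOn.isOpen_inter_preimage hI (isOpen_compl_singleton)
      have hUI : U ⊆ I := fun w hw => hw.1
      have hFneU : ∀ w ∈ U, ψ 1 w ≠ 0 := fun w hw => hw.2
      set φ : ℕ → ℝ → ℝ := fun j w =>
        (ψ 1 w * deriv (ψ (j + 1)) w - deriv (ψ 1) w * ψ (j + 1) w) / ψ 1 w with hφdef
      set Vt : ℝ → ℝ := fun w =>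
        V0 w + 2 * (deriv (deriv (ψ 1)) w * ψ 1 w - (deriv (ψ 1) w) ^ 2) / ψ 1 w ^ 2 with hVtdef
      have hφ0 : φ 0 = fun _ => 0 := by
        funext w
        simp only [hφdef, zero_add]
        rw [mul_comm (ψ 1 w) (deriv (ψ 1) w), sub_self, zero_div]
      have hφsm : ∀ i, 1 ≤ i → i ≤ k + 1 → ContDiffOn ℝ ∞ (φ i) U := by
        intro i h1 h2
        have hg : ContDiffOn ℝ ∞ (ψ (i + 1)) I := hψsm (i + 1) (by omega) (by omega)
        exact (((hFsm.mono hUI).mul ((sm_deriv hI hg).mono hUI)).sub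
          (((sm_deriv hI hFsm).mono hUI).mul (hg.mono hUI))).div (hFsm.mono hUI) hFneU
      have hVt : ContDiffOn ℝ ∞ Vt U := by
        apply (hV0.mono hUI).add
        apply ContDiffOn.div _ ((hFsm.mono hUI).pow 2)
          (fun w hw => pow_ne_zero 2 (hFneU w hw))
        exact (contDiffOn_const.mul ((((sm_deriv hI (sm_deriv hI hFsm)).mono hUI).mul
          (hFsm.mono hUI)).sub (((sm_deriv hI hFsm).mono hUI).pow 2)))
      have hcF : ∀ t ∈ I, deriv (deriv (ψ 1)) t = -(V0 t + μ) * ψ 1 t := by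
        intro t ht
        have h4 := hchain 1 (by omega) (by omega) t ht
        rw [hψ0] at h4
        simp only [] at h4
        linarith
      have hφchain : ∀ i, 1 ≤ i → i ≤ k + 1 → ∀ w ∈ U,
          deriv (deriv (φ i)) w + (Vt w + μ) * φ i w = φ (i - 1) w := by
        intro i hi1 hik
        obtain ⟨i', rfl⟩ : ∃ i', i = i' + 1 := ⟨i - 1, by omega⟩
        have hidx : i' + 1 + 1 = i' + 2 := rfl
        have hgsm : ContDiffOn ℝ ∞ (ψ (i' + 2)) I := hψsm (i' + 2) (by omega) (by omega)
        have hhsm : ContDiffOn ℝ ∞ (ψ (i' + 1)) I := hψsm (i' + 1) (by omega) (by omega)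
        have hcg : ∀ t ∈ I, deriv (deriv (ψ (i' + 2))) t
            = ψ (i' + 1) t - (V0 t + μ) * ψ (i' + 2) t := by
          intro t ht
          have h5 := hchain (i' + 2) (by omega) (by omega) t ht
          have h6 : i' + 2 - 1 = i' + 1 := rfl
          rw [h6] at h5
          linarith
        have hD : ∀ t ∈ U, HasDerivAt (φ (i' + 1))
            (((ψ 1 t * deriv (deriv (ψ (i' + 2))) t - deriv (deriv (ψ 1)) t * ψ (i' + 2) t) * ψ 1 t
              - (ψ 1 t * deriv (ψ (i' + 2)) t - deriv (ψ 1) t * ψ (i' + 2) t) * deriv (ψ 1) t)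
                / ψ 1 t ^ 2) t := by
          intro t ht
          have htI := hUI ht
          have h1 : HasDerivAt (fun s => ψ 1 s * deriv (ψ (i' + 2)) s - deriv (ψ 1) s * ψ (i' + 2) s)
              (deriv (ψ 1) t * deriv (ψ (i' + 2)) t + ψ 1 t * deriv (deriv (ψ (i' + 2))) t
                - (deriv (deriv (ψ 1)) t * ψ (i' + 2) t + deriv (ψ 1) t * deriv (ψ (i' + 2)) t)) t :=
            (((da hI hFsm htI).hasDerivAt.mul (da_deriv hI hgsm htI).hasDerivAt).sub
              ((da_deriv hI hFsm htI).hasDerivAt.mul (da hI hgsm htI).hasDerivAt))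
          have h2 : HasDerivAt (fun s => (ψ 1 s * deriv (ψ (i' + 2)) s - deriv (ψ 1) s * ψ (i' + 2) s) / ψ 1 s) _ t :=
            h1.div (da hI hFsm htI).hasDerivAt (hFneU t ht)
          convert h2 using 1
          ring
        have h1 : ∀ t ∈ U, deriv (φ (i' + 1)) t
            = ψ (i' + 1) t - φ (i' + 1) t * deriv (ψ 1) t / ψ 1 t := by
          intro t ht
          have htI := hUI ht
          have h0 := hFneU t ht
          rw [(hD t ht).deriv, hcg t htI, hcF t htI]
          simp only [hφdef, hidx]
          field_simp
          ring
        intro w hw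
        have hwI := hUI hw
        have h0 := hFneU w hw
        have h2 : deriv (deriv (φ (i' + 1))) w
            = deriv (fun t => ψ (i' + 1) t - φ (i' + 1) t * deriv (ψ 1) t / ψ 1 t) w :=
          (evEq hU hw h1).deriv_eq
        have h3 : HasDerivAt (fun t => ψ (i' + 1) t - φ (i' + 1) t * deriv (ψ 1) t / ψ 1 t)
            (deriv (ψ (i' + 1)) w -
              ((deriv (φ (i' + 1)) w * deriv (ψ 1) w + φ (i' + 1) w * deriv (deriv (ψ 1)) w) * ψ 1 w
                - φ (i' + 1) w * deriv (ψ 1) w * deriv (ψ 1) w) / ψ 1 w ^ 2) w := by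
          have hφda : HasDerivAt (φ (i' + 1)) (deriv (φ (i' + 1)) w) w :=
            (hD w hw).differentiableAt.hasDerivAt
          exact (da hI hhsm hwI).hasDerivAt.sub
            ((hφda.mul (da_deriv hI hFsm hwI).hasDerivAt).div (da hI hFsm hwI).hasDerivAt h0)
        rw [h2, h3.deriv, h1 w hw]
        simp only [hφdef, hVtdef, hidx, Nat.add_sub_cancel]
        rw [hcF w hwI]
        field_simp
        ring
      -- reduction identities
      have hred : ∀ m, m ≤ k + 1 → ∀ w ∈ U, Wr m φ w * ψ 1 w = Wr (m + 1) ψ w := by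
        intro m hm
        exact reduction hU ψ m
          (fun j h1 h2 => (hψsm j h1 (by omega)).mono hUI) hFneU
      have hP : ∀ m, m ≤ k + 1 → ∀ w ∈ U, Wr m φ w = Wr (m + 1) ψ w / ψ 1 w := by
        intro m hm w hw
        exact (eq_div_iff (hFneU w hw)).mpr (hred m hm w hw)
      have hWsm : ∀ m, m ≤ k + 2 → ContDiffOn ℝ ∞ (Wr m ψ) I := by
        intro m hm
        exact sm_Wr hI m ψ (fun j h1 h2 => hψsm j h1 (by omega))
      have hd : ∀ m, m ≤ k + 1 → ∀ w ∈ U, deriv (Wr m φ) w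
          = (deriv (Wr (m + 1) ψ) w * ψ 1 w - Wr (m + 1) ψ w * deriv (ψ 1) w) / ψ 1 w ^ 2 := by
        intro m hm
        exact quot_deriv hU ((hWsm (m + 1) (by omega)).mono hUI) (hFsm.mono hUI) hFneU (hP m hm)
      have hdd : ∀ m, m ≤ k + 1 → ∀ w ∈ U, deriv (deriv (Wr m φ)) w
          = ((deriv (deriv (Wr (m + 1) ψ)) w * ψ 1 w - Wr (m + 1) ψ w * deriv (deriv (ψ 1)) w) * ψ 1 w
            - (deriv (Wr (m + 1) ψ) w * ψ 1 w - Wr (m + 1) ψ w * deriv (ψ 1) w) * (2 * deriv (ψ 1) w))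
              / ψ 1 w ^ 3 := by
        intro m hm
        exact quot_dd hU ((hWsm (m + 1) (by omega)).mono hUI) (hFsm.mono hUI) hFneU (hP m hm)
      have hIH := IH U hU μ Vt φ hVt hφ0 hφsm hφchain
      constructor
      · -- the Q identity at level k+1, by density
        refine ext_zero (F := ψ 1) (P := fun w =>
          deriv (deriv (Wr (k + 1 + 1) ψ)) w * Wr (k + 1) ψ w
            + Wr (k + 1 + 1) ψ w * deriv (deriv (Wr (k + 1) ψ)) w
            - 2 * deriv (Wr (k + 1 + 1) ψ) w * deriv (Wr (k + 1) ψ) w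
            + (V0 w + μ) * Wr (k + 1 + 1) ψ w * Wr (k + 1) ψ w) hI ?_ ?_ ?_ z hz
        · -- continuity
          have cA := hWsm (k + 2) (by omega)
          have cB := hWsm (k + 1) (by omega)
          exact ((((sm_deriv hI (sm_deriv hI cA)).continuousOn.mul cB.continuousOn).add
            (cA.continuousOn.mul (sm_deriv hI (sm_deriv hI cB)).continuousOn)).sub
            ((continuousOn_const.mul (sm_deriv hI cA).continuousOn).mul
              (sm_deriv hI cB).continuousOn)).add
            (((hV0.continuousOn.add continuousOn_const).mul cA.continuousOn).mul cB.continuousOn)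
        · -- on U
          intro w hwI hFw
          have hwU : w ∈ U := ⟨hwI, hFw⟩
          have hQ := (hIH w hwU).1
          rw [hdd (k + 1) le_rfl w hwU, hdd k (by omega) w hwU,
            hd (k + 1) le_rfl w hwU, hd k (by omega) w hwU,
            hP (k + 1) le_rfl w hwU, hP k (by omega) w hwU] at hQ
          simp only [hVtdef] at hQ
          field_simp at hQ
          have h2 : (deriv (deriv (Wr (k + 1 + 1) ψ)) w * Wr (k + 1) ψ w
              + Wr (k + 1 + 1) ψ w * deriv (deriv (Wr (k + 1) ψ)) w
              - 2 * deriv (Wr (k + 1 + 1) ψ) w * deriv (Wr (k + 1) ψ) w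
              + (V0 w + μ) * Wr (k + 1 + 1) ψ w * Wr (k + 1) ψ w) * ψ 1 w ^ 14 = 0 := by
            linear_combination ψ 1 w ^ 12 * hQ
          rcases mul_eq_zero.mp h2 with h | h
          · exact h
          · exact absurd h (pow_ne_zero 14 hFw)
        · -- near zeros of ψ 1
          intro w hwI hev
          rw [eventually_nhds_iff] at hev
          obtain ⟨O, hO0, hOopen, hwO⟩ := hev
          have v1 := wr_vanish hOopen ψ hO0 (k + 1) (by omega) w hwO
          have v1d := wr_vanish_d hOopen ψ hO0 (k + 1) (by omega) w hwO
          have v2 := wr_vanish hOopen ψ hO0 (k + 1 + 1) (by omega) w hwO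
          simp only [v1, v1d, v2]
          ring
      · -- the R identity at level k+1
        intro m hm
        obtain rfl : m = k := by omega
        rcases Nat.eq_zero_or_pos m with hk0 | hkpos
        · subst hk0
          simp only [show (0:ℕ) + 1 + 1 = 2 from rfl, show (0:ℕ) + 1 = 1 from rfl]
          rw [Wr_zero, Wr_two, Wr_one]
          simp only [deriv_const']
          have hA : HasDerivAt (fun u => ψ 1 u * deriv (ψ 2) u - deriv (ψ 1) u * ψ 2 u)
              (deriv (ψ 1) z * deriv (ψ 2) z + ψ 1 z * deriv (deriv (ψ 2)) z
                - (deriv (deriv (ψ 1)) z * ψ 2 z + deriv (ψ 1) z * deriv (ψ 2) z)) z :=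
            (((da hI hFsm hz).hasDerivAt.mul
                (da_deriv hI (hψsm 2 (by omega) (by omega)) hz).hasDerivAt).sub
              ((da_deriv hI hFsm hz).hasDerivAt.mul
                (da hI (hψsm 2 (by omega) (by omega)) hz).hasDerivAt))
          rw [hA.deriv]
          have hc2 := hchain 2 (by omega) (by omega) z hz
          have h6 : (2:ℕ) - 1 = 1 := rfl
          rw [h6] at hc2
          have hcF' := hcF z hz
          linear_combination ψ 1 z * hc2 - ψ 2 z * hcF'
        · obtain ⟨k', rfl⟩ : ∃ k', m = k' + 1 := ⟨m - 1, by omega⟩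
          have hsub : ∀ w ∈ I,
              deriv (Wr (k' + 1 + 1 + 1) ψ) w * Wr (k' + 1) ψ w
                - Wr (k' + 1 + 1 + 1) ψ w * deriv (Wr (k' + 1) ψ) w
                - Wr (k' + 1 + 1) ψ w ^ 2 = 0 := by
            refine ext_zero (F := ψ 1) (P := fun w =>
              deriv (Wr (k' + 1 + 1 + 1) ψ) w * Wr (k' + 1) ψ w
                - Wr (k' + 1 + 1 + 1) ψ w * deriv (Wr (k' + 1) ψ) w
                - Wr (k' + 1 + 1) ψ w ^ 2) hI ?_ ?_ ?_
            · -- continuity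
              have cA := hWsm (k' + 1 + 1 + 1) (by omega)
              have cC := hWsm (k' + 1) (by omega)
              have cB := hWsm (k' + 1 + 1) (by omega)
              exact (((sm_deriv hI cA).continuousOn.mul cC.continuousOn).sub
                (cA.continuousOn.mul (sm_deriv hI cC).continuousOn)).sub
                (cB.continuousOn.pow 2)
            · intro w hwI hFw
              have hwU : w ∈ U := ⟨hwI, hFw⟩
              have hR := (hIH w hwU).2 k' rfl
              rw [hd (k' + 1 + 1) (by omega) w hwU, hd k' (by omega) w hwU,
                hP (k' + 1 + 1) (by omega) w hwU, hP k' (by omega) w hwU,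
                hP (k' + 1) (by omega) w hwU] at hR
              field_simp at hR
              have h2 : (deriv (Wr (k' + 1 + 1 + 1) ψ) w * Wr (k' + 1) ψ w
                  - Wr (k' + 1 + 1 + 1) ψ w * deriv (Wr (k' + 1) ψ) w) * ψ 1 w ^ 6
                  = Wr (k' + 1 + 1) ψ w ^ 2 * ψ 1 w ^ 6 := by
                linear_combination ψ 1 w ^ 5 * hR
              have h3 := mul_right_cancel₀ (pow_ne_zero 6 hFw) h2
              linarith [h3]
            · intro w hwI hev
              rw [eventually_nhds_iff] at hev
              obtain ⟨O, hO0, hOopen, hwO⟩ := hev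
              have v1 := wr_vanish hOopen ψ hO0 (k' + 1) (by omega) w hwO
              have v2 := wr_vanish hOopen ψ hO0 (k' + 1 + 1) (by omega) w hwO
              have v3 := wr_vanish hOopen ψ hO0 (k' + 1 + 1 + 1) (by omega) w hwO
              simp only [v1, v2, v3]
              ring
          linarith [hsub z hz]

end CDW


open CDW in
/-- Iterated confluent Darboux transformations via a Jordan chain: if
`ψ_i'' + (V_0 + μ)ψ_i = ψ_{i-1}` (with `ψ_0 = 0`) for `1 ≤ i ≤ n+1` on an open set `I`,
and `θ_k = Wr(ψ_1,…,ψ_k)`, then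
(i) the Burchnall–Chaundy relation `θ_{n+1}'θ_{n-1} - θ_{n+1}θ_{n-1}' = θ_n²` holds on `I`;
(ii) wherever `θ_n ≠ 0`, `φ_n = θ_{n+1}/θ_n` satisfies `φ_n'' + (V_n + μ)φ_n = 0` with
`V_n = V_0 + 2(θ_n''θ_n - (θ_n')²)/θ_n²`;
(iii) wherever also `θ_{n-1} ≠ 0`, `θ_{n-1}/θ_n` satisfies the same equation and
`(θ_{n-1}/θ_n)·φ_n' - (θ_{n-1}/θ_n)'·φ_n = 1`. -/
theorem confluent_darboux_wronskian (I : Set ℝ) (hI : IsOpen I) (μ : ℝ)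
    (V0 : ℝ → ℝ) (hV0 : ContDiffOn ℝ (⊤ : ℕ∞) V0 I)
    (n : ℕ) (hn : 1 ≤ n) (ψ : ℕ → ℝ → ℝ) (hψ0 : ψ 0 = fun _ => 0)
    (hψsm : ∀ i : ℕ, 1 ≤ i → i ≤ n + 1 → ContDiffOn ℝ (⊤ : ℕ∞) (ψ i) I)
    (hchain : ∀ i : ℕ, 1 ≤ i → i ≤ n + 1 → ∀ z ∈ I,
      deriv (deriv (ψ i)) z + (V0 z + μ) * ψ i z = ψ (i - 1) z)
    (θ : ℕ → ℝ → ℝ)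
    (hθ : ∀ k : ℕ, ∀ z : ℝ, θ k z = wronskianN k (fun j => ψ ((j : ℕ) + 1)) z) :
    ∀ z ∈ I,
      (deriv (θ (n + 1)) z * θ (n - 1) z - θ (n + 1) z * deriv (θ (n - 1)) z
        = θ n z ^ 2) ∧
      (θ n z ≠ 0 →
        deriv (deriv (fun w => θ (n + 1) w / θ n w)) z
          + ((V0 z + 2 * (deriv (deriv (θ n)) z * θ n z - (deriv (θ n) z) ^ 2) / θ n z ^ 2)
              + μ) * (θ (n + 1) z / θ n z) = 0) ∧
      (θ (n - 1) z ≠ 0 → θ n z ≠ 0 →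
        (deriv (deriv (fun w => θ (n - 1) w / θ n w)) z
          + ((V0 z + 2 * (deriv (deriv (θ n)) z * θ n z - (deriv (θ n) z) ^ 2) / θ n z ^ 2)
              + μ) * (θ (n - 1) z / θ n z) = 0) ∧
        ((θ (n - 1) z / θ n z) * deriv (fun w => θ (n + 1) w / θ n w) z
          - deriv (fun w => θ (n - 1) w / θ n w) z * (θ (n + 1) z / θ n z) = 1)) := by
  intro z hz
  have hθW : ∀ k, θ k = Wr k ψ := fun k => funext fun w => (hθ k w).trans (wr_eq k ψ w)
  obtain ⟨n', rfl⟩ : ∃ n', n = n' + 1 := ⟨n - 1, by omega⟩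
  have hV0' : ContDiffOn ℝ ∞ V0 I := hV0.of_le (by simp)
  have hψsm' : ∀ i, 1 ≤ i → i ≤ n' + 1 + 1 → ContDiffOn ℝ ∞ (ψ i) I :=
    fun i h1 h2 => (hψsm i h1 h2).of_le (by simp)
  have hmain2 := main (n' + 1) I hI μ V0 ψ hV0' hψ0 hψsm' hchain z hz
  have hmain1 := main n' I hI μ V0 ψ hV0' hψ0 (fun i h1 h2 => hψsm' i h1 (by omega))
    (fun i h1 h2 => hchain i h1 (by omega)) z hz
  have hQ2 := hmain2.1
  have hQ1 := hmain1.1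
  have hR := hmain2.2 n' rfl
  simp only [Nat.add_sub_cancel]
  rw [hθW (n' + 1 + 1), hθW (n' + 1), hθW n']
  -- smoothness of the Wronskians
  have hsmA : ContDiffOn ℝ ∞ (Wr (n' + 1 + 1) ψ) I :=
    sm_Wr hI _ ψ (fun j h1 h2 => hψsm' j h1 (by omega))
  have hsmB : ContDiffOn ℝ ∞ (Wr (n' + 1) ψ) I :=
    sm_Wr hI _ ψ (fun j h1 h2 => hψsm' j h1 (by omega))
  have hsmC : ContDiffOn ℝ ∞ (Wr n' ψ) I :=
    sm_Wr hI _ ψ (fun j h1 h2 => hψsm' j h1 (by omega))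
  set V' : Set ℝ := I ∩ {w | Wr (n' + 1) ψ w ≠ 0} with hV'def
  have hV'open : IsOpen V' := by
    have hVeq : V' = I ∩ (Wr (n' + 1) ψ) ⁻¹' ({0}ᶜ) := by
      rw [hV'def]
      ext w
      simp [Set.mem_setOf_eq]
    rw [hVeq]
    exact hsmB.continuousOn.isOpen_inter_preimage hI (isOpen_compl_singleton)
  have hV'I : V' ⊆ I := fun w hw => hw.1
  have hBneV : ∀ w ∈ V', Wr (n' + 1) ψ w ≠ 0 := fun w hw => hw.2
  refine ⟨hR, ?_, ?_⟩
  · intro hBne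
    have hzV' : z ∈ V' := ⟨hz, hBne⟩
    have hddq := quot_dd hV'open (P := fun w => Wr (n' + 1 + 1) ψ w / Wr (n' + 1) ψ w)
      (hsmA.mono hV'I) (hsmB.mono hV'I) hBneV (fun w _ => rfl)
    rw [hddq z hzV']
    field_simp
    linear_combination (Wr (n' + 1) ψ z) * hQ2
  · intro hCne hBne
    have hzV' : z ∈ V' := ⟨hz, hBne⟩
    have hddq' := quot_dd hV'open (P := fun w => Wr n' ψ w / Wr (n' + 1) ψ w)
      (hsmC.mono hV'I) (hsmB.mono hV'I) hBneV (fun w _ => rfl)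
    have hdq := quot_deriv hV'open (P := fun w => Wr (n' + 1 + 1) ψ w / Wr (n' + 1) ψ w)
      (hsmA.mono hV'I) (hsmB.mono hV'I) hBneV (fun w _ => rfl)
    have hdq' := quot_deriv hV'open (P := fun w => Wr n' ψ w / Wr (n' + 1) ψ w)
      (hsmC.mono hV'I) (hsmB.mono hV'I) hBneV (fun w _ => rfl)
    constructor
    · rw [hddq' z hzV']
      field_simp
      linear_combination (Wr (n' + 1) ψ z) * hQ1
    · rw [hdq z hzV', hdq' z hzV']
      field_simp
      linear_combination (Wr (n' + 1) ψ z) * hR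
end

section
/- Let β ∈ ℝ, let I ⊆ ℝ∖{0} be an open interval, and let P : I → ℝ be smooth, nowhere vanishing, and satisfy the Painlevé III (D7) equation with parameter β on I. For ε ∈ {+1, −1}, define P_ε(z) = z(1 − ε P′(z))/(2 P(z)²) + (ε + β)/(2 P(z)) (the Bäcklund transformation). Then at every z ∈ I with P_ε(z) ≠ 0, P_ε satisfies the Painlevé III (D7) equation with parameter β + 2ε: P_ε″ = (P_ε′)²/P_ε − P_ε′/z + (2 P_ε² − (β + 2ε))/z − 1/P_ε. -/
/-- The Painlevé III (D7) equation with parameter `β`, at a point `z`: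
`P'' = (P')²/P - P'/z + (2P² - β)/z - 1/P`. -/
def IsP3D7 (β : ℝ) (P : ℝ → ℝ) (z : ℝ) : Prop :=
  deriv (deriv P) z
    = (deriv P z) ^ 2 / P z - deriv P z / z + (2 * P z ^ 2 - β) / z - 1 / P z

set_option maxHeartbeats 1000000

/-- The Bäcklund transformation for Painlevé III (D7): if `P` is a smooth, nowhere
vanishing solution with parameter `β` on an open interval `I ⊆ ℝ∖{0}` and `ε = ±1`,
then `P_ε = z(1 - εP')/(2P²) + (ε + β)/(2P)` satisfies the equation with parameter
`β + 2ε` wherever `P_ε ≠ 0`. -/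
theorem painleveIIID7_backlund (β : ℝ) (I : Set ℝ)
    (hI : IsOpen I) (hIint : ∃ a b : ℝ, I = Set.Ioo a b) (hI0 : (0 : ℝ) ∉ I)
    (P : ℝ → ℝ) (hsm : ContDiffOn ℝ (⊤ : ℕ∞) P I) (hne : ∀ z ∈ I, P z ≠ 0)
    (hP : ∀ z ∈ I, IsP3D7 β P z)
    (ε : ℝ) (hε : ε = 1 ∨ ε = -1)
    (Pε : ℝ → ℝ)
    (hPε : ∀ z : ℝ, Pε z = z * (1 - ε * deriv P z) / (2 * P z ^ 2) + (ε + β) / (2 * P z)) :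
    ∀ z ∈ I, Pε z ≠ 0 → IsP3D7 (β + 2 * ε) Pε z := by
  have hp1 : ∀ x ∈ I, HasDerivAt P (deriv P x) x := fun x hx =>
    ((hsm.differentiableOn (by simp)).differentiableAt (hI.mem_nhds hx)).hasDerivAt
  have hp2 : ∀ x ∈ I, HasDerivAt (deriv P) (deriv (deriv P) x) x := fun x hx =>
    (((hsm.deriv_of_isOpen hI (m := 1) (by exact WithTop.coe_le_coe.mpr (le_top : ((1 + 1 : ℕ) : ℕ∞) ≤ ⊤))).differentiableOn one_ne_zero).differentiableAt
      (hI.mem_nhds hx)).hasDerivAt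
  -- first derivative of Pε on I, with P'' eliminated using the ODE
  have key : ∀ x ∈ I, HasDerivAt Pε
      ((ε * x * deriv P x ^ 2 - ((ε + β) * P x + 2 * x) * deriv P x
        + P x + ε * β * P x - 2 * ε * P x ^ 3 + ε * x) / (2 * P x ^ 3)) x := by
    intro x hx
    have hx0 : x ≠ 0 := fun h => hI0 (h ▸ hx)
    have hpx : P x ≠ 0 := hne x hx
    have hode := hP x hx
    unfold IsP3D7 at hode
    have hden1 : (2 : ℝ) * P x ^ 2 ≠ 0 := mul_ne_zero two_ne_zero (pow_ne_zero _ hpx)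
    have hden2 : (2 : ℝ) * P x ≠ 0 := mul_ne_zero two_ne_zero hpx
    have h1 := ((hasDerivAt_id' x).mul (((hp2 x hx).const_mul ε).const_sub 1)).div
        (((hp1 x hx).pow 2).const_mul 2) hden1
    have h2 := (hasDerivAt_const x (ε + β)).div ((hp1 x hx).const_mul 2) hden2
    have h3 := h1.add h2
    rw [funext hPε]
    refine h3.congr_deriv ?_
    simp only [Pi.mul_apply, Pi.pow_apply]
    rw [hode]
    field_simp
    ring
  intro z hz hQ
  have hz0 : z ≠ 0 := fun h => hI0 (h ▸ hz)
  have hpz : P z ≠ 0 := hne z hz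
  have hode := hP z hz
  unfold IsP3D7 at hode
  have hd1 : deriv Pε z
      = (ε * z * deriv P z ^ 2 - ((ε + β) * P z + 2 * z) * deriv P z
        + P z + ε * β * P z - 2 * ε * P z ^ 3 + ε * z) / (2 * P z ^ 3) :=
    (key z hz).deriv
  have hev : deriv Pε =ᶠ[nhds z] (fun x =>
      (ε * x * deriv P x ^ 2 - ((ε + β) * P x + 2 * x) * deriv P x
        + P x + ε * β * P x - 2 * ε * P x ^ 3 + ε * x) / (2 * P x ^ 3)) :=
    Filter.eventuallyEq_of_mem (hI.mem_nhds hz) (fun x hx => (key x hx).deriv)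
  -- second derivative of Pε at z
  have hden3 : (2 : ℝ) * P z ^ 3 ≠ 0 := mul_ne_zero two_ne_zero (pow_ne_zero _ hpz)
  have hGd : HasDerivAt (fun x =>
      (ε * x * deriv P x ^ 2 - ((ε + β) * P x + 2 * x) * deriv P x
        + P x + ε * β * P x - 2 * ε * P x ^ 3 + ε * x) / (2 * P x ^ 3))
      (((ε * deriv P z ^ 2 + 2 * ε * z * deriv P z * deriv (deriv P) z
          - ((ε + β) * deriv P z + 2) * deriv P z
          - ((ε + β) * P z + 2 * z) * deriv (deriv P) z
          + deriv P z + ε * β * deriv P z - 6 * ε * P z ^ 2 * deriv P z + ε) * P z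
        - 3 * (ε * z * deriv P z ^ 2 - ((ε + β) * P z + 2 * z) * deriv P z
          + P z + ε * β * P z - 2 * ε * P z ^ 3 + ε * z) * deriv P z)
        / (2 * P z ^ 4)) z := by
    have t1 := ((hasDerivAt_id' z).const_mul ε).mul ((hp2 z hz).pow 2)
    have t2 := (((hp1 z hz).const_mul (ε + β)).add ((hasDerivAt_id' z).const_mul 2)).mul
      (hp2 z hz)
    have t4 := (hp1 z hz).const_mul (ε * β)
    have t5 := ((hp1 z hz).pow 3).const_mul (2 * ε)
    have t6 := (hasDerivAt_id' z).const_mul ε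
    have num := ((((t1.sub t2).add (hp1 z hz)).add t4).sub t5).add t6
    have h := num.div (((hp1 z hz).pow 3).const_mul 2) hden3
    refine h.congr_deriv ?_
    simp only [Pi.mul_apply, Pi.pow_apply, Pi.add_apply, Pi.sub_apply]
    field_simp
    ring
  have hd2 : deriv (deriv Pε) z
      = ((ε * deriv P z ^ 2 + 2 * ε * z * deriv P z * deriv (deriv P) z
          - ((ε + β) * deriv P z + 2) * deriv P z
          - ((ε + β) * P z + 2 * z) * deriv (deriv P) z
          + deriv P z + ε * β * deriv P z - 6 * ε * P z ^ 2 * deriv P z + ε) * P z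
        - 3 * (ε * z * deriv P z ^ 2 - ((ε + β) * P z + 2 * z) * deriv P z
          + P z + ε * β * P z - 2 * ε * P z ^ 3 + ε * z) * deriv P z)
        / (2 * P z ^ 4) := by
    rw [hev.deriv_eq, hGd.deriv]
  -- rewrite Pε z with a single fraction
  have hq : Pε z = (z * (1 - ε * deriv P z) + (ε + β) * P z) / (2 * P z ^ 2) := by
    rw [hPε]; field_simp
  have hn : z * (1 - ε * deriv P z) + (ε + β) * P z ≠ 0 := by
    intro h
    exact hQ (by rw [hq, h, zero_div])
  unfold IsP3D7
  rw [hd2, hd1, hq, hode]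
  set Nq := z * (1 - ε * deriv P z) + (ε + β) * P z with hNq_def
  rcases hε with rfl | rfl <;> (field_simp [hn, hpz, hz0]; rw [hNq_def]; ring)
end

section
/- Let β ∈ ℝ, let I ⊆ ℝ∖{0} be an open interval, and let P : I → ℝ be smooth, nowhere vanishing, and satisfy the Painlevé III (D7) equation with parameter β on I. For ε ∈ {+1, −1}, define y_ε(z) = (P′(z) − ε)/(2 P(z)) and P_ε(z) = z(1 − ε P′(z))/(2 P(z)²) + (ε + β)/(2 P(z)). Then for all z ∈ I: P_ε(z) = P(z) − d/dz ( z · y_ε(z) ). -/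
/-- Alternative form of the Bäcklund transformation for Painlevé III (D7):
with `y_ε = (P' - ε)/(2P)`, the transformed solution satisfies
`P_ε = P - d/dz(z·y_ε)` on `I`. -/
theorem painleveIIID7_backlund_alt (β : ℝ) (I : Set ℝ)
    (hI : IsOpen I) (hIint : ∃ a b : ℝ, I = Set.Ioo a b) (hI0 : (0 : ℝ) ∉ I)
    (P : ℝ → ℝ) (hsm : ContDiffOn ℝ (⊤ : ℕ∞) P I) (hne : ∀ z ∈ I, P z ≠ 0)
    (hP : ∀ z ∈ I, IsP3D7 β P z)
    (ε : ℝ) (hε : ε = 1 ∨ ε = -1)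
    (yε : ℝ → ℝ) (hy : ∀ z : ℝ, yε z = (deriv P z - ε) / (2 * P z))
    (Pε : ℝ → ℝ)
    (hPε : ∀ z : ℝ, Pε z = z * (1 - ε * deriv P z) / (2 * P z ^ 2) + (ε + β) / (2 * P z)) :
    ∀ z ∈ I, Pε z = P z - deriv (fun w => w * yε w) z := by
  intro z hz
  have hz0 : z ≠ 0 := fun h => hI0 (h ▸ hz)
  have hPz : P z ≠ 0 := hne z hz
  have hmem : I ∈ nhds z := hI.mem_nhds hz
  have hc : ContDiffAt ℝ (⊤ : ℕ∞) P z := (hsm z hz).contDiffAt hmem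
  have hd1 : DifferentiableAt ℝ P z := hc.differentiableAt (by simp)
  have hP1 : HasDerivAt P (deriv P z) z := hd1.hasDerivAt
  -- deriv P is differentiable at z
  have hcI : ContDiffOn ℝ (⊤ : ℕ∞) (deriv P) I := hsm.deriv_of_isOpen hI (by simp)
  have hd2 : DifferentiableAt ℝ (deriv P) z :=
    ((hcI z hz).contDiffAt hmem).differentiableAt (by simp)
  have hP2 : HasDerivAt (deriv P) (deriv (deriv P) z) z := hd2.hasDerivAt
  -- derivative of yε
  have hyfun : yε = fun w => (deriv P w - ε) / (2 * P w) := funext hy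
  have hy' : HasDerivAt yε
      ((deriv (deriv P) z * (2 * P z) - (deriv P z - ε) * (2 * deriv P z)) / (2 * P z) ^ 2) z := by
    rw [hyfun]
    exact (hP2.sub_const ε).div (hP1.const_mul 2) (by simpa using hPz)
  have hmul : HasDerivAt (fun w => w * yε w)
      (1 * yε z + z * ((deriv (deriv P) z * (2 * P z) - (deriv P z - ε) * (2 * deriv P z)) / (2 * P z) ^ 2)) z :=
    (hasDerivAt_id z).mul hy'
  rw [hmul.deriv, hy, hPε, hP z hz]
  field_simp
  ring
end

section
/- Let β ∈ ℝ, let I ⊆ ℝ∖{0} be an open interval, and let P : I → ℝ be smooth, nowhere vanishing, and satisfy the Painlevé III (D7) equation with parameter β on I. For ε ∈ {+1, −1}, define y_ε(z) = (P′(z) − ε)/(2 P(z)), P_ε(z) = z(1 − ε P′(z))/(2 P(z)²) + (ε + β)/(2 P(z)), and V(z) = −(P′(z)² − 1)/(4 P(z)²) + (P′(z) − 2 P(z)² + β)/(2 z P(z)). Then: (i) V = −y_ε′ − y_ε² on I for both ε = +1 and ε = −1; (ii) at every z ∈ I with P_ε(z) ≠ 0, defining V_ε(z) = −(P_ε′(z)²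 − 1)/(4 P_ε(z)²) + (P_ε′(z) − 2 P_ε(z)² + (β + 2ε))/(2 z P_ε(z)), one has V_ε(z) = V(z) + 2 y_ε′(z). -/
set_option maxHeartbeats 4000000 in
/-- The Bäcklund transformation of Painlevé III (D7) as a confluent Darboux
transformation: with `y_e = (P' - e)/(2P)` and the Schrodinger potential
`V = -((P')² - 1)/(4P²) + (P' - 2P² + β)/(2zP)`:
(i) `V = -y_ε' - y_ε²` on `I` (for both `ε = ±1`), and
(ii) the potential `V_ε` associated to `P_ε` with parameter `β + 2ε` satisfies
`V_ε = V + 2y_ε'` wherever `P_ε ≠ 0`. -/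
theorem painleveIIID7_darboux (β : ℝ) (I : Set ℝ)
    (hI : IsOpen I) (hIint : ∃ a b : ℝ, I = Set.Ioo a b) (hI0 : (0 : ℝ) ∉ I)
    (P : ℝ → ℝ) (hsm : ContDiffOn ℝ (⊤ : ℕ∞) P I) (hne : ∀ z ∈ I, P z ≠ 0)
    (hP : ∀ z ∈ I, IsP3D7 β P z)
    (ε : ℝ) (hε : ε = 1 ∨ ε = -1)
    (yε : ℝ → ℝ) (hy : ∀ z : ℝ, yε z = (deriv P z - ε) / (2 * P z))
    (Pε : ℝ → ℝ)
    (hPε : ∀ z : ℝ, Pε z = z * (1 - ε * deriv P z) / (2 * P z ^ 2) + (ε + β) / (2 * P z))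
    (V : ℝ → ℝ)
    (hV : ∀ z : ℝ, V z = -((deriv P z) ^ 2 - 1) / (4 * P z ^ 2)
        + (deriv P z - 2 * P z ^ 2 + β) / (2 * z * P z))
    (Vε : ℝ → ℝ)
    (hVε : ∀ z : ℝ, Vε z = -((deriv Pε z) ^ 2 - 1) / (4 * Pε z ^ 2)
        + (deriv Pε z - 2 * Pε z ^ 2 + (β + 2 * ε)) / (2 * z * Pε z)) :
    (∀ z ∈ I, V z = -deriv yε z - (yε z) ^ 2) ∧
    (∀ z ∈ I, Pε z ≠ 0 → Vε z = V z + 2 * deriv yε z) := by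
  -- smoothness of `deriv P` on `I`
  have hsm' : ContDiffOn ℝ (⊤ : ℕ∞) (deriv P) I := (hsm.deriv_of_isOpen hI (by simp))
  -- basic facts at a point `z ∈ I`
  have key : ∀ z ∈ I, z ≠ 0 ∧ P z ≠ 0 ∧
      HasDerivAt P (deriv P z) z ∧ HasDerivAt (deriv P) (deriv (deriv P) z) z := by
    intro z hz
    refine ⟨fun h => hI0 (h ▸ hz), hne z hz, ?_, ?_⟩
    · exact ((hsm.differentiableOn (by simp) z hz).differentiableAt
        (hI.mem_nhds hz)).hasDerivAt
    · exact ((hsm'.differentiableOn (by simp) z hz).differentiableAt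
        (hI.mem_nhds hz)).hasDerivAt
  -- formula for `deriv yε`
  have hyfun : yε = fun z => (deriv P z - ε) / (2 * P z) := funext hy
  have hyderiv : ∀ z ∈ I,
      deriv yε z = (deriv (deriv P) z * (2 * P z) - (deriv P z - ε) * (2 * deriv P z))
        / (2 * P z) ^ 2 := by
    intro z hz
    obtain ⟨hz0, hp, hd1, hd2⟩ := key z hz
    have h2p : (2 : ℝ) * P z ≠ 0 := by simpa using hp
    have : HasDerivAt yε
        ((deriv (deriv P) z * (2 * P z) - (deriv P z - ε) * (2 * deriv P z))
          / (2 * P z) ^ 2) z := by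
      rw [hyfun]
      exact (hd2.sub_const ε).div (hd1.const_mul 2) h2p
    exact this.deriv
  -- formula for `deriv Pε`
  have hPεfun : Pε = fun z =>
      z * (1 - ε * deriv P z) / (2 * P z ^ 2) + (ε + β) / (2 * P z) := funext hPε
  have hPderiv : ∀ z ∈ I,
      deriv Pε z =
        ((1 * (1 - ε * deriv P z) + z * -(ε * deriv (deriv P) z)) * (2 * P z ^ 2)
            - z * (1 - ε * deriv P z) * (2 * (↑2 * P z ^ 1 * deriv P z)))
          / (2 * P z ^ 2) ^ 2
        + (0 * (2 * P z) - (ε + β) * (2 * deriv P z)) / (2 * P z) ^ 2 := by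
    intro z hz
    obtain ⟨hz0, hp, hd1, hd2⟩ := key z hz
    have h2p : (2 : ℝ) * P z ≠ 0 := by simpa using hp
    have h2p2 : (2 : ℝ) * P z ^ 2 ≠ 0 := by positivity
    have hf1 : HasDerivAt (fun z => z * (1 - ε * deriv P z))
        (1 * (1 - ε * deriv P z) + z * -(ε * deriv (deriv P) z)) z :=
      (hasDerivAt_id z).mul ((hd2.const_mul ε).const_sub 1)
    have hg1 : HasDerivAt (fun z => 2 * P z ^ 2) (2 * (↑2 * P z ^ 1 * deriv P z)) z :=
      (hd1.pow 2).const_mul 2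
    have hf2 : HasDerivAt (fun z => (ε + β) / (2 * P z))
        ((0 * (2 * P z) - (ε + β) * (2 * deriv P z)) / (2 * P z) ^ 2) z :=
      (hasDerivAt_const z (ε + β)).div (hd1.const_mul 2) h2p
    have hD : HasDerivAt Pε
        (((1 * (1 - ε * deriv P z) + z * -(ε * deriv (deriv P) z)) * (2 * P z ^ 2)
            - z * (1 - ε * deriv P z) * (2 * (↑2 * P z ^ 1 * deriv P z)))
          / (2 * P z ^ 2) ^ 2
        + (0 * (2 * P z) - (ε + β) * (2 * deriv P z)) / (2 * P z) ^ 2) z := by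
      rw [hPεfun]; exact (hf1.div hg1 h2p2).add hf2
    exact hD.deriv
  constructor
  · intro z hz
    obtain ⟨hz0, hp, _, _⟩ := key z hz
    have hode := hP z hz
    rw [hV, hyderiv z hz, hy, hode]
    rcases hε with rfl | rfl <;> field_simp <;> ring
  · intro z hz hPne
    obtain ⟨hz0, hp, _, _⟩ := key z hz
    have hode := hP z hz
    have hPε' : Pε z = (z * (1 - ε * deriv P z) + (ε + β) * P z) / (2 * P z ^ 2) := by
      rw [hPε]; field_simp
    have hN : z * (1 - ε * deriv P z) + (ε + β) * P z ≠ 0 := by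
      intro h
      apply hPne
      rw [hPε', h, zero_div]
    have hs : 2 * P z ^ 2 * Pε z = z * (1 - ε * deriv P z) + (ε + β) * P z := by
      rw [hPε']; field_simp
    rw [hVε, hV, hyderiv z hz, hPderiv z hz, hode]
    rcases hε with rfl | rfl
    · rw [hPε']
      generalize hNd : z * (1 - 1 * deriv P z) + (1 + β) * P z = N at hN ⊢
      field_simp
      subst hNd
      ring
    · rw [hPε']
      generalize hNd : z * (1 - -1 * deriv P z) + (-1 + β) * P z = N at hN ⊢
      field_simp
      subst hNd
      ring
end

section
/- Let β ∈ ℝ, let I ⊆ ℝ∖{0} be an open interval, and let P : I → ℝ be smooth, nowhere vanishing, and satisfy the Painlevé III (D7) equation with parameter β on I. Define V(z) = −(P′(z)² − 1)/(4 P(z)²) + (P′(z) − 2 P(z)² + β)/(2 z P(z)) and η(z) = −P(z) − (z/2) V(z). Then η′(z) = V(z)/2 for all z ∈ I. -/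
/-- For a solution `P` of Painlevé III (D7) with associated Schrödinger potential
`V = -((P')² - 1)/(4P²) + (P' - 2P² + β)/(2zP)`, the quantity
`η = -P - (z/2)V` satisfies `η' = V/2` on `I`. -/
theorem painleveIIID7_eta_derivative (β : ℝ) (I : Set ℝ)
    (hI : IsOpen I) (hIint : ∃ a b : ℝ, I = Set.Ioo a b) (hI0 : (0 : ℝ) ∉ I)
    (P : ℝ → ℝ) (hsm : ContDiffOn ℝ (⊤ : ℕ∞) P I) (hne : ∀ z ∈ I, P z ≠ 0)
    (hP : ∀ z ∈ I, IsP3D7 β P z)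
    (V : ℝ → ℝ)
    (hV : ∀ z : ℝ, V z = -((deriv P z) ^ 2 - 1) / (4 * P z ^ 2)
        + (deriv P z - 2 * P z ^ 2 + β) / (2 * z * P z))
    (η : ℝ → ℝ) (hη : ∀ z : ℝ, η z = -P z - z / 2 * V z) :
    ∀ z ∈ I, deriv η z = V z / 2 := by
  intro z hz
  have hz0 : z ≠ 0 := fun h => hI0 (h ▸ hz)
  have hp : P z ≠ 0 := hne z hz
  have hmem := hI.mem_nhds hz
  have hcP : ContDiffAt ℝ (⊤ : ℕ∞) P z := hsm.contDiffAt hmem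
  have hcP' : ContDiffOn ℝ (⊤ : ℕ∞) (deriv P) I := by
    exact hsm.deriv_of_isOpen (m := (⊤ : ℕ∞)) hI (by simp)
  have hPd : HasDerivAt P (deriv P z) z :=
    (hcP.differentiableAt (by simp)).hasDerivAt
  have hPdd : HasDerivAt (deriv P) (deriv (deriv P) z) z :=
    (((hcP'.contDiffAt hmem).differentiableAt (by simp))).hasDerivAt
  set p := P z with hpdef
  set q := deriv P z with hqdef
  set r := deriv (deriv P) z with hrdef
  -- derivative of V
  have hden1 : 4 * P z ^ 2 ≠ 0 := by positivity
  have hden2 : 2 * z * P z ≠ 0 := by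
    simp [hz0, hp, hne z hz]
  have hnum1 : HasDerivAt (fun w => -((deriv P w) ^ 2 - 1)) (-(2 * q ^ 1 * r)) z :=
    ((hPdd.pow 2).sub_const 1).neg
  have hden1' : HasDerivAt (fun w => 4 * P w ^ 2) (4 * (2 * p ^ 1 * q)) z :=
    (hPd.pow 2).const_mul 4
  have h1 := hnum1.div hden1' hden1
  have hnum2 : HasDerivAt (fun w => deriv P w - 2 * P w ^ 2 + β)
      (r - 2 * (2 * p ^ 1 * q)) z :=
    (hPdd.sub ((hPd.pow 2).const_mul 2)).add_const β
  have hden2' : HasDerivAt (fun w => 2 * w * P w) (2 * P z + 2 * z * q) z := by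
    have h2w : HasDerivAt (fun w : ℝ => 2 * w) 2 z := by
      simpa using (hasDerivAt_id z).const_mul (2 : ℝ)
    exact h2w.mul hPd
  have h2 := hnum2.div hden2' hden2
  have hVfun : V = fun w => -((deriv P w) ^ 2 - 1) / (4 * P w ^ 2)
      + (deriv P w - 2 * P w ^ 2 + β) / (2 * w * P w) := funext hV
  have hVd : HasDerivAt V
      ((-(2 * q ^ 1 * r) * (4 * P z ^ 2) - -((deriv P z) ^ 2 - 1) * (4 * (2 * p ^ 1 * q)))
          / (4 * P z ^ 2) ^ 2
        + ((r - 2 * (2 * p ^ 1 * q)) * (2 * z * P z)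
            - (deriv P z - 2 * P z ^ 2 + β) * (2 * P z + 2 * z * q)) / (2 * z * P z) ^ 2) z := by
    rw [hVfun]; exact h1.add h2
  -- derivative of η
  have hηfun : η = fun w => -P w - w / 2 * V w := funext hη
  have hzd : HasDerivAt (fun w : ℝ => w / 2) (1 / 2) z := by
    simpa using (hasDerivAt_id z).div_const 2
  have hηd : HasDerivAt η (-q - (1 / 2 * V z + z / 2 *
      ((-(2 * q ^ 1 * r) * (4 * P z ^ 2) - -((deriv P z) ^ 2 - 1) * (4 * (2 * p ^ 1 * q)))
          / (4 * P z ^ 2) ^ 2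
        + ((r - 2 * (2 * p ^ 1 * q)) * (2 * z * P z)
            - (deriv P z - 2 * P z ^ 2 + β) * (2 * P z + 2 * z * q)) / (2 * z * P z) ^ 2))) z := by
    rw [hηfun]; exact hPd.neg.sub (hzd.mul hVd)
  rw [hηd.deriv]
  have hode := hP z hz
  rw [IsP3D7] at hode
  rw [hV z, ← hpdef, ← hqdef, ← hrdef] at *
  rw [hode]
  field_simp
  ring
end

section
/- Let β ∈ ℝ, let I ⊆ ℝ∖{0} be an open interval, and let P : I → ℝ be smooth, nowhere vanishing, and satisfy the Painlevé III (D7) equation with parameter β on I. Suppose σ, σ_+, σ_− : I → ℝ are smooth, nowhere vanishing, and satisfy: P(z) = −d/dz ( z σ′(z)/σ(z) ) for all z ∈ I; (log(σ_+/σ))′ = (P′ − 1)/(2P) and (log(σ_−/σ))′ = (P′ + 1)/(2P) on I. Then there exists a constant C ≠ 0 such that for all z ∈ I: (i) σ_+(z) σ_−(z) = C ( z(σ′(z)² − σ(z) σ″(z)) − σ(z) σ′(z) ) (the Toda-type bilinear relation), and (ii) σ_−′(z) σ_+(z) − σ_−(z) σ_+′(z) = C σ(z)² (the Burchnall–Chaundy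 relation). -/
/-- Bilinear relations for the tau functions of Painlevé III (D7): if `σ` is a tau
function for `P` (i.e. `P = -(z σ'/σ)'`) and `σ_±` are the tau functions of the
up/down Bäcklund transformations (i.e. `(log(σ_±/σ))' = (P' ∓ 1)/(2P)`), then there
is a constant `C ≠ 0` with
`σ_+σ_- = C(z((σ')² - σσ'') - σσ')` and `σ_-'σ_+ - σ_-σ_+' = Cσ²` on `I`. -/
theorem painleveIIID7_tau_bilinear (β : ℝ) (I : Set ℝ)
    (hI : IsOpen I) (hIint : ∃ a b : ℝ, I = Set.Ioo a b) (hI0 : (0 : ℝ) ∉ I)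
    (P : ℝ → ℝ) (hsm : ContDiffOn ℝ (⊤ : ℕ∞) P I) (hPne : ∀ z ∈ I, P z ≠ 0)
    (hP : ∀ z ∈ I, IsP3D7 β P z)
    (σ σp σm : ℝ → ℝ)
    (hσsm : ContDiffOn ℝ (⊤ : ℕ∞) σ I) (hσpsm : ContDiffOn ℝ (⊤ : ℕ∞) σp I)
    (hσmsm : ContDiffOn ℝ (⊤ : ℕ∞) σm I)
    (hσne : ∀ z ∈ I, σ z ≠ 0) (hσpne : ∀ z ∈ I, σp z ≠ 0) (hσmne : ∀ z ∈ I, σm z ≠ 0)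
    (hPσ : ∀ z ∈ I, P z = -deriv (fun w => w * deriv σ w / σ w) z)
    (hplus : ∀ z ∈ I,
      deriv (fun w => Real.log (σp w / σ w)) z = (deriv P z - 1) / (2 * P z))
    (hminus : ∀ z ∈ I,
      deriv (fun w => Real.log (σm w / σ w)) z = (deriv P z + 1) / (2 * P z)) :
    ∃ C : ℝ, C ≠ 0 ∧ ∀ z ∈ I,
      (σp z * σm z
        = C * (z * ((deriv σ z) ^ 2 - σ z * deriv (deriv σ) z) - σ z * deriv σ z)) ∧
      (deriv σm z * σp z - σm z * deriv σp z = C * σ z ^ 2) := by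
  rcases Set.eq_empty_or_nonempty I with hIe | ⟨z0, hz0⟩
  · exact ⟨1, one_ne_zero, fun z hz => by simp [hIe] at hz⟩
  obtain ⟨a, b, hab⟩ := hIint
  have hconv : Convex ℝ I := hab ▸ convex_Ioo a b
  -- differentiability facts
  have hσd : ∀ z ∈ I, DifferentiableAt ℝ σ z := fun z hz =>
    (hσsm.differentiableOn (by simp)).differentiableAt (hI.mem_nhds hz)
  have hσpd : ∀ z ∈ I, DifferentiableAt ℝ σp z := fun z hz =>
    (hσpsm.differentiableOn (by simp)).differentiableAt (hI.mem_nhds hz)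
  have hσmd : ∀ z ∈ I, DifferentiableAt ℝ σm z := fun z hz =>
    (hσmsm.differentiableOn (by simp)).differentiableAt (hI.mem_nhds hz)
  have hPd : ∀ z ∈ I, DifferentiableAt ℝ P z := fun z hz =>
    (hsm.differentiableOn (by simp)).differentiableAt (hI.mem_nhds hz)
  have hσd' : ∀ z ∈ I, DifferentiableAt ℝ (deriv σ) z := fun z hz =>
    (((hσsm.deriv_of_isOpen hI (m := (⊤ : ℕ∞)) ((by simp))).differentiableOn (by simp))).differentiableAt
      (hI.mem_nhds hz)
  -- P σ² equals the bilinear expression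
  have hP2 : ∀ z ∈ I, P z * σ z ^ 2
      = z * ((deriv σ z) ^ 2 - σ z * deriv (deriv σ) z) - σ z * deriv σ z := by
    intro z hz
    have h1 : HasDerivAt (fun w => w * deriv σ w)
        (1 * deriv σ z + z * deriv (deriv σ) z) z :=
      (hasDerivAt_id z).mul (hσd' z hz).hasDerivAt
    have h2 : HasDerivAt (fun w => w * deriv σ w / σ w)
        (((1 * deriv σ z + z * deriv (deriv σ) z) * σ z
          - z * deriv σ z * deriv σ z) / σ z ^ 2) z :=
      h1.div (hσd z hz).hasDerivAt (hσne z hz)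
    rw [hPσ z hz, h2.deriv, neg_mul,
      div_mul_cancel₀ _ (pow_ne_zero 2 (hσne z hz))]
    ring
  -- logarithmic derivative identities, multiplied out
  have hEp : ∀ z ∈ I, (deriv σp z * σ z - σp z * deriv σ z) * (2 * P z)
      = (deriv P z - 1) * (σp z * σ z) := by
    intro z hz
    have hq : HasDerivAt (fun w => σp w / σ w)
        ((deriv σp z * σ z - σp z * deriv σ z) / σ z ^ 2) z :=
      (hσpd z hz).hasDerivAt.div (hσd z hz).hasDerivAt (hσne z hz)
    have hne : σp z / σ z ≠ 0 := div_ne_zero (hσpne z hz) (hσne z hz)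
    have hl := (hq.log hne).deriv
    rw [hplus z hz] at hl
    field_simp [hσne z hz, hσpne z hz, hPne z hz] at hl
    have h2 : σ z * ((deriv σp z * σ z - σp z * deriv σ z) * (2 * P z))
        = σ z * ((deriv P z - 1) * (σp z * σ z)) := by linear_combination -(σ z) * hl
    exact mul_left_cancel₀ (hσne z hz) h2
  have hEm : ∀ z ∈ I, (deriv σm z * σ z - σm z * deriv σ z) * (2 * P z)
      = (deriv P z + 1) * (σm z * σ z) := by
    intro z hz
    have hq : HasDerivAt (fun w => σm w / σ w)
        ((deriv σm z * σ z - σm z * deriv σ z) / σ z ^ 2) z :=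
      (hσmd z hz).hasDerivAt.div (hσd z hz).hasDerivAt (hσne z hz)
    have hne : σm z / σ z ≠ 0 := div_ne_zero (hσmne z hz) (hσne z hz)
    have hl := (hq.log hne).deriv
    rw [hminus z hz] at hl
    field_simp [hσne z hz, hσmne z hz, hPne z hz] at hl
    have h2 : σ z * ((deriv σm z * σ z - σm z * deriv σ z) * (2 * P z))
        = σ z * ((deriv P z + 1) * (σm z * σ z)) := by linear_combination -(σ z) * hl
    exact mul_left_cancel₀ (hσne z hz) h2
  -- the quotient Q = σp σm / (P σ²) has zero derivative on I
  set Q : ℝ → ℝ := fun z => σp z * σm z / (P z * σ z ^ 2) with hQdef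
  have hDne : ∀ z ∈ I, P z * σ z ^ 2 ≠ 0 := fun z hz =>
    mul_ne_zero (hPne z hz) (pow_ne_zero 2 (hσne z hz))
  have hQ : ∀ z ∈ I, HasDerivAt Q 0 z := by
    intro z hz
    have hN : HasDerivAt (fun w => σp w * σm w)
        (deriv σp z * σm z + σp z * deriv σm z) z :=
      (hσpd z hz).hasDerivAt.mul (hσmd z hz).hasDerivAt
    have hpow : HasDerivAt (fun w => σ w ^ 2)
        ((2 : ℕ) * σ z ^ 1 * deriv σ z) z := (hσd z hz).hasDerivAt.pow 2
    have hD : HasDerivAt (fun w => P w * σ w ^ 2)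
        (deriv P z * σ z ^ 2 + P z * ((2 : ℕ) * σ z ^ 1 * deriv σ z)) z :=
      (hPd z hz).hasDerivAt.mul hpow
    have hdiv := hN.div hD (hDne z hz)
    have hkey : ((deriv σp z * σm z + σp z * deriv σm z) * (P z * σ z ^ 2)
        - σp z * σm z * (deriv P z * σ z ^ 2 + P z * ((2 : ℕ) * σ z ^ 1 * deriv σ z)))
        / (P z * σ z ^ 2) ^ 2 = 0 := by
      rw [div_eq_zero_iff]
      left
      push_cast
      linear_combination (σm z * σ z / 2) * hEp z hz + (σp z * σ z / 2) * hEm z hz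
    rw [hkey] at hdiv
    exact hdiv
  -- Q is constant on I
  have hQconst : ∀ z ∈ I, Q z = Q z0 := by
    intro z hz
    have hdiff : DifferentiableOn ℝ Q I := fun w hw =>
      ((hQ w hw).differentiableAt).differentiableWithinAt
    have hfz : ∀ w ∈ I, fderivWithin ℝ Q I w = 0 := by
      intro w hw
      rw [fderivWithin_of_isOpen hI hw, (hQ w hw).hasFDerivAt.fderiv]
      ext
      simp
    exact hconv.is_const_of_fderivWithin_eq_zero hdiff hfz hz hz0
  refine ⟨Q z0, ?_, ?_⟩
  · simp only [hQdef]
    exact div_ne_zero (mul_ne_zero (hσpne z0 hz0) (hσmne z0 hz0)) (hDne z0 hz0)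
  intro z hz
  have hCi : σp z * σm z = Q z0 * (P z * σ z ^ 2) := by
    rw [← hQconst z hz]
    simp only [hQdef]
    exact (div_mul_cancel₀ _ (hDne z hz)).symm
  constructor
  · rw [← hP2 z hz]
    exact hCi
  · have h2 : (2 * P z * σ z) * (deriv σm z * σp z - σm z * deriv σp z)
        = (2 * P z * σ z) * (Q z0 * σ z ^ 2) := by
      linear_combination σp z * hEm z hz - σm z * hEp z hz + 2 * σ z * hCi
    exact mul_left_cancel₀ (by
      exact mul_ne_zero (mul_ne_zero two_ne_zero (hPne z hz)) (hσne z hz)) h2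
end

section
/- Let (ρ_n)_{n∈ℤ} be twice differentiable functions ρ_n : (0,∞) → ℝ satisfying the Ohyama recurrence for all n ∈ ℤ and all s > 0. For n ∈ ℤ and z > 0 set ζ = (z/2)^{1/3} and define σ_n(z) = 3^{1/4} ζ^{7/24} exp(−(9/8)ζ⁴ − (3/2)nζ²) ρ_n(3ζ²) if n is odd, and σ_n(z) = ζ^{−5/24} exp(−(9/8)ζ⁴ − (3/2)nζ²) ρ_n(3ζ²) if n is even. Then for every n ∈ ℤ and every z > 0 (derivatives with respect to z): σ_{n+1}(z) σ_{n−1}(z) + √3 ( z ( σ_n(z) σ_n″(z) − σ_n′(z)² ) + σ_n(z) σ_n′(z) ) = 0. -/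
/-!
Write `θ = z d/dz`. Then `z (σ σ'' - σ'²) + σ σ' = (σ θ²σ - (θσ)²) / z`, and the
bilinear expression `σ θ²σ - (θσ)²` behaves well: it is computed by the Leibniz rule for
`θ`, and a substitution `z ↦ (z / 2)^k` only rescales `θ` by `k`. Passing to
`t = (z / 2)^{1/3}` and `s = 3t²`, the gauge `G(t) = K t^a exp(-(9/8)t⁴ - (3/2)n t²)`
contributes `θ_t² log G = -2s(s + n)`, and the Toda expression of `σ_n = G · ρ_n(s)`
becomes `-G(t)² / (3t)` times the left side of the Ohyama recurrence at `s`. Since the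
exponentials of `σ_{n±1}` multiply to that of `σ_n` squared, the theorem reduces to
`(3^{1/4} t^{7/24})² = √3 · t · (t^{-5/24})²`, which absorbs the factor `s` or `1` on the
right of the recurrence.
-/

open Real Topology

/-- `f₁ = θ f` and `f₂ = θ² f` on `(0, ∞)`, for the Euler operator `θ = x d/dx`. -/
def HasEulerDerivs (f f₁ f₂ : ℝ → ℝ) : Prop :=
  ∀ x, 0 < x → HasDerivAt f (f₁ x / x) x ∧ HasDerivAt f₁ (f₂ x / x) x

namespace HasEulerDerivs

variable {f f₁ f₂ g g₁ g₂ : ℝ → ℝ}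

theorem rpow (a : ℝ) :
    HasEulerDerivs (fun x => x ^ a) (fun x => a * x ^ a) (fun x => a ^ 2 * x ^ a) := by
  intro x hx
  have h := Real.hasDerivAt_rpow_const (p := a) (Or.inl hx.ne')
  rw [Real.rpow_sub_one hx.ne'] at h
  exact ⟨h.congr_deriv (by ring), (h.const_mul a).congr_deriv (by ring)⟩

theorem pow (n : ℕ) :
    HasEulerDerivs (fun x => x ^ n) (fun x => n * x ^ n) (fun x => (n : ℝ) ^ 2 * x ^ n) := by
  simpa only [Real.rpow_natCast] using rpow (n : ℝ)

theorem const_mul (hf : HasEulerDerivs f f₁ f₂) (c : ℝ) :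
    HasEulerDerivs (fun x => c * f x) (fun x => c * f₁ x) (fun x => c * f₂ x) := by
  intro x hx
  obtain ⟨h₀, h₁⟩ := hf x hx
  exact ⟨(h₀.const_mul c).congr_deriv (by ring), (h₁.const_mul c).congr_deriv (by ring)⟩

theorem sub (hf : HasEulerDerivs f f₁ f₂) (hg : HasEulerDerivs g g₁ g₂) :
    HasEulerDerivs (fun x => f x - g x) (fun x => f₁ x - g₁ x) (fun x => f₂ x - g₂ x) := by
  intro x hx
  obtain ⟨hf₀, hf₁⟩ := hf x hx
  obtain ⟨hg₀, hg₁⟩ := hg x hx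
  exact ⟨(hf₀.sub hg₀).congr_deriv (by ring), (hf₁.sub hg₁).congr_deriv (by ring)⟩

theorem mul (hf : HasEulerDerivs f f₁ f₂) (hg : HasEulerDerivs g g₁ g₂) :
    HasEulerDerivs (fun x => f x * g x) (fun x => f₁ x * g x + f x * g₁ x)
      (fun x => f₂ x * g x + 2 * (f₁ x * g₁ x) + f x * g₂ x) := by
  intro x hx
  obtain ⟨hf₀, hf₁⟩ := hf x hx
  obtain ⟨hg₀, hg₁⟩ := hg x hx
  exact ⟨(hf₀.mul hg₀).congr_deriv (by ring),
    ((hf₁.mul hg₀).add (hf₀.mul hg₁)).congr_deriv (by ring)⟩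

theorem comp_hasDerivAt {φ φ₁ φ₂ f' f'' : ℝ → ℝ} (hφ : HasEulerDerivs φ φ₁ φ₂)
    (hf : ∀ x, 0 < x → HasDerivAt f (f' (φ x)) (φ x) ∧ HasDerivAt f' (f'' (φ x)) (φ x)) :
    HasEulerDerivs (fun x => f (φ x)) (fun x => f' (φ x) * φ₁ x)
      (fun x => f'' (φ x) * φ₁ x ^ 2 + f' (φ x) * φ₂ x) := by
  intro x hx
  obtain ⟨hφ₀, hφ₁⟩ := hφ x hx
  obtain ⟨hf₀, hf₁⟩ := hf x hx
  exact ⟨(hf₀.comp x hφ₀).congr_deriv (by ring),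
    ((hf₁.comp x hφ₀).mul hφ₁).congr_deriv (by rw [Function.comp_apply]; ring)⟩

theorem comp_homogeneous {φ : ℝ → ℝ} {k : ℝ} (hf : HasEulerDerivs f f₁ f₂)
    (hφ : ∀ x, 0 < x → 0 < φ x ∧ HasDerivAt φ (k * φ x / x) x) :
    HasEulerDerivs (fun x => f (φ x)) (fun x => k * f₁ (φ x))
      (fun x => k ^ 2 * f₂ (φ x)) := by
  intro x hx
  obtain ⟨hφpos, hφ₀⟩ := hφ x hx
  obtain ⟨hf₀, hf₁⟩ := hf (φ x) hφpos
  exact ⟨(hf₀.comp x hφ₀).congr_deriv (by field_simp),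
    ((hf₁.comp x hφ₀).const_mul k).congr_deriv (by field_simp)⟩

theorem toda_eq (hf : HasEulerDerivs f f₁ f₂) {z : ℝ} (hz : 0 < z) :
    z * (f z * deriv (deriv f) z - deriv f z ^ 2) + f z * deriv f z
      = (f z * f₂ z - f₁ z ^ 2) / z := by
  have hderiv : deriv f =ᶠ[𝓝 z] fun y => f₁ y / y := by
    filter_upwards [Ioi_mem_nhds hz] with y hy using (hf y hy).1.deriv
  have hderiv₂ : HasDerivAt (fun y => f₁ y / y) ((f₂ z / z * z - f₁ z * 1) / z ^ 2) z :=
    (hf z hz).2.div (hasDerivAt_id z) hz.ne'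
  rw [hderiv.deriv_eq, hderiv₂.deriv, (hf z hz).1.deriv]
  field_simp
  ring

end HasEulerDerivs

theorem hasDerivAt_div_rpow {c x : ℝ} (p : ℝ) (hc : 0 < c) (hx : 0 < x) :
    HasDerivAt (fun x => (x / c) ^ p) (p * (x / c) ^ p / x) x := by
  have hxc : 0 < x / c := div_pos hx hc
  have h := (Real.hasDerivAt_rpow_const (p := p) (Or.inl hxc.ne')).comp x
    ((hasDerivAt_id x).div_const c)
  rw [Real.rpow_sub_one hxc.ne'] at h
  exact h.congr_deriv (by field_simp)

noncomputable def ohyamaGauge (K a m t : ℝ) : ℝ :=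
  K * t ^ a * exp (-(9 / 8) * t ^ 4 - 3 / 2 * m * t ^ 2)

noncomputable def ohyamaForm (m : ℝ) (f : ℝ → ℝ) (s : ℝ) : ℝ :=
  (s + m) * f s ^ 2 - 2 * s * f s * deriv (deriv f) s + 2 * s * deriv f s ^ 2
    - 2 * f s * deriv f s

theorem ohyamaGauge_add_one_mul_sub_one (K a m t : ℝ) :
    ohyamaGauge K a (m + 1) t * ohyamaGauge K a (m - 1) t = ohyamaGauge K a m t ^ 2 := by
  have hexp : exp (-(9 / 8) * t ^ 4 - 3 / 2 * (m + 1) * t ^ 2)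
      * exp (-(9 / 8) * t ^ 4 - 3 / 2 * (m - 1) * t ^ 2)
      = exp (-(9 / 8) * t ^ 4 - 3 / 2 * m * t ^ 2) ^ 2 := by
    rw [← exp_add, ← exp_nat_mul]
    ring_nf
  unfold ohyamaGauge
  linear_combination (K * t ^ a) ^ 2 * hexp

theorem exists_hasEulerDerivs_ohyamaGauge_mul {f : ℝ → ℝ} (K a m : ℝ)
    (hf : ∀ s, 0 < s →
      HasDerivAt f (deriv f s) s ∧ HasDerivAt (deriv f) (deriv (deriv f) s) s) :
    ∃ S₁ S₂ : ℝ → ℝ,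
      HasEulerDerivs (fun t => ohyamaGauge K a m t * f (3 * t ^ 2)) S₁ S₂ ∧
      ∀ t, ohyamaGauge K a m t * f (3 * t ^ 2) * S₂ t - S₁ t ^ 2
        = -6 * t ^ 2 * ohyamaGauge K a m t ^ 2 * ohyamaForm m f (3 * t ^ 2) := by
  have hexp : HasEulerDerivs (fun t => exp (-(9 / 8) * t ^ 4 - 3 / 2 * m * t ^ 2)) _ _ :=
    (((HasEulerDerivs.pow 4).const_mul _).sub ((HasEulerDerivs.pow 2).const_mul _)).comp_hasDerivAt
      (f' := exp) (f'' := exp) fun _ _ => ⟨hasDerivAt_exp _, hasDerivAt_exp _⟩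
  have hρ : HasEulerDerivs (fun t => f (3 * t ^ 2)) _ _ :=
    ((HasEulerDerivs.pow 2).const_mul 3).comp_hasDerivAt fun t ht => hf _ (by positivity)
  refine ⟨_, _, (((HasEulerDerivs.rpow a).const_mul K).mul hexp).mul hρ, fun t => ?_⟩
  simp only [ohyamaGauge, ohyamaForm]
  push_cast
  ring

theorem toda_ohyamaGauge_mul {f σ : ℝ → ℝ} {K a m z t : ℝ}
    (hf : ∀ s, 0 < s →
      HasDerivAt f (deriv f s) s ∧ HasDerivAt (deriv f) (deriv (deriv f) s) s)
    (hσ : ∀ z, σ z =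
      ohyamaGauge K a m ((z / 2) ^ (1 / 3 : ℝ)) * f (3 * ((z / 2) ^ (1 / 3 : ℝ)) ^ 2))
    (hz : 0 < z) (ht : (z / 2) ^ (1 / 3 : ℝ) = t) :
    z * (σ z * deriv (deriv σ) z - deriv σ z ^ 2) + σ z * deriv σ z
      = -(ohyamaGauge K a m t ^ 2 / (3 * t)) * ohyamaForm m f (3 * t ^ 2) := by
  obtain ⟨S₁, S₂, hS, hHirota⟩ := exists_hasEulerDerivs_ohyamaGauge_mul K a m hf
  have hσS : HasEulerDerivs σ _ _ := funext hσ ▸ hS.comp_homogeneous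
    fun x hx => ⟨by positivity, hasDerivAt_div_rpow (1 / 3) two_pos hx⟩
  have htpos : 0 < t := ht ▸ by positivity
  have hzt : z = 2 * t ^ 3 := by
    rw [← ht, ← Real.rpow_natCast, ← Real.rpow_mul (by positivity)]
    norm_num
    ring
  rw [hσS.toda_eq hz, hσ z, ht, hzt]
  field_simp
  linear_combination hHirota t

theorem ohyamaGauge_sq_odd_eq_even {t : ℝ} (ht : 0 < t) (m : ℝ) :
    ohyamaGauge (3 ^ (1 / 4 : ℝ)) (7 / 24) m t ^ 2
      = √3 * t * ohyamaGauge 1 (-5 / 24) m t ^ 2 := by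
  have hK : ((3 : ℝ) ^ (1 / 4 : ℝ)) ^ 2 = √3 := by
    rw [Real.sqrt_eq_rpow, ← Real.rpow_natCast, ← Real.rpow_mul (by norm_num)]
    norm_num
  have ha : (t ^ (7 / 24 : ℝ)) ^ 2 = t * (t ^ (-5 / 24 : ℝ)) ^ 2 := by
    rw [← Real.rpow_natCast, ← Real.rpow_natCast, ← Real.rpow_mul ht.le,
      ← Real.rpow_mul ht.le, ← Real.rpow_one_add' ht.le (by norm_num)]
    norm_num
  simp only [ohyamaGauge, mul_pow, hK, ha]
  ring

/-- From Ohyama polynomials to tau functions: if `(ρ_n)` are twice differentiable on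
`(0,∞)` and satisfy the Ohyama recurrence, then the functions
`σ_n(z) = 3^{1/4} ζ^{7/24} e^{-(9/8)ζ⁴ - (3/2)nζ²} ρ_n(3ζ²)` (`n` odd) and
`σ_n(z) = ζ^{-5/24} e^{-(9/8)ζ⁴ - (3/2)nζ²} ρ_n(3ζ²)` (`n` even), with `ζ = (z/2)^{1/3}`,
satisfy the Toda-type bilinear relation
`σ_{n+1}σ_{n-1} + √3(z(σ_nσ_n'' - (σ_n')²) + σ_nσ_n') = 0` for all `z > 0`. -/
theorem ohyama_to_tau_toda (ρ : ℤ → ℝ → ℝ)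
    (hdiff : ∀ n : ℤ, ∀ s : ℝ, 0 < s →
      DifferentiableAt ℝ (ρ n) s ∧ DifferentiableAt ℝ (deriv (ρ n)) s)
    (hrec : ∀ n : ℤ, ∀ s : ℝ, 0 < s →
      (s + (n : ℝ)) * ρ n s ^ 2 - 2 * s * ρ n s * deriv (deriv (ρ n)) s
          + 2 * s * (deriv (ρ n) s) ^ 2 - 2 * ρ n s * deriv (ρ n) s
        = if Odd n then ρ (n + 1) s * ρ (n - 1) s
          else s * (ρ (n + 1) s * ρ (n - 1) s))
    (σ : ℤ → ℝ → ℝ)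
    (hσ : ∀ n : ℤ, ∀ z : ℝ, σ n z =
      if Odd n then
        3 ^ ((1 : ℝ) / 4) * ((z / 2) ^ ((1 : ℝ) / 3)) ^ ((7 : ℝ) / 24)
          * Real.exp (-(9 / 8) * ((z / 2) ^ ((1 : ℝ) / 3)) ^ 4
              - 3 / 2 * (n : ℝ) * ((z / 2) ^ ((1 : ℝ) / 3)) ^ 2)
          * ρ n (3 * ((z / 2) ^ ((1 : ℝ) / 3)) ^ 2)
      else
        ((z / 2) ^ ((1 : ℝ) / 3)) ^ (-(5 : ℝ) / 24)
          * Real.exp (-(9 / 8) * ((z / 2) ^ ((1 : ℝ) / 3)) ^ 4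
              - 3 / 2 * (n : ℝ) * ((z / 2) ^ ((1 : ℝ) / 3)) ^ 2)
          * ρ n (3 * ((z / 2) ^ ((1 : ℝ) / 3)) ^ 2)) :
    ∀ n : ℤ, ∀ z : ℝ, 0 < z →
      σ (n + 1) z * σ (n - 1) z
        + Real.sqrt 3 * (z * (σ n z * deriv (deriv (σ n)) z - (deriv (σ n) z) ^ 2)
            + σ n z * deriv (σ n) z) = 0 := by
  intro n z hz
  have hρ : ∀ s, 0 < s →
      HasDerivAt (ρ n) (deriv (ρ n) s) s ∧ HasDerivAt (deriv (ρ n)) (deriv (deriv (ρ n)) s) s :=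
    fun s hs => ⟨(hdiff n s hs).1.hasDerivAt, (hdiff n s hs).2.hasDerivAt⟩
  have hσG : ∀ k z, σ k z = ohyamaGauge (if Odd k then 3 ^ (1 / 4 : ℝ) else 1)
      (if Odd k then 7 / 24 else -5 / 24) k ((z / 2) ^ (1 / 3 : ℝ))
        * ρ k (3 * ((z / 2) ^ (1 / 3 : ℝ)) ^ 2) := by
    intro k z
    rw [hσ]
    split_ifs <;> simp only [ohyamaGauge, one_mul]
  rw [toda_ohyamaGauge_mul hρ (hσG n) hz rfl, hσG, hσG]
  set t := (z / 2) ^ (1 / 3 : ℝ)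
  have htpos : 0 < t := by positivity
  have hgauge := ohyamaGauge_sq_odd_eq_even htpos n
  have hform : ohyamaForm n (ρ n) (3 * t ^ 2) = _ := hrec n (3 * t ^ 2) (by positivity)
  have hshift : ∀ K a,
      ohyamaGauge K a ((n + 1 : ℤ) : ℝ) t * ohyamaGauge K a ((n - 1 : ℤ) : ℝ) t
        = ohyamaGauge K a n t ^ 2 := by
    push_cast
    exact fun K a => ohyamaGauge_add_one_mul_sub_one K a n t
  rw [hform]
  set R := ρ (n + 1) (3 * t ^ 2) * ρ (n - 1) (3 * t ^ 2)
  rcases Int.even_or_odd n with hn | hn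
  · simp only [if_pos hn.add_one, if_pos (hn.sub_odd odd_one), if_neg (Int.not_odd_iff_even.2 hn)]
    linear_combination R * hshift (3 ^ (1 / 4 : ℝ)) (7 / 24) + R * hgauge
      - √3 * ohyamaGauge 1 (-5 / 24) n t ^ 2 * t * R * mul_inv_cancel₀ htpos.ne'
  · simp only [if_neg (Int.not_odd_iff_even.2 hn.add_one),
      if_neg (Int.not_odd_iff_even.2 (hn.sub_odd odd_one)), if_pos hn]
    linear_combination R * hshift 1 (-5 / 24) - √3 / 3 * t⁻¹ * R * hgauge
      - t⁻¹ * t * ohyamaGauge 1 (-5 / 24) n t ^ 2 * R / 3 * Real.mul_self_sqrt zero_le_three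
      - R * ohyamaGauge 1 (-5 / 24) n t ^ 2 * mul_inv_cancel₀ htpos.ne'
end

section
/- Fix nonzero real parameters a and c. Suppose A : ℤ×ℕ → ℝ satisfies: A(0,0) = c and A(0,k) = 0 for all k ≥ 1; and for every m ∈ ℤ∖{0}, writing δ = sgn(m): A(m,0) = 0; A(m,k) = 0 for all k > 2|m|; A(m,2|m|) = (3a/2)^{|m|} · c/|m|!; and for all 1 ≤ k ≤ 2|m|−1, A(m,k) = ((k+1)/3)·δ·A(m,k+1) + (3a/k)·A(m−δ, k−2), where the last term is taken to be 0 when k < 2. Then A(m,k) = (−1)^k A(−m,k) for all m ∈ ℤ and all k ∈ ℕ. -/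
/-!
Replacing `m` by `-m` flips the sign `δ` in the recursion, and the twist `(-1) ^ k` absorbs the
flip: the term in `A (m, k + 1)` picks up `(-1) ^ (k + 1)`, while the term in the previous row
`A (m - δ, k - 2)` picks up `(-1) ^ (k - 2) = (-1) ^ k`. Hence, by induction on `|m|`, and within
a row by descending induction on `k` from the leading coefficient at `k = 2 |m|` (equal for `m`
and `-m`), each row of `A` is the row of `-m` twisted by `(-1) ^ k`.
-/

theorem Int.natAbs_sub_sign {m : ℤ} (hm : m ≠ 0) : (m - m.sign).natAbs = m.natAbs - 1 := by
  rcases hm.lt_or_gt with h | h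
  · rw [Int.sign_eq_neg_one_of_neg h]; omega
  · rw [Int.sign_eq_one_of_pos h]; omega

theorem eq_neg_one_pow_mul_of_recursion {a δ : ℝ} {N : ℕ} {u v p q : ℕ → ℝ}
    (hu : ∀ k, 1 ≤ k → k < N →
      u k = ((k + 1) / 3) * δ * u (k + 1) + (if k < 2 then 0 else 3 * a / k * p (k - 2)))
    (hv : ∀ k, 1 ≤ k → k < N →
      v k = ((k + 1) / 3) * (-δ) * v (k + 1) + (if k < 2 then 0 else 3 * a / k * q (k - 2)))
    (hpq : ∀ j, p j = (-1) ^ j * q j) (h0 : u 0 = v 0) (hN : u N = (-1) ^ N * v N) :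
    ∀ k ≤ N, u k = (-1) ^ k * v k := by
  intro k hk
  induction hk using Nat.decreasingInduction with
  | self => exact hN
  | of_succ k hkN ih =>
    rcases Nat.eq_zero_or_pos k with rfl | hk1
    · simpa using h0
    rw [hu k hk1 hkN, hv k hk1 hkN, ih]
    split_ifs with hk2
    · ring
    · obtain ⟨j, rfl⟩ : ∃ j, k = j + 2 := ⟨k - 2, by omega⟩
      rw [Nat.add_sub_cancel, hpq j]
      ring

theorem coefficient_symmetry_general (a c : ℝ)
    (A : ℤ → ℕ → ℝ)
    (hA0k : ∀ k : ℕ, 1 ≤ k → A 0 k = 0)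
    (hAm0 : ∀ m : ℤ, m ≠ 0 → A m 0 = 0)
    (hAtop : ∀ m : ℤ, m ≠ 0 → ∀ k : ℕ, 2 * m.natAbs < k → A m k = 0)
    (hAlead : ∀ m : ℤ, m ≠ 0 →
      A m (2 * m.natAbs) = (3 * a / 2) ^ m.natAbs * c / Nat.factorial m.natAbs)
    (hArec : ∀ m : ℤ, m ≠ 0 → ∀ k : ℕ, 1 ≤ k → k ≤ 2 * m.natAbs - 1 →
      A m k = (((k : ℝ) + 1) / 3) * (m.sign : ℝ) * A m (k + 1)
        + (if k < 2 then 0 else (3 * a / (k : ℝ)) * A (m - m.sign) (k - 2))) :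
    ∀ m : ℤ, ∀ k : ℕ, A m k = (-1) ^ k * A (-m) k := by
  intro m
  induction hn : m.natAbs generalizing m with
  | zero =>
    rw [Int.natAbs_eq_zero.1 hn, neg_zero]
    rintro (_ | k)
    · simp
    · simp [hA0k]
  | succ n ih =>
    have hm : m ≠ 0 := by rintro rfl; simp at hn
    have hm' : -m ≠ 0 := neg_ne_zero.2 hm
    have hprev := ih (m - m.sign) (by rw [Int.natAbs_sub_sign hm, hn]; rfl)
    intro k
    rcases le_or_gt k (2 * m.natAbs) with hk | hk
    · refine eq_neg_one_pow_mul_of_recursion (a := a) (δ := m.sign) (fun k hk1 hkN => ?_)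
        (fun k hk1 hkN => ?_) hprev (by rw [hAm0 m hm, hAm0 (-m) hm']) ?_ k hk
      · exact hArec m hm k hk1 (by omega)
      · have hrec := hArec (-m) hm' k hk1 (by rw [Int.natAbs_neg]; omega)
        rwa [Int.sign_neg, Int.cast_neg, sub_neg_eq_add, neg_add_eq_sub, ← neg_sub] at hrec
      · rw [(even_two_mul _).neg_one_pow, one_mul, hAlead m hm, ← Int.natAbs_neg m,
          hAlead (-m) hm']
    · rw [hAtop m hm k hk, hAtop (-m) hm' k (by rwa [Int.natAbs_neg]), mul_zero]

/-- Symmetry of the coefficients of the generalized eigenfunctions in the Jordan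
chains of confluent Darboux transformations for the algebraic solutions of
Painlevé III (D7): the coefficient family `A(m,k)` determined by the stated
recursion (with chain normalization `a` and seed normalization `c`) satisfies
`A(m,k) = (-1)^k A(-m,k)`. -/
theorem coefficient_symmetry (a c : ℝ) (ha : a ≠ 0) (hc : c ≠ 0)
    (A : ℤ → ℕ → ℝ)
    (hA00 : A 0 0 = c) (hA0k : ∀ k : ℕ, 1 ≤ k → A 0 k = 0)
    (hAm0 : ∀ m : ℤ, m ≠ 0 → A m 0 = 0)
    (hAtop : ∀ m : ℤ, m ≠ 0 → ∀ k : ℕ, 2 * m.natAbs < k → A m k = 0)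
    (hAlead : ∀ m : ℤ, m ≠ 0 →
      A m (2 * m.natAbs) = (3 * a / 2) ^ m.natAbs * c / Nat.factorial m.natAbs)
    (hArec : ∀ m : ℤ, m ≠ 0 → ∀ k : ℕ, 1 ≤ k → k ≤ 2 * m.natAbs - 1 →
      A m k = (((k : ℝ) + 1) / 3) * (m.sign : ℝ) * A m (k + 1)
        + (if k < 2 then 0 else (3 * a / (k : ℝ)) * A (m - m.sign) (k - 2))) :
    ∀ m : ℤ, ∀ k : ℕ, A m k = (-1) ^ k * A (-m) k :=
  coefficient_symmetry_general a c A hA0k hAm0 hAtop hAlead hArec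
end

section
/- Fix nonzero real parameters a and c, and let A : ℕ×ℕ → ℝ satisfy: A(0,0) = c and A(0,k) = 0 for k ≥ 1; for m ≥ 1: A(m,0) = 0, A(m,k) = 0 for k > 2m, A(m,2m) = (3a/2)^m · c/m!, and A(m,k) = ((k+1)/3)·A(m,k+1) + (3a/k)·A(m−1,k−2) for 1 ≤ k ≤ 2m−1, with the last term taken to be 0 when k < 2. For z > 0 set ζ = (z/2)^{1/3} and V_0(z) = (5 − 36ζ⁴)/(144ζ⁶). Define ψ_0 = 0 and, for n ∈ ℤ∖{0} with δ = sgn(n), ψ_n(z) = ζ^{1/2} exp(−(3/2)δζ²) · Σ_{k=0}^{2|n|−2} A(|n|−1, k) δ^k ζ^{2k}. Then for every n ∈ ℤ∖{0} and every z > 0 (derivatives with respect to z): ψ_n″(z) + V_0(z) ψ_n(z) = −δ a ψ_{n−δ}(z). -/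
/-!
Put `σ = ζ^{1/2} = (z/2)^{1/6}`, so `z = 2σ⁶`, and write `ψ_n = σ e^{-(3/2)δσ⁴} P(σ⁴)` with
`P = P_{|n|-1}` the polynomial `∑ₖ A(|n|-1,k) δᵏ wᵏ`. In the variable `σ` everything is a polynomial
times an exponential, and the gauge factor `σ e^{-(3/2)δσ⁴}` conjugates `∂_z² + V_0` into
`(P'' - 3δP')(w) / (9w)` at `w = σ⁴ = ζ²` (this uses `δ² = 1`). The chain relation thus reduces to
the polynomial identity `P_m'' - 3δ P_m' = -9δa X P_{m-1}`, which, coefficient by coefficient, is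
the recursion for `A(m,k)`, extended to `k = 2m` by the formula for the leading coefficient.
-/

open Real Filter Topology Polynomial

noncomputable section

def sixthRootHalf (z : ℝ) : ℝ := (z / 2) ^ ((1 : ℝ) / 6)

lemma sixthRootHalf_pos {z : ℝ} (hz : 0 < z) : 0 < sixthRootHalf z :=
  rpow_pos_of_pos (half_pos hz) _

lemma sixthRootHalf_pow_six {z : ℝ} (hz : 0 < z) : sixthRootHalf z ^ 6 = z / 2 := by
  rw [sixthRootHalf, ← rpow_natCast, ← rpow_mul (half_pos hz).le]
  norm_num

lemma hasDerivAt_sixthRootHalf {z : ℝ} (hz : 0 < z) :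
    HasDerivAt sixthRootHalf (1 / (12 * sixthRootHalf z ^ 5)) z := by
  have h := (hasDerivAt_rpow_const (p := (1 : ℝ) / 6) (Or.inl (half_pos hz).ne')).comp z
    ((hasDerivAt_id z).div_const 2)
  refine h.congr_deriv ?_
  rw [rpow_sub_one (half_pos hz).ne', ← sixthRootHalf, ← sixthRootHalf_pow_six hz]
  field_simp
  ring

lemma deriv_deriv_comp_sixthRootHalf {F F' F'' : ℝ → ℝ} (hF : ∀ s, HasDerivAt F (F' s) s)
    (hF' : ∀ s, HasDerivAt F' (F'' s) s) {z : ℝ} (hz : 0 < z) :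
    deriv (deriv (F ∘ sixthRootHalf)) z =
      (sixthRootHalf z * F'' (sixthRootHalf z) - 5 * F' (sixthRootHalf z))
        / (144 * sixthRootHalf z ^ 11) := by
  have hfirst : deriv (F ∘ sixthRootHalf) =ᶠ[𝓝 z]
      fun x => F' (sixthRootHalf x) * (1 / (12 * sixthRootHalf x ^ 5)) := by
    filter_upwards [eventually_gt_nhds hz] with x hx
    exact ((hF _).comp x (hasDerivAt_sixthRootHalf hx)).deriv
  have hσ := sixthRootHalf_pos hz
  have hσ' := hasDerivAt_sixthRootHalf hz
  have hsecond := ((hF' _).comp z hσ').fun_mul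
    ((hasDerivAt_const z (1 : ℝ)).fun_div ((hσ'.fun_pow 5).const_mul 12) (by positivity))
  rw [hfirst.deriv_eq]
  refine hsecond.deriv.trans ?_
  simp only [Function.comp_apply]
  field_simp
  ring

def gaugeDeriv (δ : ℝ) (R : ℝ[X]) : ℝ[X] := C 4 * derivative R - C (6 * δ) * R

lemma hasDerivAt_exp_mul_eval (δ : ℝ) (R : ℝ[X]) (s : ℝ) :
    HasDerivAt (fun s => exp (-(3 / 2) * δ * s ^ 4) * R.eval (s ^ 4))
      (s ^ 3 * (exp (-(3 / 2) * δ * s ^ 4) * (gaugeDeriv δ R).eval (s ^ 4))) s := by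
  have h4 := hasDerivAt_pow 4 s
  have h := ((h4.const_mul (-(3 / 2) * δ)).exp).mul ((R.hasDerivAt (s ^ 4)).comp s h4)
  refine h.congr_deriv ?_
  simp only [gaugeDeriv, eval_sub, eval_mul, eval_C, Function.comp_apply]
  ring

def gaugeFun (δ : ℝ) (P : ℝ[X]) (s : ℝ) : ℝ := s * (exp (-(3 / 2) * δ * s ^ 4) * P.eval (s ^ 4))

lemma hasDerivAt_gaugeFun (δ : ℝ) (P : ℝ[X]) (s : ℝ) :
    HasDerivAt (gaugeFun δ P)
      (exp (-(3 / 2) * δ * s ^ 4) * (P + X * gaugeDeriv δ P).eval (s ^ 4)) s := by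
  refine ((hasDerivAt_id s).mul (hasDerivAt_exp_mul_eval δ P s)).congr_deriv ?_
  simp only [id, eval_add, eval_mul, eval_X]
  ring

def jordanFun (δ : ℝ) (P : ℝ[X]) (z : ℝ) : ℝ :=
  ((z / 2) ^ ((1 : ℝ) / 3)) ^ ((1 : ℝ) / 2)
    * exp (-(3 / 2) * δ * ((z / 2) ^ ((1 : ℝ) / 3)) ^ 2) * P.eval (((z / 2) ^ ((1 : ℝ) / 3)) ^ 2)

lemma cbrt_half_eq_sixthRootHalf_sq {z : ℝ} (hz : 0 < z) :
    (z / 2) ^ ((1 : ℝ) / 3) = sixthRootHalf z ^ 2 := by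
  rw [sixthRootHalf, ← rpow_natCast, ← rpow_mul (half_pos hz).le]
  norm_num

lemma jordanFun_eq_gaugeFun (δ : ℝ) (P : ℝ[X]) {z : ℝ} (hz : 0 < z) :
    jordanFun δ P z = gaugeFun δ P (sixthRootHalf z) := by
  have hsqrt : (sixthRootHalf z ^ 2) ^ ((1 : ℝ) / 2) = sixthRootHalf z := by
    rw [← rpow_natCast, ← rpow_mul (sixthRootHalf_pos hz).le]
    norm_num
  rw [jordanFun, gaugeFun, cbrt_half_eq_sixthRootHalf_sq hz, hsqrt]
  ring_nf

theorem jordanFun_schrodinger {δ μ : ℝ} (hδ : δ ^ 2 = 1) {P Q : ℝ[X]}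
    (hPQ : derivative (derivative P) - C (3 * δ) * derivative P = C (9 * μ) * X * Q)
    {z : ℝ} (hz : 0 < z) :
    deriv (deriv (jordanFun δ P)) z
        + (5 - 36 * ((z / 2) ^ ((1 : ℝ) / 3)) ^ 4) / (144 * ((z / 2) ^ ((1 : ℝ) / 3)) ^ 6)
          * jordanFun δ P z
      = μ * jordanFun δ Q z := by
  have hloc : jordanFun δ P =ᶠ[𝓝 z] gaugeFun δ P ∘ sixthRootHalf := by
    filter_upwards [eventually_gt_nhds hz] with x hx using jordanFun_eq_gaugeFun δ P hx
  rw [hloc.deriv.deriv_eq, deriv_deriv_comp_sixthRootHalf (hasDerivAt_gaugeFun δ P)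
    (hasDerivAt_exp_mul_eval δ _) hz, jordanFun_eq_gaugeFun δ P hz,
    jordanFun_eq_gaugeFun δ Q hz, cbrt_half_eq_sixthRootHalf_sq hz]
  have hs := sixthRootHalf_pos hz
  set s := sixthRootHalf z
  have hPQ' := congrArg (eval (s ^ 4)) hPQ
  simp only [eval_sub, eval_mul, eval_C, eval_X] at hPQ'
  simp only [gaugeFun, gaugeDeriv, derivative_add, derivative_mul, derivative_sub, derivative_C,
    derivative_X, eval_add, eval_sub, eval_mul, eval_C, eval_X, zero_mul, one_mul,
    zero_add]
  field_simp
  linear_combination 16 * s ^ 8 * hPQ' + 36 * s ^ 8 * P.eval (s ^ 4) * hδ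

section Coefficients

variable {a c : ℝ} {A : ℕ → ℕ → ℝ}

lemma coeff_eq_zero_of_two_mul_lt (hA0k : ∀ k : ℕ, 1 ≤ k → A 0 k = 0)
    (hAtop : ∀ m : ℕ, 1 ≤ m → ∀ k : ℕ, 2 * m < k → A m k = 0) {m k : ℕ} (h : 2 * m < k) :
    A m k = 0 := by
  rcases Nat.eq_zero_or_pos m with rfl | hm
  · exact hA0k k (by omega)
  · exact hAtop m hm k h

lemma coeff_two_mul_succ (hA00 : A 0 0 = c)
    (hAlead : ∀ m : ℕ, 1 ≤ m → A m (2 * m) = (3 * a / 2) ^ m * c / Nat.factorial m) (m : ℕ) :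
    2 * ((m : ℝ) + 1) * A (m + 1) (2 * (m + 1)) = 3 * a * A m (2 * m) := by
  have hlead : ∀ m, A m (2 * m) = (3 * a / 2) ^ m * c / Nat.factorial m := by
    rintro (_ | m)
    · simp [hA00]
    · exact hAlead _ (by omega)
  rw [hlead, hlead, pow_succ, Nat.factorial_succ, Nat.cast_mul]
  field_simp
  push_cast
  ring

/-- At `k = 2m` this is the leading-coefficient formula; for `k > 2m` both sides vanish. -/
lemma three_mul_coeff_eq (hA00 : A 0 0 = c) (hA0k : ∀ k : ℕ, 1 ≤ k → A 0 k = 0)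
    (hAtop : ∀ m : ℕ, 1 ≤ m → ∀ k : ℕ, 2 * m < k → A m k = 0)
    (hAlead : ∀ m : ℕ, 1 ≤ m → A m (2 * m) = (3 * a / 2) ^ m * c / Nat.factorial m)
    (hArec : ∀ m : ℕ, 1 ≤ m → ∀ k : ℕ, 1 ≤ k → k ≤ 2 * m - 1 →
      A m k = (((k : ℝ) + 1) / 3) * A m (k + 1)
        + (if k < 2 then 0 else (3 * a / (k : ℝ)) * A (m - 1) (k - 2)))
    {m : ℕ} (hm : 1 ≤ m) {k : ℕ} (hk : 1 ≤ k) :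
    3 * k * A m k = k * (k + 1) * A m (k + 1) + if k < 2 then 0 else 9 * a * A (m - 1) (k - 2) := by
  have hvan : ∀ {m k : ℕ}, 2 * m < k → A m k = 0 := coeff_eq_zero_of_two_mul_lt hA0k hAtop
  rcases lt_trichotomy k (2 * m) with hlt | rfl | hgt
  · rw [hArec m hm k hk (by omega)]
    split_ifs <;> field_simp <;> ring
  · obtain ⟨m, rfl⟩ : ∃ m', m = m' + 1 := ⟨m - 1, by omega⟩
    rw [if_neg (by omega), hvan (m := m + 1) (k := 2 * (m + 1) + 1) (by omega),
      show 2 * (m + 1) - 2 = 2 * m by omega, Nat.add_sub_cancel]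
    push_cast
    linear_combination 3 * coeff_two_mul_succ hA00 hAlead m
  · rw [if_neg (by omega), hvan hgt, hvan (by omega), hvan (by omega)]
    ring

end Coefficients

def jordanPoly (A : ℕ → ℕ → ℝ) (δ : ℝ) (m : ℕ) : ℝ[X] :=
  ∑ k ∈ Finset.range (2 * m + 1), C (A m k * δ ^ k) * X ^ k

lemma coeff_jordanPoly {A : ℕ → ℕ → ℝ} {m : ℕ} (hA : ∀ k, 2 * m < k → A m k = 0) (δ : ℝ)
    (k : ℕ) : (jordanPoly A δ m).coeff k = A m k * δ ^ k := by
  simp only [jordanPoly, finsetSum_coeff, coeff_C_mul_X_pow, Finset.sum_ite_eq,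
    Finset.mem_range]
  split_ifs with hk
  · rfl
  · rw [hA k (by omega), zero_mul]

lemma jordanPoly_relation {a : ℝ} {A : ℕ → ℕ → ℝ} {δ : ℝ} (hδ : δ ^ 2 = 1) {m : ℕ}
    (hvan : ∀ m k, 2 * m < k → A m k = 0)
    (hrec : ∀ k, 1 ≤ k →
      3 * k * A m k = k * (k + 1) * A m (k + 1) + if k < 2 then 0 else 9 * a * A (m - 1) (k - 2)) :
    derivative (derivative (jordanPoly A δ m)) - C (3 * δ) * derivative (jordanPoly A δ m)
      = C (9 * (-δ * a)) * X * jordanPoly A δ (m - 1) := by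
  ext j
  rw [mul_assoc]
  simp only [coeff_sub, coeff_derivative, coeff_C_mul, coeff_jordanPoly (hvan m)]
  rcases j with _ | j
  · have h1 := hrec 1 le_rfl
    simp only [coeff_X_mul_zero]
    push_cast at h1 ⊢
    linear_combination (-δ ^ 2) * h1
  · have h := hrec (j + 2) (by omega)
    rw [if_neg (by omega), show j + 2 - 2 = j by omega] at h
    rw [coeff_X_mul, coeff_jordanPoly (hvan (m - 1))]
    push_cast at h ⊢
    linear_combination (-δ ^ (j + 3)) * h - 9 * a * A (m - 1) j * δ ^ (j + 1) * hδ

lemma Int.natAbs_sub_sign_self (n : ℤ) : (n - n.sign).natAbs = n.natAbs - 1 := by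
  rcases lt_trichotomy n 0 with h | rfl | h
  · rw [Int.sign_eq_neg_one_of_neg h]; omega
  · rfl
  · rw [Int.sign_eq_one_of_pos h]; omega

lemma Int.sign_sub_sign_self {n : ℤ} (h : n - n.sign ≠ 0) : (n - n.sign).sign = n.sign := by
  rcases lt_trichotomy n 0 with hn | rfl | hn
  · rw [Int.sign_eq_neg_one_of_neg hn] at h ⊢
    exact Int.sign_eq_neg_one_of_neg (by omega)
  · rfl
  · rw [Int.sign_eq_one_of_pos hn] at h ⊢
    exact Int.sign_eq_one_of_pos (by omega)

lemma Int.cast_sign_sq {n : ℤ} (hn : n ≠ 0) : ((n.sign : ℝ)) ^ 2 = 1 := by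
  rcases lt_trichotomy n 0 with h | rfl | h
  · simp [Int.sign_eq_neg_one_of_neg h]
  · exact absurd rfl hn
  · simp [Int.sign_eq_one_of_pos h]

end

theorem jordan_chain_algebraic_PIIID7_general (a c : ℝ)
    (A : ℕ → ℕ → ℝ)
    (hA00 : A 0 0 = c) (hA0k : ∀ k : ℕ, 1 ≤ k → A 0 k = 0)
    (hAtop : ∀ m : ℕ, 1 ≤ m → ∀ k : ℕ, 2 * m < k → A m k = 0)
    (hAlead : ∀ m : ℕ, 1 ≤ m → A m (2 * m) = (3 * a / 2) ^ m * c / Nat.factorial m)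
    (hArec : ∀ m : ℕ, 1 ≤ m → ∀ k : ℕ, 1 ≤ k → k ≤ 2 * m - 1 →
      A m k = (((k : ℝ) + 1) / 3) * A m (k + 1)
        + (if k < 2 then 0 else (3 * a / (k : ℝ)) * A (m - 1) (k - 2)))
    (ψ : ℤ → ℝ → ℝ)
    (hψ0 : ψ 0 = fun _ => 0)
    (hψ : ∀ n : ℤ, n ≠ 0 → ∀ z : ℝ, ψ n z =
      ((z / 2) ^ ((1 : ℝ) / 3)) ^ ((1 : ℝ) / 2)
        * Real.exp (-(3 / 2) * (n.sign : ℝ) * ((z / 2) ^ ((1 : ℝ) / 3)) ^ 2)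
        * ∑ k ∈ Finset.range (2 * n.natAbs - 1),
            A (n.natAbs - 1) k * ((n.sign : ℝ)) ^ k * ((z / 2) ^ ((1 : ℝ) / 3)) ^ (2 * k)) :
    ∀ n : ℤ, n ≠ 0 → ∀ z : ℝ, 0 < z →
      deriv (deriv (ψ n)) z
          + (5 - 36 * ((z / 2) ^ ((1 : ℝ) / 3)) ^ 4)
              / (144 * ((z / 2) ^ ((1 : ℝ) / 3)) ^ 6) * ψ n z
        = -(n.sign : ℝ) * a * ψ (n - n.sign) z := by
  intro n hn z hz
  have hform : ∀ k : ℤ, k ≠ 0 →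
      ψ k = jordanFun k.sign (jordanPoly A k.sign (k.natAbs - 1)) := by
    intro k hk
    funext x
    rw [hψ k hk x, jordanFun, jordanPoly, eval_finsetSum,
      show 2 * k.natAbs - 1 = 2 * (k.natAbs - 1) + 1 by have := Int.natAbs_pos.2 hk; omega]
    simp [pow_mul]
  set δ : ℝ := (n.sign : ℝ)
  set P := jordanPoly A δ (n.natAbs - 1)
  obtain ⟨Q, hPQ, hprev⟩ : ∃ Q, derivative (derivative P) - C (3 * δ) * derivative P
      = C (9 * (-δ * a)) * X * Q ∧ ψ (n - n.sign) = jordanFun δ Q := by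
    by_cases hpred : n - n.sign = 0
    · have hm : n.natAbs - 1 = 0 := by rw [← Int.natAbs_sub_sign_self, hpred]; rfl
      refine ⟨0, by simp [P, hm, jordanPoly], ?_⟩
      rw [hpred, hψ0]
      funext x
      simp [jordanFun]
    · refine ⟨_, jordanPoly_relation (Int.cast_sign_sq hn)
        (fun _ _ => coeff_eq_zero_of_two_mul_lt hA0k hAtop)
        (fun _ hk => three_mul_coeff_eq hA00 hA0k hAtop hAlead hArec ?_ hk), ?_⟩
      · have := Int.natAbs_sub_sign_self n
        have := Int.natAbs_pos.2 hpred
        omega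
      · rw [hform _ hpred, Int.sign_sub_sign_self hpred, Int.natAbs_sub_sign_self]
  rw [hform n hn, hprev]
  exact jordanFun_schrodinger (Int.cast_sign_sq hn) hPQ hz

/-- The Jordan chain of generalized eigenfunctions for the Schrödinger potential
`V_0(z) = (5 - 36ζ⁴)/(144ζ⁶)`, `ζ = (z/2)^{1/3}`, associated with the algebraic seed
solution of Painlevé III (D7): the functions
`ψ_n(z) = ζ^{1/2} e^{-(3/2)δζ²} ∑_{k=0}^{2|n|-2} A(|n|-1,k) δ^k ζ^{2k}` (`δ = sgn n`,
`ψ_0 = 0`) satisfy `ψ_n'' + V_0 ψ_n = -δa ψ_{n-δ}` for all `z > 0`. -/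
theorem jordan_chain_algebraic_PIIID7 (a c : ℝ) (ha : a ≠ 0) (hc : c ≠ 0)
    (A : ℕ → ℕ → ℝ)
    (hA00 : A 0 0 = c) (hA0k : ∀ k : ℕ, 1 ≤ k → A 0 k = 0)
    (hAm0 : ∀ m : ℕ, 1 ≤ m → A m 0 = 0)
    (hAtop : ∀ m : ℕ, 1 ≤ m → ∀ k : ℕ, 2 * m < k → A m k = 0)
    (hAlead : ∀ m : ℕ, 1 ≤ m → A m (2 * m) = (3 * a / 2) ^ m * c / Nat.factorial m)
    (hArec : ∀ m : ℕ, 1 ≤ m → ∀ k : ℕ, 1 ≤ k → k ≤ 2 * m - 1 →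
      A m k = (((k : ℝ) + 1) / 3) * A m (k + 1)
        + (if k < 2 then 0 else (3 * a / (k : ℝ)) * A (m - 1) (k - 2)))
    (ψ : ℤ → ℝ → ℝ)
    (hψ0 : ψ 0 = fun _ => 0)
    (hψ : ∀ n : ℤ, n ≠ 0 → ∀ z : ℝ, ψ n z =
      ((z / 2) ^ ((1 : ℝ) / 3)) ^ ((1 : ℝ) / 2)
        * Real.exp (-(3 / 2) * (n.sign : ℝ) * ((z / 2) ^ ((1 : ℝ) / 3)) ^ 2)
        * ∑ k ∈ Finset.range (2 * n.natAbs - 1),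
            A (n.natAbs - 1) k * ((n.sign : ℝ)) ^ k * ((z / 2) ^ ((1 : ℝ) / 3)) ^ (2 * k)) :
    ∀ n : ℤ, n ≠ 0 → ∀ z : ℝ, 0 < z →
      deriv (deriv (ψ n)) z
          + (5 - 36 * ((z / 2) ^ ((1 : ℝ) / 3)) ^ 4)
              / (144 * ((z / 2) ^ ((1 : ℝ) / 3)) ^ 6) * ψ n z
        = -(n.sign : ℝ) * a * ψ (n - n.sign) z :=
  jordan_chain_algebraic_PIIID7_general a c A hA00 hA0k hAtop hAlead hArec ψ hψ0 hψ
end
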